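/- arXiv:2201.01527 — 9 statements merged into one kernel-verified Lean document; each statement's English description precedes it below -/
import Mathlib

section
/- If A and B are comeagre subsets of (ℝ \ {0})ᵐ ⊆ ℝᵐ, then the coordinatewise product set A · B = {(a₁b₁, …, aₘbₘ) : a ∈ A, b ∈ B} contains every vector of ℝᵐ with all coordinates nonzero. -/
open Pointwise Filter

/-- If `A` and `B` are comeagre subsets of `(ℝ \ {0})ᵐ ⊆ ℝᵐ`, then the coordinatewise
product set `A · B` contains every vector of `ℝᵐ` with all coordinates nonzero. -/
theorem stmt_2 (m : ℕ) (A B : Set (Fin m → ℝ))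
    (hA : A ∈ residual (Fin m → ℝ)) (hB : B ∈ residual (Fin m → ℝ))
    (hA0 : A ⊆ {x : Fin m → ℝ | ∀ i, x i ≠ 0})
    (hB0 : B ⊆ {x : Fin m → ℝ | ∀ i, x i ≠ 0}) :
    {x : Fin m → ℝ | ∀ i, x i ≠ 0} ⊆ A * B := by
  intro x hx
  set U : Set (Fin m → ℝ) := {a | ∀ i, a i ≠ 0} with hUdef
  have hUopen : IsOpen U := by
    have : U = ⋂ i, (fun a : Fin m → ℝ => a i) ⁻¹' {0}ᶜ := by
      ext a; simp [hUdef]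
    rw [this]
    exact isOpen_iInter_of_finite fun i =>
      (isOpen_compl_singleton).preimage (continuous_apply i)
  have hUdense : Dense U := by
    rw [Metric.dense_iff]
    intro y r hr
    refine ⟨fun i => if y i = 0 then r / 2 else y i, ?_, ?_⟩
    · rw [Metric.mem_ball, dist_pi_lt_iff hr]
      intro i
      by_cases h : y i = 0 <;>
        simp [h, Real.dist_eq, abs_of_pos, hr, half_lt_self hr, hr.le,
          abs_of_nonneg (by positivity : (0:ℝ) ≤ r / 2)]
    · intro i
      by_cases h : y i = 0 <;> simp [h, hr.ne']
  -- the map a ↦ x / a (coordinatewise)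
  set g : (Fin m → ℝ) → (Fin m → ℝ) := fun a i => x i * (a i)⁻¹ with hgdef
  have hgU : ∀ a ∈ U, g a ∈ U := fun a ha i =>
    mul_ne_zero (hx i) (inv_ne_zero (ha i))
  have hgg : ∀ a ∈ U, g (g a) = a := by
    intro a ha
    funext i
    have hxi := hx i
    have hai := ha i
    simp only [hgdef]
    field_simp
  have hcont : ContinuousOn g U := by
    apply continuousOn_pi.2
    intro i
    exact continuousOn_const.mul (((continuous_apply i).continuousOn).inv₀ fun a ha => ha i)
  have hopen : ∀ t : Set (Fin m → ℝ), IsOpen t → IsOpen (g ⁻¹' t ∩ U) := by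
    intro t ht
    rw [Set.inter_comm]
    exact hcont.isOpen_inter_preimage hUopen ht
  have hdense : ∀ t : Set (Fin m → ℝ), IsOpen t → Dense t → Dense (g ⁻¹' t ∩ U) := by
    intro t hto htd
    rw [dense_iff_inter_open]
    intro V hV hVne
    have hWopen : IsOpen (g ⁻¹' V ∩ U) := hopen V hV
    have hWne : (g ⁻¹' V ∩ U).Nonempty := by
      obtain ⟨a, haV, haU⟩ := hUdense.inter_open_nonempty V hV hVne
      exact ⟨g a, by rw [Set.mem_preimage, hgg a haU]; exact haV, hgU a haU⟩
    obtain ⟨b, ⟨hbV, hbU⟩, hbt⟩ := htd.inter_open_nonempty _ hWopen hWne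
    refine ⟨g b, hbV, ?_, hgU b hbU⟩
    rw [Set.mem_preimage, hgg b hbU]
    exact hbt
  have hBpre : g ⁻¹' B ∩ U ∈ residual (Fin m → ℝ) := by
    rcases mem_residual_iff.1 hB with ⟨S, hSo, hSd, hSc, hSsub⟩
    rw [mem_residual_iff]
    refine ⟨insert U ((fun t => g ⁻¹' t ∩ U) '' S), ?_, ?_, ?_, ?_⟩
    · rintro t (rfl | ⟨s, hs, rfl⟩)
      · exact hUopen
      · exact hopen s (hSo s hs)
    · rintro t (rfl | ⟨s, hs, rfl⟩)
      · exact hUdense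
      · exact hdense s (hSo s hs) (hSd s hs)
    · exact (hSc.image _).insert U
    · intro a ha
      rw [Set.sInter_insert] at ha
      obtain ⟨haU, ha⟩ := ha
      refine ⟨hSsub fun s hs => ?_, haU⟩
      have := Set.mem_sInter.1 ha _ (Set.mem_image_of_mem _ hs)
      exact this.1
  have hC : A ∩ (g ⁻¹' B ∩ U) ∈ residual (Fin m → ℝ) := Filter.inter_mem hA hBpre
  obtain ⟨a, haA, hab, haU⟩ := (dense_of_mem_residual hC).nonempty
  refine ⟨a, haA, g a, hab, ?_⟩
  funext i
  have hai := haU i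
  show a i * (x i * (a i)⁻¹) = x i
  field_simp
end

section
/- Let C be the Cantor middle-thirds set. Then C − C = [−1, 1]. -/
open Pointwise

/-- The Cantor middle-thirds set: reals in `[0,1]` admitting a ternary expansion
using only digits `0` and `2`. -/
def cantorMiddleThirds : Set ℝ :=
  {x : ℝ | ∃ d : ℕ → ℕ, (∀ n, d n = 0 ∨ d n = 2) ∧ x = ∑' n : ℕ, (d n : ℝ) / 3 ^ (n + 1)}

/-- Balanced ternary digit of `w`. -/
noncomputable def bD (w : ℝ) : ℝ := if 1/6 < w then 1 else if w < -(1/6) then -1 else 0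

/-- Remainder sequence for the balanced ternary expansion of `w`. -/
noncomputable def bR (w : ℝ) : ℕ → ℝ
  | 0 => w
  | n+1 => 3 * bR w n - bD (bR w n)

lemma bD_cases (w : ℝ) : bD w = 1 ∨ bD w = 0 ∨ bD w = -1 := by
  unfold bD; split_ifs <;> simp

lemma bD_abs (w : ℝ) : |bD w| ≤ 1 := by
  rcases bD_cases w with h | h | h <;> rw [h] <;> norm_num

lemma bR_mem (w : ℝ) (hw : w ∈ Set.Icc (-(1/2) : ℝ) (1/2)) :
    ∀ n, bR w n ∈ Set.Icc (-(1/2) : ℝ) (1/2) := by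
  intro n
  induction n with
  | zero => exact hw
  | succ n ih =>
    obtain ⟨h1, h2⟩ := ih
    show 3 * bR w n - bD (bR w n) ∈ _
    unfold bD
    split_ifs with ha hb <;> constructor <;> simp at * <;> linarith

lemma bR_eq (w : ℝ) :
    ∀ n, w = (∑ k ∈ Finset.range n, bD (bR w k) / 3 ^ (k + 1)) + bR w n / 3 ^ n := by
  intro n
  induction n with
  | zero => simp [bR]
  | succ n ih =>
    rw [Finset.sum_range_succ]
    have : bR w (n + 1) = 3 * bR w n - bD (bR w n) := rfl
    rw [this]
    field_simp at ih ⊢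
    ring_nf at ih ⊢
    have hs : ∑ x ∈ Finset.range n, (3:ℝ)⁻¹ ^ x * bD (bR w x) * (1 / 3) =
        ∑ x ∈ Finset.range n, bD (bR w x) * (3:ℝ)⁻¹ ^ x * (1 / 3) :=
      Finset.sum_congr rfl fun x _ => by ring
    rw [hs]
    linear_combination (3:ℝ) * ih

lemma summable_aux (c : ℕ → ℝ) (h : ∀ n, |c n| ≤ 2) :
    Summable (fun n => c n / 3 ^ (n + 1)) := by
  apply Summable.of_norm_bounded (g := fun n => (2/3) * (1/3 : ℝ) ^ n)
  · exact (summable_geometric_of_lt_one (by norm_num) (by norm_num)).mul_left _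
  · intro n
    rw [Real.norm_eq_abs, abs_div, abs_pow]
    have h3 : |(3:ℝ)| = 3 := by norm_num
    rw [h3, pow_succ]
    rw [div_le_iff₀ (by positivity)]
    have := h n
    calc |c n| ≤ 2 := h n
      _ ≤ 2 / 3 * (1 / 3) ^ n * (3 ^ n * 3) := by
          rw [show (2:ℝ)/3 * (1/3)^n * (3^n*3) = 2 * ((1/3)^n * 3^n) by ring,
            ← mul_pow]
          norm_num

lemma tsum_two_thirds : ∑' n : ℕ, (2 : ℝ) / 3 ^ (n + 1) = 1 := by
  have : (fun n : ℕ => (2 : ℝ) / 3 ^ (n + 1)) = fun n => (2/3) * (1/3) ^ n := by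
    funext n; rw [pow_succ]; field_simp; rw [← mul_pow]; norm_num
  rw [this, tsum_mul_left, tsum_geometric_of_lt_one (by norm_num) (by norm_num)]
  norm_num

lemma cantor_mem_Icc {x : ℝ} (hx : x ∈ cantorMiddleThirds) : x ∈ Set.Icc (0:ℝ) 1 := by
  obtain ⟨d, hd, rfl⟩ := hx
  have habs : ∀ n, |(d n : ℝ)| ≤ 2 := by
    intro n; rcases hd n with h | h <;> rw [h] <;> norm_num
  have hsum := summable_aux (fun n => (d n : ℝ)) habs
  constructor
  · exact tsum_nonneg fun n => by positivity
  · rw [← tsum_two_thirds]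
    apply Summable.tsum_le_tsum _ hsum (summable_aux (fun _ => 2) (by norm_num))
    intro n
    apply div_le_div_of_nonneg_right ?_ (by positivity)
    rcases hd n with h | h <;> simp [h]

/-- The key balanced-ternary expansion: every `w ∈ [-1/2, 1/2]` is the sum of its
balanced ternary series. -/
lemma balanced_expansion (w : ℝ) (hw : w ∈ Set.Icc (-(1/2) : ℝ) (1/2)) :
    HasSum (fun n => bD (bR w n) / 3 ^ (n + 1)) w := by
  have hsum : Summable (fun n => bD (bR w n) / 3 ^ (n + 1)) :=
    summable_aux _ fun n => (bD_abs _).trans (by norm_num)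
  rw [hsum.hasSum_iff_tendsto_nat]
  have key : ∀ n, (∑ k ∈ Finset.range n, bD (bR w k) / 3 ^ (k + 1)) = w - bR w n / 3 ^ n := by
    intro n; have := bR_eq w n; linarith
  simp_rw [key]
  have h0 : Filter.Tendsto (fun n : ℕ => bR w n / 3 ^ n) Filter.atTop (nhds 0) := by
    have hgt : Filter.Tendsto (fun n : ℕ => (1/2) * (1/3 : ℝ) ^ n) Filter.atTop (nhds 0) := by
      simpa using (tendsto_pow_atTop_nhds_zero_of_lt_one (by norm_num : (0:ℝ) ≤ 1/3)
        (by norm_num)).const_mul (1/2 : ℝ)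
    refine squeeze_zero_norm (fun n => ?_) hgt
    rw [Real.norm_eq_abs, abs_div, abs_pow]
    have h3 : |(3:ℝ)| = 3 := by norm_num
    rw [h3, div_le_iff₀ (by positivity)]
    have hm := bR_mem w hw n
    have habs : |bR w n| ≤ 1/2 := abs_le.2 ⟨hm.1, hm.2⟩
    calc |bR w n| ≤ 1/2 := habs
      _ ≤ 1/2 * (1/3)^n * 3^n := by
          rw [mul_assoc, ← mul_pow]; norm_num
  have := Filter.Tendsto.sub (tendsto_const_nhds (x := w)) h0
  simpa using this

/-- For the Cantor middle-thirds set `C` one has `C − C = [−1,1]`. -/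
theorem stmt_7 : cantorMiddleThirds - cantorMiddleThirds = Set.Icc (-1 : ℝ) 1 := by
  ext z
  constructor
  · rintro ⟨x, hx, y, hy, rfl⟩
    have h1 := cantor_mem_Icc hx
    have h2 := cantor_mem_Icc hy
    have : x - y ∈ Set.Icc (-1 : ℝ) 1 := ⟨by linarith [h1.1, h2.2], by linarith [h1.2, h2.1]⟩
    exact this
  · rintro ⟨h1, h2⟩
    set w := z / 2 with hwdef
    have hw : w ∈ Set.Icc (-(1/2) : ℝ) (1/2) := ⟨by linarith, by linarith⟩
    set c : ℕ → ℝ := fun n => bD (bR w n) with hc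
    have hexp := balanced_expansion w hw
    set d : ℕ → ℕ := fun n => if c n = 1 then 2 else 0 with hd
    set e : ℕ → ℕ := fun n => if c n = -1 then 2 else 0 with he
    have hde : ∀ n, (d n : ℝ) - e n = 2 * c n := by
      intro n
      rcases bD_cases (bR w n) with h | h | h <;>
        simp [hd, he, hc, h] <;> norm_num
    have hdabs : ∀ n, |(d n : ℝ)| ≤ 2 := by
      intro n; simp only [hd]; split_ifs <;> norm_num
    have heabs : ∀ n, |(e n : ℝ)| ≤ 2 := by
      intro n; simp only [he]; split_ifs <;> norm_num
    have hds := summable_aux (fun n => (d n : ℝ)) hdabs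
    have hes := summable_aux (fun n => (e n : ℝ)) heabs
    refine ⟨∑' n, (d n : ℝ) / 3 ^ (n + 1), ⟨d, fun n => ?_, rfl⟩,
      ∑' n, (e n : ℝ) / 3 ^ (n + 1), ⟨e, fun n => ?_, rfl⟩, ?_⟩
    · simp only [hd]; split_ifs <;> simp
    · simp only [he]; split_ifs <;> simp
    · show (∑' n, (d n : ℝ) / 3 ^ (n + 1)) - (∑' n, (e n : ℝ) / 3 ^ (n + 1)) = z
      rw [← Summable.tsum_sub hds hes]
      have : (fun n => (d n : ℝ) / 3 ^ (n + 1) - (e n : ℝ) / 3 ^ (n + 1)) =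
          fun n => 2 * (c n / 3 ^ (n + 1)) := by
        funext n
        rw [div_sub_div_same, hde n]
        ring
      rw [this, tsum_mul_left, hexp.tsum_eq]
      simp [hwdef]
      ring
end

section
/- Let m ≥ 1, b ≥ 2 be integers and τ ∈ [0, ∞). The set of x ∈ [0,1]ᵐ such that for arbitrarily large N there exists p ∈ ℤᵐ with ‖bᴺ x − p‖_∞ ≤ (bᴺ)^{−τ} has Hausdorff dimension at most m/(τ+1). -/
open ENNReal NNReal MeasureTheory Filter

private lemma stmt9_geom (b m : ℕ) (hb : 2 ≤ b) (τ d : ℝ) (hτ : 0 ≤ τ) (hd0 : 0 < d)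
    (hd : (m : ℝ) < d * (τ + 1)) :
    Summable (fun N : ℕ =>
      ((b ^ N + 3 : ℕ) : ℝ) ^ m * (2 * ((b : ℝ) ^ N) ^ (-(τ + 1))) ^ d) := by
  have hB : (1 : ℝ) < b := by exact_mod_cast Nat.lt_of_lt_of_le one_lt_two hb
  have hB0 : (0 : ℝ) < b := by linarith
  set θ : ℝ := (b : ℝ) ^ ((m : ℝ) - d * (τ + 1)) with hθdef
  have hθ0 : 0 < θ := Real.rpow_pos_of_pos hB0 _
  have hθ1 : θ < 1 := Real.rpow_lt_one_of_one_lt_of_neg hB (by linarith)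
  refine Summable.of_nonneg_of_le (fun N => by positivity)
    (fun N => ?_) (((summable_geometric_of_lt_one hθ0.le hθ1)).mul_left ((4:ℝ) ^ m * 2 ^ d))
  have hbN : (0:ℝ) < (b:ℝ) ^ N := by positivity
  have h1 : ((b ^ N + 3 : ℕ) : ℝ) ^ m ≤ (4:ℝ) ^ m * ((b:ℝ) ^ N) ^ m := by
    rw [← mul_pow]
    refine pow_le_pow_left₀ (by positivity) ?_ m
    push_cast
    have : (1:ℝ) ≤ (b:ℝ) ^ N := one_le_pow₀ hB.le
    nlinarith
  have h2 : (2 * ((b : ℝ) ^ N) ^ (-(τ + 1))) ^ d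
      = 2 ^ d * ((b:ℝ) ^ N) ^ (-(τ+1) * d) := by
    rw [Real.mul_rpow (by norm_num) (Real.rpow_nonneg hbN.le _), ← Real.rpow_mul hbN.le]
  have e1 : ((b:ℝ)^N) ^ m = (b:ℝ) ^ ((N:ℝ) * m) := by
    rw [← Real.rpow_natCast (b:ℝ) N, ← Real.rpow_natCast ((b:ℝ) ^ (N:ℝ)) m,
      ← Real.rpow_mul hB0.le]
  have e2 : ((b:ℝ)^N) ^ (-(τ+1)*d) = (b:ℝ) ^ ((N:ℝ) * (-(τ+1)*d)) := by
    rw [← Real.rpow_natCast (b:ℝ) N, ← Real.rpow_mul hB0.le]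
  have e3 : θ ^ N = (b:ℝ) ^ (((m:ℝ) - d*(τ+1)) * N) := by
    rw [hθdef, ← Real.rpow_natCast ((b:ℝ) ^ ((m : ℝ) - d * (τ + 1))) N,
      ← Real.rpow_mul hB0.le]
  calc ((b ^ N + 3 : ℕ) : ℝ) ^ m * (2 * ((b : ℝ) ^ N) ^ (-(τ + 1))) ^ d
      ≤ (4:ℝ) ^ m * ((b:ℝ) ^ N) ^ m * (2 ^ d * ((b:ℝ) ^ N) ^ (-(τ+1) * d)) := by
        rw [h2]
        exact mul_le_mul_of_nonneg_right h1 (by positivity)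
    _ = (4:ℝ) ^ m * 2 ^ d * ((b:ℝ) ^ ((N:ℝ)*m) * (b:ℝ) ^ ((N:ℝ)*(-(τ+1)*d))) := by
        rw [e1, e2]; ring
    _ = (4:ℝ) ^ m * 2 ^ d * (b:ℝ) ^ ((N:ℝ)*m + (N:ℝ)*(-(τ+1)*d)) := by
        rw [← Real.rpow_add hB0]
    _ = (4:ℝ) ^ m * 2 ^ d * θ ^ N := by
        rw [e3]
        congr 1
        ring

private lemma stmt9_zero (m b : ℕ) (hm : 1 ≤ m) (hb : 2 ≤ b) (τ d : ℝ) (hτ : 0 ≤ τ)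
    (hd : (m : ℝ) < d * (τ + 1)) :
    μH[d] {x : Fin m → ℝ |
        (∀ i, x i ∈ Set.Icc (0 : ℝ) 1) ∧
        ∀ N₀ : ℕ, ∃ N : ℕ, N₀ ≤ N ∧ ∃ p : Fin m → ℤ,
          ‖(fun i => (b : ℝ) ^ N * x i - (p i : ℝ))‖ ≤ ((b : ℝ) ^ N) ^ (-τ)} = 0 := by
  have hB : (1 : ℝ) < b := by exact_mod_cast Nat.lt_of_lt_of_le one_lt_two hb
  have hB0 : (0 : ℝ) < b := by linarith
  have hτ1 : (0:ℝ) < τ + 1 := by linarith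
  have hd0 : 0 < d := by
    have hm' : (1:ℝ) ≤ m := by exact_mod_cast hm
    rcases le_or_gt d 0 with h | h
    · nlinarith
    · exact h
  have hbN : ∀ N : ℕ, (0:ℝ) < (b:ℝ) ^ N := fun N => by positivity
  have hbN1 : ∀ N : ℕ, (1:ℝ) ≤ (b:ℝ) ^ N := fun N => one_le_pow₀ hB.le
  -- radius at level N
  set ρ : ℕ → ℝ := fun N => ((b:ℝ) ^ N) ^ (-(τ+1)) with hρdef
  have hρ0 : ∀ N, 0 < ρ N := fun N => Real.rpow_pos_of_pos (hbN N) _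
  have hρanti : ∀ {N M : ℕ}, N ≤ M → ρ M ≤ ρ N := by
    intro N M h
    exact Real.rpow_le_rpow_of_nonpos (hbN N) (pow_le_pow_right₀ hB.le h) (by linarith)
  -- the covering sets
  set t : ℕ → ℕ × (Fin m → ℤ) → Set (Fin m → ℝ) := fun N₀ i =>
    if i.2 ∈ Finset.Icc (fun _ => (-1:ℤ)) (fun _ => (b:ℤ) ^ (N₀ + i.1) + 1) then
      Metric.closedBall (fun j => ((i.2 j : ℝ) / (b:ℝ) ^ (N₀ + i.1))) (ρ (N₀ + i.1))
    else ∅ with htdef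
  set r : ℕ → ℝ≥0∞ := fun N₀ => ENNReal.ofReal (2 * ρ N₀) with hrdef
  have hr : Tendsto r atTop (nhds 0) := by
    have hc0 : 0 ≤ (b:ℝ) ^ (-(τ+1)) := Real.rpow_nonneg hB0.le _
    have hc1 : (b:ℝ) ^ (-(τ+1)) < 1 := Real.rpow_lt_one_of_one_lt_of_neg hB (by linarith)
    have hρc : ∀ N, ρ N = ((b:ℝ) ^ (-(τ+1))) ^ N := by
      intro N
      rw [hρdef]
      simp only
      rw [← Real.rpow_natCast (b:ℝ) N, ← Real.rpow_natCast ((b:ℝ) ^ (-(τ+1))) N,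
        ← Real.rpow_mul hB0.le, ← Real.rpow_mul hB0.le, mul_comm]
    have : Tendsto (fun N₀ : ℕ => 2 * ρ N₀) atTop (nhds 0) := by
      simp only [hρc]
      simpa using (tendsto_pow_atTop_nhds_zero_of_lt_one hc0 hc1).const_mul 2
    simpa [hrdef] using (ENNReal.tendsto_ofReal this :)
  have ht : ∀ N₀ : ℕ, ∀ i : ℕ × (Fin m → ℤ), Metric.ediam (t N₀ i) ≤ r N₀ := by
    intro N₀ i
    rw [htdef]
    simp only
    split
    · rw [← Metric.emetric_closedBall (hρ0 (N₀ + i.1)).le]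
      refine le_trans (Metric.ediam_closedEBall_le) ?_
      rw [hrdef]
      simp only
      rw [show (2:ℝ≥0∞) = ENNReal.ofReal 2 by norm_num, ← ENNReal.ofReal_mul (by norm_num)]
      exact ENNReal.ofReal_le_ofReal (by
        have := hρanti (Nat.le_add_right N₀ i.1)
        linarith)
    · simp
  have hst : ∀ N₀ : ℕ, {x : Fin m → ℝ |
        (∀ i, x i ∈ Set.Icc (0 : ℝ) 1) ∧
        ∀ M₀ : ℕ, ∃ N : ℕ, M₀ ≤ N ∧ ∃ p : Fin m → ℤ,
          ‖(fun i => (b : ℝ) ^ N * x i - (p i : ℝ))‖ ≤ ((b : ℝ) ^ N) ^ (-τ)}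
        ⊆ ⋃ i, t N₀ i := by
    intro N₀ x hx
    obtain ⟨hx01, hx2⟩ := hx
    obtain ⟨N, hN, p, hp⟩ := hx2 N₀
    have hcoord : ∀ j, |(b:ℝ) ^ N * x j - p j| ≤ ((b:ℝ) ^ N) ^ (-τ) := by
      intro j
      calc |(b:ℝ) ^ N * x j - p j|
          = ‖(fun i => (b : ℝ) ^ N * x i - (p i : ℝ)) j‖ := by rw [Real.norm_eq_abs]
        _ ≤ ‖(fun i => (b : ℝ) ^ N * x i - (p i : ℝ))‖ := norm_le_pi_norm (fun i => (b : ℝ) ^ N * x i - (p i : ℝ)) j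
        _ ≤ _ := hp
    have hτpow1 : ((b:ℝ) ^ N) ^ (-τ) ≤ 1 :=
      Real.rpow_le_one_of_one_le_of_nonpos (hbN1 N) (by linarith)
    refine Set.mem_iUnion.2 ⟨(N - N₀, p), ?_⟩
    rw [htdef]
    simp only [Nat.add_sub_cancel' hN]
    rw [if_pos]
    · rw [Metric.mem_closedBall]
      rw [dist_pi_le_iff (hρ0 N).le]
      intro j
      have : ρ N = ((b:ℝ) ^ N) ^ (-τ) / (b:ℝ) ^ N := by
        rw [hρdef]
        simp only
        rw [show -(τ+1) = -τ + (-1) by ring, Real.rpow_add (hbN N), Real.rpow_neg_one]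
        ring
      have heq : x j - (p j : ℝ) / (b:ℝ) ^ N = ((b:ℝ) ^ N * x j - p j) / (b:ℝ) ^ N := by
        field_simp
      rw [Real.dist_eq, heq, this, abs_div, abs_of_pos (hbN N)]
      gcongr
      exact hcoord j
    · rw [Finset.mem_Icc]
      have habs : ∀ j, |(b:ℝ) ^ N * x j - p j| ≤ 1 := fun j => le_trans (hcoord j) hτpow1
      refine ⟨fun j => ?_, fun j => ?_⟩
      · have h1 := (abs_le.1 (habs j)).2
        have h3 := (hx01 j).1
        have : (-1:ℝ) ≤ (p j : ℝ) := by nlinarith [mul_nonneg (hbN N).le h3]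
        exact_mod_cast this
      · have h2 := (abs_le.1 (habs j)).1
        have h4 := (hx01 j).2
        have h5 : (p j : ℝ) ≤ (b:ℝ) ^ N + 1 := by nlinarith [mul_nonneg (hbN N).le (sub_nonneg.2 h4)]
        have : (p j : ℝ) ≤ (((b:ℤ)^N + 1 : ℤ) : ℝ) := by push_cast; linarith
        exact_mod_cast this
  -- the series
  set A : ℕ → ℝ := fun N => ((b ^ N + 3 : ℕ) : ℝ) ^ m * (2 * ρ N) ^ d with hAdef
  have hA0 : ∀ N, 0 ≤ A N := fun N => by positivity
  have hAsum : Summable A := stmt9_geom b m hb τ d hτ hd0 hd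
  set a : ℕ → ℝ≥0∞ := fun N => ENNReal.ofReal (A N) with hadef
  have hatot : ∑' N, a N ≠ ∞ := by
    rw [hadef, ← ENNReal.ofReal_tsum_of_nonneg hA0 hAsum]
    exact ENNReal.ofReal_ne_top
  have hkey : ∀ N₀, (∑' i : ℕ × (Fin m → ℤ), Metric.ediam (t N₀ i) ^ d)
      ≤ ∑' k, a (k + N₀) := by
    intro N₀
    rw [ENNReal.tsum_prod']
    refine le_trans (ENNReal.tsum_le_tsum fun k => ?_)
      (le_of_eq (tsum_congr fun k => by rw [add_comm]))
    show (∑' p : Fin m → ℤ, Metric.ediam (t N₀ (k, p)) ^ d) ≤ a (N₀ + k)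
    set F : Finset (Fin m → ℤ) :=
      Finset.Icc (fun _ => (-1:ℤ)) (fun _ => (b:ℤ) ^ (N₀ + k) + 1) with hFdef
    have hsupp : ∀ p ∉ F, Metric.ediam (t N₀ (k, p)) ^ d = 0 := by
      intro p hp
      rw [htdef]
      simp only [hFdef] at hp
      simp only [if_neg hp]
      rw [Metric.ediam_empty, ENNReal.zero_rpow_of_pos hd0]
    rw [tsum_eq_sum hsupp]
    have hterm : ∀ p ∈ F, Metric.ediam (t N₀ (k, p)) ^ d
        ≤ ENNReal.ofReal ((2 * ρ (N₀ + k)) ^ d) := by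
      intro p hp
      rw [htdef]
      simp only [hFdef] at hp
      simp only [if_pos hp]
      rw [← ENNReal.ofReal_rpow_of_pos (by positivity)]
      refine ENNReal.rpow_le_rpow ?_ hd0.le
      rw [← Metric.emetric_closedBall (hρ0 (N₀ + k)).le]
      refine le_trans Metric.ediam_closedEBall_le ?_
      rw [show (2:ℝ≥0∞) = ENNReal.ofReal 2 by norm_num, ← ENNReal.ofReal_mul (by norm_num)]
    have hcard : F.card = (b ^ (N₀ + k) + 3) ^ m := by
      rw [hFdef, Pi.card_Icc]
      have h6 : ((b:ℤ) ^ (N₀ + k) + 1 + 1 - (-1)) = ((b ^ (N₀ + k) + 3 : ℕ) : ℤ) := by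
        push_cast; ring
      simp only [Int.card_Icc, h6, Int.toNat_natCast]
      simp [Finset.prod_const]
    calc (∑ p ∈ F, Metric.ediam (t N₀ (k, p)) ^ d)
        ≤ ∑ p ∈ F, ENNReal.ofReal ((2 * ρ (N₀ + k)) ^ d) := Finset.sum_le_sum hterm
      _ = (F.card : ℝ≥0∞) * ENNReal.ofReal ((2 * ρ (N₀ + k)) ^ d) := by
          rw [Finset.sum_const, nsmul_eq_mul]
      _ = a (N₀ + k) := by
          rw [hcard, hadef, hAdef]
          simp only
          rw [← ENNReal.ofReal_natCast, ← ENNReal.ofReal_mul (by positivity)]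
          congr 1
          push_cast
          ring
  have hμ := Measure.hausdorffMeasure_le_liminf_tsum d _ r hr (t)
    (Eventually.of_forall ht) (Eventually.of_forall hst)
  refine le_antisymm (le_trans hμ ?_) zero_le
  have hlim : Tendsto (fun N₀ => ∑' k, a (k + N₀)) atTop (nhds 0) :=
    ENNReal.tendsto_sum_nat_add a hatot
  calc liminf (fun N₀ => ∑' i : ℕ × (Fin m → ℤ), Metric.ediam (t N₀ i) ^ d) atTop
      ≤ liminf (fun N₀ => ∑' k, a (k + N₀)) atTop :=
        liminf_le_liminf (Eventually.of_forall hkey)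
    _ = 0 := hlim.liminf_eq

/-- For integers `m ≥ 1`, `b ≥ 2`, and `τ ∈ [0,∞)`, the set of `x ∈ [0,1]ᵐ` such that
for arbitrarily large `N` there is `p ∈ ℤᵐ` with `‖bᴺ x − p‖_∞ ≤ (bᴺ)^{−τ}` has
Hausdorff dimension at most `m/(τ+1)`. -/
theorem stmt_9 (m b : ℕ) (hm : 1 ≤ m) (hb : 2 ≤ b) (τ : ℝ) (hτ : 0 ≤ τ) :
    dimH {x : Fin m → ℝ |
        (∀ i, x i ∈ Set.Icc (0 : ℝ) 1) ∧
        ∀ N₀ : ℕ, ∃ N : ℕ, N₀ ≤ N ∧ ∃ p : Fin m → ℤ,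
          ‖(fun i => (b : ℝ) ^ N * x i - (p i : ℝ))‖ ≤ ((b : ℝ) ^ N) ^ (-τ)} ≤
      ENNReal.ofReal ((m : ℝ) / (τ + 1)) := by
  have hτ1 : (0:ℝ) < τ + 1 := by linarith
  apply ENNReal.le_of_forall_pos_le_add
  intro ε hε _
  set q : ℝ≥0 := ((m:ℝ)/(τ+1)).toNNReal with hq
  have hqc : ((q + ε : ℝ≥0) : ℝ) = (m:ℝ)/(τ+1) + (ε:ℝ) := by
    push_cast [hq]
    rw [Real.coe_toNNReal _ (by positivity)]
  have hd : (m : ℝ) < ((q + ε : ℝ≥0) : ℝ) * (τ + 1) := by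
    rw [hqc]
    have h1 : (m:ℝ)/(τ+1) * (τ+1) = m := div_mul_cancel₀ _ hτ1.ne'
    have hε' : (0:ℝ) < ε := hε
    nlinarith
  have hzero := stmt9_zero m b hm hb τ _ hτ hd
  have hle := dimH_le_of_hausdorffMeasure_ne_top (d := q + ε)
    (by rw [hzero]; exact ENNReal.zero_ne_top)
  refine le_trans hle ?_
  rw [ENNReal.coe_add]
  rfl
end

section
/- Let m ≥ 1 and b ≥ 2. The set of x ∈ ℝᵐ with ω_m^{(b)}(x) = ∞, i.e., such that for every N > 0 there exist arbitrarily large t ∈ ℕ and p ∈ ℤᵐ with ‖b^t x − p‖_∞ ≤ (b^t)^{−N}, is a comeagre subset of ℝᵐ and has Hausdorff dimension zero. -/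
open Filter
open scoped NNReal ENNReal

set_option maxHeartbeats 1000000 in
open Set Metric MeasureTheory in
private lemma liou_measure_zero (m b n R : ℕ) (hb : 2 ≤ b) (d : ℝ≥0) (hd : 0 < d)
    (hnd : (m:ℝ) < ((n:ℝ)+1) * (d:ℝ)) :
    μH[(d:ℝ)] ({x : Fin m → ℝ | ∀ N : ℝ, 0 < N → ∀ t₀ : ℕ, ∃ t : ℕ, t₀ ≤ t ∧ ∃ p : Fin m → ℤ,
        ‖(fun i => (b : ℝ) ^ t * x i - (p i : ℝ))‖ ≤ ((b : ℝ) ^ t) ^ (-N)}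
      ∩ Metric.closedBall 0 (R:ℝ)) = 0 := by
  have hb1 : (1:ℝ) < b := by exact_mod_cast (by omega : 1 < b)
  have hb0 : (0:ℝ) < b := lt_trans one_pos hb1
  have hbt1 : ∀ t : ℕ, (1:ℝ) ≤ (b:ℝ)^t := fun t => one_le_pow₀ hb1.le
  set β : ℝ := (b:ℝ)⁻¹ with hβ
  have hβ0 : 0 < β := by positivity
  have hβ1 : β < 1 := by rw [hβ]; exact inv_lt_one_of_one_lt₀ hb1
  set rr : ℕ → ℝ := fun t => β ^ (t*(n+1)) with hrrdef
  have hrr0 : ∀ t, 0 < rr t := fun t => pow_pos hβ0 _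
  have hrrle : ∀ t, rr t ≤ 1 := fun t => pow_le_one₀ hβ0.le hβ1.le
  have hrmono : ∀ {s t : ℕ}, s ≤ t → rr t ≤ rr s := fun {s t} h =>
    pow_le_pow_of_le_one hβ0.le hβ1.le (Nat.mul_le_mul_right _ h)
  have hrpow : ∀ t : ℕ, ((b:ℝ)^t) ^ (-((n:ℝ)+1)) = rr t := by
    intro t
    rw [show (-((n:ℝ)+1)) = ((-(n+1:ℕ) : ℤ) : ℝ) by push_cast; ring, Real.rpow_intCast]
    rw [zpow_neg, zpow_natCast, ← pow_mul']
    simp only [hrrdef, hβ, inv_pow]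
    ring_nf
  set M : ℕ → ℤ := fun t => ((b^t * R + 1 : ℕ) : ℤ) with hM
  set Pbox : ℕ → Finset (Fin m → ℤ) := fun t => Finset.Icc (fun _ => -(M t)) (fun _ => M t)
    with hPbox
  set cube : ℕ → (Fin m → ℤ) → Set (Fin m → ℝ) :=
    fun t p => Metric.closedBall (fun i => (p i : ℝ) * β^t) (rr t) with hcube
  set S : Set (Fin m → ℝ) := {x : Fin m → ℝ | ∀ N : ℝ, 0 < N → ∀ t₀ : ℕ, ∃ t : ℕ, t₀ ≤ t ∧
      ∃ p : Fin m → ℤ, ‖(fun i => (b : ℝ) ^ t * x i - (p i : ℝ))‖ ≤ ((b : ℝ) ^ t) ^ (-N)}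
    with hSdef
  have hbβ : ∀ t : ℕ, (b:ℝ)^t * β^t = 1 := by
    intro t
    rw [← mul_pow, hβ, mul_inv_cancel₀ hb0.ne', one_pow]
  -- covering
  have hcov : ∀ t₀ : ℕ, S ∩ Metric.closedBall 0 (R:ℝ) ⊆
      ⋃ i : (Σ s : ℕ, ↥(Pbox (t₀+s))), cube (t₀+i.1) i.2.1 := by
    rintro t₀ x ⟨hxS, hxK⟩
    obtain ⟨t, ht, p, hp⟩ := hxS ((n:ℝ)+1) (by positivity) t₀
    rw [hrpow t] at hp
    have hxi : ∀ i, |x i| ≤ (R:ℝ) := by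
      intro i
      have h1 := dist_le_pi_dist x 0 i
      have h2 : dist x 0 ≤ (R:ℝ) := mem_closedBall.1 hxK
      simpa [Real.dist_eq] using h1.trans h2
    have hcoord : ∀ i, |(b:ℝ)^t * x i - p i| ≤ rr t := by
      intro i
      have h1 := norm_le_pi_norm (fun i => (b:ℝ)^t * x i - (p i:ℝ)) i
      simpa [Real.norm_eq_abs] using h1.trans hp
    have hpmem : p ∈ Pbox t := by
      simp only [hPbox, Finset.mem_Icc, Pi.le_def]
      have habs : ∀ i, |p i| ≤ M t := by
        intro i
        have hr : |(p i : ℝ)| ≤ (M t : ℝ) := by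
          have h1 := hcoord i
          have h2 : |(p i:ℝ)| ≤ |(b:ℝ)^t * x i - p i| + |(b:ℝ)^t * x i| := by
            have := abs_sub_abs_le_abs_sub ((b:ℝ)^t * x i - p i) ((b:ℝ)^t * x i)
            have h3 := abs_sub ((b:ℝ)^t * x i) (p i : ℝ)
            calc |(p i:ℝ)| = |(b:ℝ)^t * x i - ((b:ℝ)^t * x i - p i)| := by ring_nf
              _ ≤ |(b:ℝ)^t * x i| + |(b:ℝ)^t * x i - p i| := abs_sub _ _
              _ = |(b:ℝ)^t * x i - p i| + |(b:ℝ)^t * x i| := by ring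
          have h4 : |(b:ℝ)^t * x i| ≤ (b:ℝ)^t * R := by
            rw [abs_mul, abs_of_pos (by positivity : (0:ℝ) < (b:ℝ)^t)]
            exact mul_le_mul_of_nonneg_left (hxi i) (by positivity)
          have h5 := hrrle t
          have : (M t : ℝ) = (b:ℝ)^t * R + 1 := by rw [hM]; push_cast; ring
          rw [this]
          linarith
        have : |(p i : ℝ)| = ((|p i| : ℤ) : ℝ) := by push_cast; ring
        rw [this] at hr
        exact_mod_cast hr
      exact ⟨fun i => neg_le_of_abs_le (habs i), fun i => le_of_abs_le (habs i)⟩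
    have htt : t₀ + (t - t₀) = t := Nat.add_sub_cancel' ht
    refine Set.mem_iUnion.2 ⟨⟨t - t₀, ⟨p, htt.symm ▸ hpmem⟩⟩, ?_⟩
    show x ∈ cube (t₀ + (t - t₀)) p
    rw [htt, hcube]
    rw [mem_closedBall, dist_pi_le_iff (hrr0 t).le]
    intro i
    rw [Real.dist_eq]
    have heq : x i - p i * β^t = ((b:ℝ)^t * x i - p i) * β^t := by
      linear_combination (-(x i)) * hbβ t
    calc |x i - p i * β^t| = |(b:ℝ)^t * x i - p i| * β^t := by
          rw [heq, abs_mul, abs_of_pos (pow_pos hβ0 t)]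
      _ ≤ rr t * 1 := by
          refine mul_le_mul (hcoord i) (pow_le_one₀ hβ0.le hβ1.le) (by positivity) (hrr0 t).le
      _ = rr t := mul_one _
  -- diameter bound
  have hdiam : ∀ t p, EMetric.diam (cube t p) ≤ ENNReal.ofReal (2 * rr t) := by
    intro t p
    refine EMetric.diam_le fun x hx y hy => ?_
    rw [edist_dist]
    refine ENNReal.ofReal_le_ofReal ?_
    calc dist x y ≤ dist x (fun i => (p i : ℝ) * β^t) + dist (fun i => (p i : ℝ) * β^t) y :=
          dist_triangle _ _ _
      _ ≤ rr t + rr t := add_le_add (mem_closedBall.1 hx)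
          (by rw [dist_comm]; exact mem_closedBall.1 hy)
      _ = 2 * rr t := by ring
  -- cardinality bound
  have hcard : ∀ t, ((Pbox t).card : ℝ) ≤ (3*(R:ℝ)+3)^m * ((b:ℝ)^t)^m := by
    intro t
    have h1 : (Pbox t).card = (2 * (b^t * R + 1) + 1)^m := by
      have h2 : ((b^t * R + 1 : ℕ) : ℤ) + 1 - -((b^t * R + 1 : ℕ) : ℤ)
          = ((2 * (b^t * R + 1) + 1 : ℕ) : ℤ) := by push_cast; ring
      simp only [hPbox, Pi.card_Icc, Int.card_Icc, hM, h2, Int.toNat_natCast]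
      rw [Finset.prod_const, Finset.card_univ, Fintype.card_fin]
    rw [h1]
    have h3 : ((2 * (b^t * R + 1) + 1 : ℕ) : ℝ) ≤ (3*(R:ℝ)+3) * (b:ℝ)^t := by
      push_cast
      nlinarith [hbt1 t, (by positivity : (0:ℝ) ≤ (R:ℝ))]
    calc (((2 * (b^t * R + 1) + 1)^m : ℕ) : ℝ) = ((2 * (b^t * R + 1) + 1 : ℕ) : ℝ)^m := by
          push_cast; ring
      _ ≤ ((3*(R:ℝ)+3) * (b:ℝ)^t)^m := by
          refine pow_le_pow_left₀ (by positivity) h3 m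
      _ = (3*(R:ℝ)+3)^m * ((b:ℝ)^t)^m := mul_pow _ _ _
  -- geometric data
  set q : ℝ := (b:ℝ) ^ ((m:ℝ) - ((n:ℝ)+1)*(d:ℝ)) with hq
  have hq0 : 0 < q := Real.rpow_pos_of_pos hb0 _
  have hq1 : q < 1 := Real.rpow_lt_one_of_one_lt_of_neg hb1 (by linarith)
  set C : ℝ := (3*(R:ℝ)+3)^m * 2^(d:ℝ) with hC
  have hC0 : 0 ≤ C := by positivity
  have hkey : ∀ t : ℕ, ((b:ℝ)^t)^m * (rr t)^(d:ℝ) = q^t := by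
    intro t
    simp only [hrrdef, hβ, hq]
    rw [← Real.rpow_natCast ((b:ℝ)^((m:ℝ) - ((n:ℝ)+1)*(d:ℝ))) t, ← Real.rpow_natCast ((b:ℝ)^t) m,
      ← Real.rpow_natCast (b:ℝ) t, ← Real.rpow_natCast ((b:ℝ)⁻¹) (t*(n+1)),
      ← Real.rpow_neg_one (b:ℝ)]
    rw [← Real.rpow_mul hb0.le, ← Real.rpow_mul (by positivity), ← Real.rpow_mul hb0.le,
      ← Real.rpow_mul hb0.le, ← Real.rpow_add hb0]
    congr 1
    push_cast
    ring
  have hterm : ∀ t : ℕ, ((Pbox t).card : ℝ) * (2 * rr t)^(d:ℝ) ≤ C * q^t := by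
    intro t
    have h1 : (2 * rr t)^(d:ℝ) = 2^(d:ℝ) * (rr t)^(d:ℝ) :=
      Real.mul_rpow (by norm_num) (hrr0 t).le
    calc ((Pbox t).card : ℝ) * (2 * rr t)^(d:ℝ)
        = ((Pbox t).card : ℝ) * (2^(d:ℝ) * (rr t)^(d:ℝ)) := by rw [h1]
      _ ≤ ((3*(R:ℝ)+3)^m * ((b:ℝ)^t)^m) * (2^(d:ℝ) * (rr t)^(d:ℝ)) :=
          mul_le_mul_of_nonneg_right (hcard t) (by positivity)
      _ = ((3*(R:ℝ)+3)^m * 2^(d:ℝ)) * (((b:ℝ)^t)^m * (rr t)^(d:ℝ)) := by ring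
      _ = C * q^t := by rw [hkey t, hC]
  -- tsum bound
  have hsumgeo : Summable (fun s : ℕ => q ^ s) := summable_geometric_of_lt_one hq0.le hq1
  have key : ∀ t₀ : ℕ,
      (∑' i : (Σ s : ℕ, ↥(Pbox (t₀+s))), EMetric.diam (cube (t₀+i.1) i.2.1) ^ (d:ℝ))
        ≤ ENNReal.ofReal (C * (1-q)⁻¹ * q^t₀) := by
    intro t₀
    have h1 : ∀ s : ℕ, (∑' p : ↥(Pbox (t₀+s)), EMetric.diam (cube (t₀+s) p.1) ^ (d:ℝ))
        ≤ ENNReal.ofReal (C * q^(t₀+s)) := by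
      intro s
      rw [tsum_fintype]
      calc (∑ p : ↥(Pbox (t₀+s)), EMetric.diam (cube (t₀+s) p.1) ^ (d:ℝ))
          ≤ ∑ _p : ↥(Pbox (t₀+s)), ENNReal.ofReal ((2*rr (t₀+s))^(d:ℝ)) := by
            refine Finset.sum_le_sum fun p _ => ?_
            rw [← ENNReal.ofReal_rpow_of_pos (by positivity)]
            exact ENNReal.rpow_le_rpow (hdiam _ _) d.2
        _ = ((Pbox (t₀+s)).card : ℝ≥0∞) * ENNReal.ofReal ((2*rr (t₀+s))^(d:ℝ)) := by
            rw [Finset.sum_const, Finset.card_univ, Fintype.card_coe, nsmul_eq_mul]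
        _ = ENNReal.ofReal (((Pbox (t₀+s)).card : ℝ) * (2*rr (t₀+s))^(d:ℝ)) := by
            rw [ENNReal.ofReal_mul (by positivity), ENNReal.ofReal_natCast]
        _ ≤ ENNReal.ofReal (C * q^(t₀+s)) := ENNReal.ofReal_le_ofReal (hterm _)
    calc (∑' i : (Σ s : ℕ, ↥(Pbox (t₀+s))), EMetric.diam (cube (t₀+i.1) i.2.1) ^ (d:ℝ))
        = ∑' (s : ℕ) (p : ↥(Pbox (t₀+s))), EMetric.diam (cube (t₀+s) p.1) ^ (d:ℝ) :=
          ENNReal.tsum_sigma' _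
      _ ≤ ∑' s : ℕ, ENNReal.ofReal (C * q^(t₀+s)) := ENNReal.tsum_le_tsum h1
      _ = ENNReal.ofReal (∑' s : ℕ, C * q^(t₀+s)) := by
          refine (ENNReal.ofReal_tsum_of_nonneg (fun s => by positivity) ?_).symm
          have : (fun s : ℕ => C * q^(t₀+s)) = fun s : ℕ => (C * q^t₀) * q^s := by
            funext s; rw [pow_add]; ring
          rw [this]
          exact hsumgeo.mul_left _
      _ = ENNReal.ofReal (C * (1-q)⁻¹ * q^t₀) := by
          congr 1
          have : (fun s : ℕ => C * q^(t₀+s)) = fun s : ℕ => (C * q^t₀) * q^s := by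
            funext s; rw [pow_add]; ring
          rw [this, tsum_mul_left, tsum_geometric_of_lt_one hq0.le hq1]
          ring
  -- apply the Hausdorff measure covering lemma
  have htend : Tendsto (fun t₀ : ℕ => ENNReal.ofReal (2 * rr t₀)) atTop (nhds 0) := by
    have h1 : Tendsto (fun t₀ : ℕ => 2 * rr t₀) atTop (nhds 0) := by
      have h2 : (fun t₀ : ℕ => rr t₀) = fun t₀ : ℕ => (β^(n+1))^t₀ := by
        funext t₀; simp only [hrrdef]; rw [pow_mul']
      have h3 : Tendsto (fun t₀ : ℕ => rr t₀) atTop (nhds 0) := by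
        rw [h2]
        exact tendsto_pow_atTop_nhds_zero_of_lt_one (by positivity)
          (pow_lt_one₀ hβ0.le hβ1 (by omega))
      simpa using h3.const_mul 2
    have := ENNReal.tendsto_ofReal h1
    simpa using this
  have hdiam' : ∀ᶠ t₀ : ℕ in atTop, ∀ i : (Σ s : ℕ, ↥(Pbox (t₀+s))),
      EMetric.diam (cube (t₀+i.1) i.2.1) ≤ ENNReal.ofReal (2 * rr t₀) := by
    refine Eventually.of_forall fun t₀ i => ?_
    exact (hdiam _ _).trans (ENNReal.ofReal_le_ofReal
      (by linarith [hrmono (Nat.le_add_right t₀ i.1)]))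
  have hμ := Measure.hausdorffMeasure_le_liminf_tsum
    (ι := fun t₀ : ℕ => (Σ s : ℕ, ↥(Pbox (t₀+s)))) (d:ℝ) (S ∩ Metric.closedBall 0 (R:ℝ))
    (fun t₀ : ℕ => ENNReal.ofReal (2 * rr t₀)) htend
    (fun t₀ i => cube (t₀+i.1) i.2.1) hdiam' (Eventually.of_forall hcov)
  refine le_antisymm (hμ.trans ?_) (zero_le)
  have hG : Tendsto (fun t₀ : ℕ => ENNReal.ofReal (C * (1-q)⁻¹ * q^t₀)) atTop (nhds 0) := by
    have h1 : Tendsto (fun t₀ : ℕ => C * (1-q)⁻¹ * q^t₀) atTop (nhds 0) := by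
      simpa using (tendsto_pow_atTop_nhds_zero_of_lt_one hq0.le hq1).const_mul (C * (1-q)⁻¹)
    simpa using ENNReal.tendsto_ofReal h1
  calc liminf (fun t₀ : ℕ => ∑' i : (Σ s : ℕ, ↥(Pbox (t₀+s))),
        EMetric.diam (cube (t₀+i.1) i.2.1) ^ (d:ℝ)) atTop
      ≤ liminf (fun t₀ : ℕ => ENNReal.ofReal (C * (1-q)⁻¹ * q^t₀)) atTop :=
        liminf_le_liminf (Eventually.of_forall key)
    _ = 0 := hG.liminf_eq

/-- For `m ≥ 1`, `b ≥ 2`, the set of `x ∈ ℝᵐ` with `ω_m^{(b)}(x) = ∞`, i.e. such that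
for every `N > 0` there are arbitrarily large `t ∈ ℕ` and `p ∈ ℤᵐ` with
`‖b^t x − p‖_∞ ≤ (b^t)^{−N}`, is comeagre in `ℝᵐ` and has Hausdorff dimension zero. -/
theorem stmt_10 (m b : ℕ) (hm : 1 ≤ m) (hb : 2 ≤ b) :
    {x : Fin m → ℝ | ∀ N : ℝ, 0 < N → ∀ t₀ : ℕ, ∃ t : ℕ, t₀ ≤ t ∧ ∃ p : Fin m → ℤ,
        ‖(fun i => (b : ℝ) ^ t * x i - (p i : ℝ))‖ ≤ ((b : ℝ) ^ t) ^ (-N)}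
      ∈ residual (Fin m → ℝ) ∧
    dimH {x : Fin m → ℝ | ∀ N : ℝ, 0 < N → ∀ t₀ : ℕ, ∃ t : ℕ, t₀ ≤ t ∧ ∃ p : Fin m → ℤ,
        ‖(fun i => (b : ℝ) ^ t * x i - (p i : ℝ))‖ ≤ ((b : ℝ) ^ t) ^ (-N)} = 0 := by
  have hb1 : (1:ℝ) < b := by exact_mod_cast (by omega : 1 < b)
  have hb0 : (0:ℝ) < b := lt_trans one_pos hb1
  have hbt1 : ∀ t : ℕ, (1:ℝ) ≤ (b:ℝ)^t := fun t => one_le_pow₀ hb1.le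
  set S : Set (Fin m → ℝ) := {x : Fin m → ℝ | ∀ N : ℝ, 0 < N → ∀ t₀ : ℕ, ∃ t : ℕ, t₀ ≤ t ∧
      ∃ p : Fin m → ℤ, ‖(fun i => (b : ℝ) ^ t * x i - (p i : ℝ))‖ ≤ ((b : ℝ) ^ t) ^ (-N)}
    with hSdef
  constructor
  · -- residual
    set V : ℕ → ℕ → Set (Fin m → ℝ) := fun k t₀ =>
      ⋃ t ∈ Set.Ici t₀, ⋃ p : Fin m → ℤ,
        {x | ‖(fun i => (b : ℝ) ^ t * x i - (p i : ℝ))‖ < ((b : ℝ) ^ t) ^ (-((k:ℝ)+1))}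
      with hV
    have hVopen : ∀ k t₀, IsOpen (V k t₀) := by
      intro k t₀
      refine isOpen_biUnion fun t _ => isOpen_iUnion fun p => ?_
      have hcont : Continuous fun x : Fin m → ℝ => (fun i => (b : ℝ) ^ t * x i - (p i : ℝ)) := by
        exact continuous_pi fun i => (continuous_const.mul (continuous_apply i)).sub
          continuous_const
      have : {x : Fin m → ℝ | ‖(fun i => (b : ℝ) ^ t * x i - (p i : ℝ))‖ < ((b:ℝ)^t)^(-((k:ℝ)+1))}
          = (fun x : Fin m → ℝ => (fun i => (b : ℝ) ^ t * x i - (p i : ℝ))) ⁻¹'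
            (Metric.ball 0 (((b:ℝ)^t)^(-((k:ℝ)+1)))) := by
        ext x; simp [Metric.mem_ball, dist_zero_right]
      rw [this]
      exact Metric.isOpen_ball.preimage hcont
    have hVdense : ∀ k t₀, Dense (V k t₀) := by
      intro k t₀
      rw [Metric.dense_iff]
      intro x r hr
      obtain ⟨t1, ht1⟩ := exists_pow_lt_of_lt_one hr (show (b:ℝ)⁻¹ < 1 from
        inv_lt_one_of_one_lt₀ hb1)
      set t := max t₀ t1 with htdef
      have hbt : ((b:ℝ)⁻¹)^t < r := lt_of_le_of_lt
        (pow_le_pow_of_le_one (by positivity) (inv_le_one_of_one_le₀ hb1.le) (le_max_right _ _))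
        ht1
      set y : Fin m → ℝ := fun i => (round ((b:ℝ)^t * x i) : ℝ) * ((b:ℝ)⁻¹)^t with hy
      refine ⟨y, Metric.mem_ball.2 ?_, ?_⟩
      · have hdy : dist y x ≤ (1/2) * ((b:ℝ)⁻¹)^t := by
          rw [dist_pi_le_iff (by positivity)]
          intro i
          simp only [Real.dist_eq, hy]
          have hbb : (b:ℝ)^t * ((b:ℝ)⁻¹)^t = 1 := by
            rw [← mul_pow, mul_inv_cancel₀ hb0.ne', one_pow]
          have heq : (round ((b:ℝ)^t * x i) : ℝ) * ((b:ℝ)⁻¹)^t - x i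
              = ((round ((b:ℝ)^t * x i) : ℝ) - (b:ℝ)^t * x i) * ((b:ℝ)⁻¹)^t := by
            linear_combination (x i) * hbb
          rw [heq, abs_mul, abs_of_pos (by positivity : (0:ℝ) < ((b:ℝ)⁻¹)^t)]
          refine mul_le_mul_of_nonneg_right ?_ (by positivity)
          rw [abs_sub_comm]
          exact abs_sub_round _
        calc dist y x ≤ (1/2) * ((b:ℝ)⁻¹)^t := hdy
          _ < r := by nlinarith [pow_pos (show (0:ℝ) < (b:ℝ)⁻¹ by positivity) t]
      · rw [hV]
        refine Set.mem_iUnion₂.2 ⟨t, Set.mem_Ici.2 (le_max_left _ _), Set.mem_iUnion.2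
          ⟨fun i => round ((b:ℝ)^t * x i), ?_⟩⟩
        have hzero : ∀ i, (b:ℝ)^t * y i - (round ((b:ℝ)^t * x i) : ℝ) = 0 := by
          intro i
          simp only [hy]
          have hbb : (b:ℝ)^t * ((b:ℝ)⁻¹)^t = 1 := by
            rw [← mul_pow, mul_inv_cancel₀ hb0.ne', one_pow]
          linear_combination ((round ((b:ℝ)^t * x i)) : ℝ) * hbb
        have : (fun i => (b:ℝ)^t * y i - (round ((b:ℝ)^t * x i) : ℝ)) = 0 := funext hzero
        simp only [Set.mem_setOf_eq, this, norm_zero]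
        positivity
    have hT : (⋂ (k : ℕ) (t₀ : ℕ), V k t₀) ∈ residual (Fin m → ℝ) := by
      rw [countable_iInter_mem]
      intro k
      rw [countable_iInter_mem]
      intro t₀
      exact residual_of_dense_open (hVopen k t₀) (hVdense k t₀)
    refine Filter.mem_of_superset hT ?_
    intro x hx N hN t₀
    have hk := Set.mem_iInter.1 (Set.mem_iInter.1 hx ⌈N⌉₊) t₀
    rw [hV] at hk
    obtain ⟨t, ht, hk2⟩ := Set.mem_iUnion₂.1 hk
    obtain ⟨p, hp⟩ := Set.mem_iUnion.1 hk2
    refine ⟨t, ht, p, le_trans (le_of_lt hp) ?_⟩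
    refine Real.rpow_le_rpow_of_exponent_le (hbt1 t) ?_
    have := Nat.le_ceil N
    simp only [neg_le_neg_iff]
    linarith
  · -- Hausdorff dimension
    have hdim : ∀ d : ℝ≥0, 0 < d → dimH S ≤ (d : ℝ≥0∞) := by
      intro d hd
      set n : ℕ := ⌈(m:ℝ)/(d:ℝ)⌉₊ with hn
      have hd0 : (0:ℝ) < d := hd
      have hnd : (m:ℝ) < ((n:ℝ)+1) * (d:ℝ) := by
        have h1 : (m:ℝ)/(d:ℝ) ≤ (n:ℝ) := Nat.le_ceil _
        have h2 : (m:ℝ) ≤ (n:ℝ) * (d:ℝ) := by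
          rw [div_le_iff₀ hd0] at h1; linarith
        nlinarith
      have hU : S = ⋃ R : ℕ, S ∩ Metric.closedBall 0 (R:ℝ) := by
        ext x
        simp only [Set.mem_iUnion, Set.mem_inter_iff]
        constructor
        · intro hx
          refine ⟨⌈‖x‖⌉₊, hx, ?_⟩
          rw [Metric.mem_closedBall, dist_zero_right]
          exact Nat.le_ceil _
        · rintro ⟨R, hx, _⟩; exact hx
      rw [hU, dimH_iUnion]
      refine iSup_le fun R => ?_
      refine dimH_le_of_hausdorffMeasure_ne_top ?_
      rw [liou_measure_zero m b n R hb d hd hnd]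
      exact ENNReal.zero_ne_top
    by_contra h
    have hpos : 0 < dimH S := pos_iff_ne_zero.2 h
    obtain ⟨d, hd0, hd1⟩ := ENNReal.lt_iff_exists_nnreal_btwn.1 hpos
    exact absurd (hdim d (by exact_mod_cast hd0)) (not_le.2 hd1)
end

section
/- Let x = (ξ₁,…,ξₘ) ∈ ℝᵐ be a Liouville vector, i.e., for every N there exist q ∈ ℕ and p ∈ ℤᵐ with q ≥ 2 and 0 < ‖q x − p‖_∞ ≤ q^{−N} with all p_i ≠ 0. If all ξ_i ≠ 0, then the coordinatewise inverse vector (ξ₁⁻¹, …, ξₘ⁻¹) is also a Liouville vector. -/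
set_option maxHeartbeats 2000000


/-- `x ∈ ℝᵐ` is a Liouville vector: for every `N` there are `q ≥ 2` and `p ∈ ℤᵐ`
with all `p i ≠ 0` and `0 < ‖q x − p‖_∞ ≤ q^{−N}`. -/
def IsLiouvilleVector (m : ℕ) (x : Fin m → ℝ) : Prop :=
  ∀ N : ℕ, ∃ q : ℕ, 2 ≤ q ∧ ∃ p : Fin m → ℤ, (∀ i, p i ≠ 0) ∧
    0 < ‖(fun i => (q : ℝ) * x i - (p i : ℝ))‖ ∧
    ‖(fun i => (q : ℝ) * x i - (p i : ℝ))‖ ≤ ((q : ℝ) ^ N)⁻¹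

/-- If `x` is a Liouville vector with all coordinates nonzero, then the coordinatewise
inverse vector is also a Liouville vector. -/
theorem stmt_11 (m : ℕ) (x : Fin m → ℝ) (hx : ∀ i, x i ≠ 0)
    (hL : IsLiouvilleVector m x) :
    IsLiouvilleVector m (fun i => (x i)⁻¹) := by
  intro N
  rcases Nat.eq_zero_or_pos m with hm | hm
  · subst hm
    obtain ⟨q, hq, p, hp, hpos, -⟩ := hL 0
    exfalso
    have h0 : (fun i : Fin 0 => (q : ℝ) * x i - (p i : ℝ)) = 0 := Subsingleton.elim _ _
    rw [h0, norm_zero] at hpos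
    exact lt_irrefl 0 hpos
  have hne : (Finset.univ : Finset (Fin m)).Nonempty := ⟨⟨0, hm⟩, Finset.mem_univ _⟩
  set xm : ℝ := Finset.univ.inf' hne (fun i => |x i|) with hxm
  have hxm_pos : 0 < xm := by
    rw [hxm, Finset.lt_inf'_iff]
    exact fun i _ => abs_pos.mpr (hx i)
  have hxm_le : ∀ i, xm ≤ |x i| := fun i => Finset.inf'_le _ (Finset.mem_univ i)
  set C : ℝ := ∏ i, (|x i| + 1) with hC
  have hC1 : (1 : ℝ) ≤ C := by
    rw [hC]
    calc (1:ℝ) = ∏ _i : Fin m, (1:ℝ) := by simp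
      _ ≤ ∏ i, (|x i| + 1) := by
          refine Finset.prod_le_prod (fun i _ => by norm_num) (fun i _ => ?_)
          have := abs_nonneg (x i); linarith
  have hCpos : (0 : ℝ) < C := lt_of_lt_of_le one_pos hC1
  obtain ⟨K, hK⟩ := pow_unbounded_of_one_lt ((2 * C) ^ (N + 1) / xm) (one_lt_two (α := ℝ))
  obtain ⟨q, hq2, p, hp0, hpos, hle⟩ := hL (m * (N + 1) + K)
  set f : Fin m → ℝ := fun i => (q : ℝ) * x i - (p i : ℝ) with hf
  have hq1 : (1 : ℝ) ≤ (q : ℝ) := by exact_mod_cast Nat.one_le_of_lt hq2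
  have hq0 : (0 : ℝ) < (q : ℝ) := lt_of_lt_of_le one_pos hq1
  have hfb : ∀ i, |f i| ≤ ‖f‖ := fun i => by
    simpa [Real.norm_eq_abs] using norm_le_pi_norm f i
  have hε0 : 0 ≤ ‖f‖ := norm_nonneg f
  have hqNpos : (0:ℝ) < (q : ℝ) ^ (m * (N + 1) + K) := pow_pos hq0 _
  have hε1 : ‖f‖ ≤ 1 := by
    refine hle.trans ?_
    rw [inv_le_one_iff₀]
    right
    exact one_le_pow₀ hq1
  set P : ℤ := ∏ i, p i with hP
  have hPne : P ≠ 0 := Finset.prod_ne_zero_iff.mpr (fun i _ => hp0 i)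
  have hA1 : (1 : ℝ) ≤ (P.natAbs : ℝ) := by
    have : 1 ≤ P.natAbs := Nat.one_le_iff_ne_zero.mpr (Int.natAbs_ne_zero.mpr hPne)
    exact_mod_cast this
  set A : ℝ := (P.natAbs : ℝ) with hAdef
  have hApos : (0 : ℝ) < A := lt_of_lt_of_le one_pos hA1
  have hdvd : ∀ i, p i ∣ (P.natAbs : ℤ) :=
    fun i => Int.dvd_natAbs.mpr (Finset.dvd_prod_of_mem _ (Finset.mem_univ i))
  choose c hc using hdvd
  have hcne : ∀ i, c i ≠ 0 := by
    intro i h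
    have : (P.natAbs : ℤ) = 0 := by rw [hc i, h, mul_zero]
    exact hPne (Int.natAbs_eq_zero.mp (by exact_mod_cast this))
  -- coordinatewise bound on |p i|
  have hp_le : ∀ i, |(p i : ℝ)| ≤ (q : ℝ) * (|x i| + 1) := by
    intro i
    have h1 : |(p i : ℝ)| ≤ (q : ℝ) * |x i| + |f i| := by
      have : (p i : ℝ) = (q : ℝ) * x i - f i := by rw [hf]; ring
      rw [this]
      calc |(q : ℝ) * x i - f i| ≤ |(q : ℝ) * x i| + |f i| := abs_sub _ _
        _ = (q : ℝ) * |x i| + |f i| := by rw [abs_mul, abs_of_pos hq0]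
    have h2 : |f i| ≤ 1 := (hfb i).trans hε1
    nlinarith [abs_nonneg (x i)]
  -- A ≤ q^m * C
  have hAabs : A = |(P : ℝ)| := by rw [hAdef]; simp [Nat.cast_natAbs]
  have hAbound : A ≤ (q : ℝ) ^ m * C := by
    have hAeq : A = ∏ i, |(p i : ℝ)| := by
      rw [hAabs, hP]
      push_cast
      exact Finset.abs_prod _ _
    have hrhs : (q : ℝ) ^ m * C = ∏ i, ((q : ℝ) * (|x i| + 1)) := by
      rw [hC, Finset.prod_mul_distrib, Finset.prod_const, Finset.card_univ, Fintype.card_fin]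
    rw [hAeq, hrhs]
    exact Finset.prod_le_prod (fun i _ => abs_nonneg _) (fun i _ => hp_le i)
  -- the key smallness estimate
  have hkey : ‖f‖ * (2 * A) ^ (N + 1) ≤ xm := by
    have h2A : (0:ℝ) < 2 * A := by linarith
    have hstep1 : (2 * A) ^ (N + 1) ≤ (2 * C) ^ (N + 1) * ((q : ℝ) ^ m) ^ (N + 1) := by
      rw [← mul_pow]
      refine pow_le_pow_left₀ (le_of_lt h2A) ?_ _
      calc 2 * A ≤ 2 * ((q : ℝ) ^ m * C) := by nlinarith
        _ = 2 * C * (q : ℝ) ^ m := by ring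
    have hq2r : (2:ℝ) ≤ (q:ℝ) := by exact_mod_cast hq2
    have hstep2 : (2 * C) ^ (N + 1) < xm * (q : ℝ) ^ K := by
      have h2K : (2:ℝ) ^ K ≤ (q:ℝ) ^ K := pow_le_pow_left₀ (by norm_num) hq2r _
      have := (div_lt_iff₀ hxm_pos).mp hK
      nlinarith [pow_pos (show (0:ℝ) < 2 by norm_num) K]
    have hεle : ‖f‖ ≤ (((q : ℝ) ^ m) ^ (N + 1) * (q : ℝ) ^ K)⁻¹ := by
      refine hle.trans (le_of_eq ?_)
      rw [← pow_mul, ← pow_add]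
    have hQpos : (0:ℝ) < ((q : ℝ) ^ m) ^ (N + 1) * (q : ℝ) ^ K :=
      mul_pos (pow_pos (pow_pos hq0 _) _) (pow_pos hq0 _)
    calc ‖f‖ * (2 * A) ^ (N + 1)
        ≤ (((q : ℝ) ^ m) ^ (N + 1) * (q : ℝ) ^ K)⁻¹ * ((2 * C) ^ (N + 1) * ((q : ℝ) ^ m) ^ (N + 1)) := by
          refine mul_le_mul hεle hstep1 (pow_nonneg (le_of_lt h2A) _) (le_of_lt (inv_pos.mpr hQpos))
      _ = (2 * C) ^ (N + 1) / (q : ℝ) ^ K := by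
          field_simp
      _ ≤ xm := by
          rw [div_le_iff₀ (pow_pos hq0 K)]
          linarith
  -- construct the new approximation
  have hcR : ∀ i, |(P : ℝ)| = (p i : ℝ) * (c i : ℝ) := by
    intro i
    have h := congrArg (fun z : ℤ => (z : ℝ)) (hc i)
    push_cast at h
    exact h
  have hq'cast : ((2 * P.natAbs : ℕ) : ℝ) = 2 * A := by rw [hAdef]; push_cast; ring
  have hgid : ∀ i, ((2 * P.natAbs : ℕ) : ℝ) * (x i)⁻¹ - ((2 * (q : ℤ) * c i : ℤ) : ℝ)
      = -(2 * (c i : ℝ) * (x i)⁻¹ * f i) := by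
    intro i
    have hfi : f i = (q : ℝ) * x i - (p i : ℝ) := rfl
    rw [hq'cast, hAabs, hcR i, hfi]
    push_cast
    field_simp [hx i]
    ring
  refine ⟨2 * P.natAbs, ?_, fun i => 2 * (q : ℤ) * c i, ?_, ?_, ?_⟩
  · have : 1 ≤ P.natAbs := Nat.one_le_iff_ne_zero.mpr (Int.natAbs_ne_zero.mpr hPne)
    omega
  · intro i
    have hqz : (q : ℤ) ≠ 0 := by positivity
    exact mul_ne_zero (mul_ne_zero two_ne_zero hqz) (hcne i)
  · -- positivity
    have hfne : f ≠ 0 := by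
      intro h; rw [h, norm_zero] at hpos; exact lt_irrefl 0 hpos
    obtain ⟨i, hi⟩ := Function.ne_iff.mp hfne
    have hne0 : ((2 * P.natAbs : ℕ) : ℝ) * (x i)⁻¹ - ((2 * (q : ℤ) * c i : ℤ) : ℝ) ≠ 0 := by
      rw [hgid i]
      simp only [ne_eq, neg_eq_zero]
      refine mul_ne_zero (mul_ne_zero (mul_ne_zero two_ne_zero ?_) (inv_ne_zero (hx i))) hi
      exact_mod_cast hcne i
    refine norm_pos_iff.mpr ?_
    intro h
    exact hne0 (by simpa using congrFun h i)
  · -- the norm bound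
    have hnn : (0:ℝ) ≤ (((2 * P.natAbs : ℕ) : ℝ) ^ N)⁻¹ := by positivity
    refine (pi_norm_le_iff_of_nonneg hnn).mpr (fun i => ?_)
    simp only [Real.norm_eq_abs]
    rw [hgid i, abs_neg, hq'cast]
    have hci : |(c i : ℝ)| ≤ A := by
      have h1 : A = (p i : ℝ) * (c i : ℝ) := hAabs.trans (hcR i)
      have habs : A = |(p i : ℝ)| * |(c i : ℝ)| := by
        rw [← abs_mul, ← h1, abs_of_pos hApos]
      have hpi1 : (1:ℝ) ≤ |(p i : ℝ)| := by
        have h1 := Int.one_le_abs (hp0 i)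
        calc (1:ℝ) ≤ |(p i : ℤ)| := by exact_mod_cast h1
          _ = |(p i : ℝ)| := by push_cast; ring
      nlinarith [abs_nonneg ((c i : ℝ))]
    have hbound : |2 * (c i : ℝ) * (x i)⁻¹ * f i| ≤ 2 * A * xm⁻¹ * ‖f‖ := by
      rw [abs_mul, abs_mul, abs_mul, abs_two, abs_inv]
      have h1 : |x i|⁻¹ ≤ xm⁻¹ := by
        exact inv_anti₀ hxm_pos (hxm_le i)
      have h2 : |f i| ≤ ‖f‖ := hfb i
      have hxipos : (0:ℝ) < |x i|⁻¹ := by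
        have : (0:ℝ) < |x i| := abs_pos.mpr (hx i)
        positivity
      gcongr <;> first
        | exact le_of_lt hxm_pos
        | exact hci
        | exact h1
        | exact h2
        | positivity
    refine hbound.trans ?_
    have h2A : (0:ℝ) < 2 * A := by linarith
    have hfin : 2 * A * xm⁻¹ * ‖f‖ * (2 * A) ^ N ≤ 1 := by
      have hexp : 2 * A * xm⁻¹ * ‖f‖ * (2 * A) ^ N = (‖f‖ * (2 * A) ^ (N + 1)) * xm⁻¹ := by
        rw [pow_succ]; ring
      rw [hexp]
      have hk := hkey
      rw [← div_le_one hxm_pos] at hk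
      calc (‖f‖ * (2 * A) ^ (N+1)) * xm⁻¹ = ‖f‖ * (2 * A) ^ (N+1) / xm := by ring
        _ ≤ 1 := hk
    have heq : ((2 * A) ^ N)⁻¹ = 1 / (2 * A) ^ N := inv_eq_one_div _
    rw [heq, le_div_iff₀ (pow_pos h2A N)]
    exact hfin
end

section
/- Let m ≥ 1 and b ≥ 2 be integers and θ₀, θ₁ ∈ ℝᵐ. Let ν₀, ν₁ > 1 and Λ = ν₀ν₁. For every x ∈ ℝᵐ there exist x₀, x₁ ∈ ℝᵐ with x₀ + x₁ = x such that for i = 0, 1 and every w < (ν_i − 1)/Λ and every c > 0, for all sufficiently large Q the system 1 ≤ q ≤ Q, ‖q x_i − p − θ_i‖_∞ ≤ c Q^{−w} has a solution with q an integer power of b and p ∈ ℤᵐ. -/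
open Filter

set_option maxHeartbeats 1000000
namespace Stmt14

/-- The scale sequence. -/
noncomputable def G (ν : Fin 2 → ℝ) : ℕ → ℕ
  | 0 => 1
  | k+1 => ⌈ν ⟨k % 2, by omega⟩ * G ν k⌉₊

lemma G_basic {ν : Fin 2 → ℝ} (hν : ∀ i, 1 < ν i) (k : ℕ) :
    1 ≤ G ν k ∧ G ν k < G ν (k+1) := by
  induction k with
  | zero =>
      refine ⟨le_refl _, ?_⟩
      have h1 : G ν 0 = 1 := rfl
      rw [show G ν 1 = ⌈ν ⟨0, by omega⟩ * G ν 0⌉₊ from rfl, h1, Nat.lt_ceil]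
      push_cast
      simpa using hν _
  | succ n ih =>
      refine ⟨le_trans ih.1 ih.2.le, ?_⟩
      rw [show G ν (n+2) = ⌈ν ⟨(n+1) % 2, by omega⟩ * G ν (n+1)⌉₊ from rfl, Nat.lt_ceil]
      have h1 : (1:ℝ) ≤ G ν (n+1) := by exact_mod_cast le_trans ih.1 ih.2.le
      nlinarith [hν (⟨(n+1) % 2, by omega⟩ : Fin 2)]

lemma G_strictMono {ν : Fin 2 → ℝ} (hν : ∀ i, 1 < ν i) : StrictMono (G ν) :=
  strictMono_nat_of_lt_succ fun k => (G_basic hν k).2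

lemma G_ge {ν : Fin 2 → ℝ} (hν : ∀ i, 1 < ν i) (k : ℕ) : k + 1 ≤ G ν k := by
  induction k with
  | zero => exact (G_basic hν 0).1
  | succ n ih => have := (G_basic hν n).2; omega

/-- Core one-dimensional digit-adjustment computation. -/
lemma core {b : ℕ} (hb : 2 ≤ b) (Gk L : ℕ) (β τ : ℝ) :
    ∃ p : ℤ, |(b:ℝ)^Gk * (β + (⌊(b:ℝ)^L * Int.fract (τ - (b:ℝ)^Gk * β)⌋ : ℤ) / (b:ℝ)^(Gk+L))
      - p - τ| ≤ ((b:ℝ)^L)⁻¹ := by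
  have hbpos : (0:ℝ) < b := by positivity
  have hbL : (0:ℝ) < (b:ℝ)^L := by positivity
  have hbG : (0:ℝ) < (b:ℝ)^Gk := by positivity
  set φ := τ - (b:ℝ)^Gk * β with hφ
  set u := Int.fract φ with hu
  set a : ℤ := ⌊(b:ℝ)^L * u⌋ with ha
  refine ⟨-⌊φ⌋, ?_⟩
  have haval : (a:ℝ) = (b:ℝ)^L * u - Int.fract ((b:ℝ)^L * u) := by
    rw [ha]; exact (Int.self_sub_fract _).symm
  have huval : u = φ - ⌊φ⌋ := rfl
  have e1 : (a:ℝ)/(b:ℝ)^L = u - Int.fract ((b:ℝ)^L*u)/(b:ℝ)^L := by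
    rw [haval]; field_simp
  have e2 : (b:ℝ)^Gk * (β + (a:ℝ)/(b:ℝ)^(Gk+L)) = (b:ℝ)^Gk*β + (a:ℝ)/(b:ℝ)^L := by
    rw [pow_add]; field_simp
  have key : (b:ℝ)^Gk * (β + (a:ℝ) / (b:ℝ)^(Gk+L)) - (-⌊φ⌋ : ℤ) - τ
      = -(Int.fract ((b:ℝ)^L * u) / (b:ℝ)^L) := by
    rw [e2]
    push_cast
    rw [e1, huval, hφ]

    ring
  rw [key, abs_neg, abs_div, abs_of_nonneg (Int.fract_nonneg _), abs_of_pos hbL,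
    div_eq_mul_inv]
  have := (Int.fract_lt_one ((b:ℝ)^L * u)).le
  calc Int.fract ((b:ℝ)^L * u) * ((b:ℝ)^L)⁻¹ ≤ 1 * ((b:ℝ)^L)⁻¹ := by
        apply mul_le_mul_of_nonneg_right this (by positivity)
    _ = ((b:ℝ)^L)⁻¹ := one_mul _


/-- Partial sums of the digit construction. -/
noncomputable def S (m b : ℕ) (ν : Fin 2 → ℝ) (θ : Fin 2 → Fin m → ℝ) (x : Fin m → ℝ) :
    ℕ → Fin m → ℝ
  | 0 => fun _ => 0
  | k+1 => fun j =>
      S m b ν θ x k j + (if k % 2 = 0 then (1:ℝ) else -1) *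
        ((⌊(b:ℝ)^(G ν (k+1) - G ν k) *
            Int.fract (θ ⟨k % 2, by omega⟩ j -
              (b:ℝ)^(G ν k) * (if k % 2 = 0 then S m b ν θ x k j else x j - S m b ν θ x k j))⌋ : ℤ)
          / (b:ℝ)^(G ν (k+1)))

noncomputable def D (m b : ℕ) (ν : Fin 2 → ℝ) (θ : Fin 2 → Fin m → ℝ) (x : Fin m → ℝ)
    (k : ℕ) (j : Fin m) : ℝ := S m b ν θ x (k+1) j - S m b ν θ x k j

lemma S_eq_sum (m b : ℕ) (ν : Fin 2 → ℝ) (θ : Fin 2 → Fin m → ℝ) (x : Fin m → ℝ)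
    (K : ℕ) (j : Fin m) :
    S m b ν θ x K j = ∑ k ∈ Finset.range K, D m b ν θ x k j := by
  induction K with
  | zero => simp [S]
  | succ n ih => rw [Finset.sum_range_succ, ← ih, D]; ring

lemma D_bound {m b : ℕ} {ν : Fin 2 → ℝ} (θ : Fin 2 → Fin m → ℝ) (x : Fin m → ℝ)
    (hb : 2 ≤ b) (hν : ∀ i, 1 < ν i) (k : ℕ) (j : Fin m) :
    |D m b ν θ x k j| ≤ ((b:ℝ)^(G ν k))⁻¹ := by
  have hbpos : (0:ℝ) < b := by positivity
  have hG : G ν k < G ν (k+1) := (G_basic hν k).2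
  have hD : D m b ν θ x k j = (if k % 2 = 0 then (1:ℝ) else -1) *
      ((⌊(b:ℝ)^(G ν (k+1) - G ν k) *
          Int.fract (θ ⟨k % 2, by omega⟩ j -
            (b:ℝ)^(G ν k) * (if k % 2 = 0 then S m b ν θ x k j
              else x j - S m b ν θ x k j))⌋ : ℤ)
        / (b:ℝ)^(G ν (k+1))) := by
    simp only [D, S]; ring
  set L := G ν (k+1) - G ν k with hL
  have hGL : G ν (k+1) = G ν k + L := by omega
  rw [hD]
  set u := Int.fract (θ ⟨k % 2, by omega⟩ j -
      (b:ℝ)^(G ν k) * (if k % 2 = 0 then S m b ν θ x k j else x j - S m b ν θ x k j)) with hu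
  have hu0 : 0 ≤ u := Int.fract_nonneg _
  have hu1 : u < 1 := Int.fract_lt_one _
  have ha0 : (0:ℝ) ≤ (⌊(b:ℝ)^L * u⌋ : ℤ) := by
    have : (0:ℝ) ≤ (b:ℝ)^L * u := by positivity
    exact_mod_cast Int.floor_nonneg.2 this
  have ha1 : ((⌊(b:ℝ)^L * u⌋ : ℤ) : ℝ) ≤ (b:ℝ)^L := by
    calc ((⌊(b:ℝ)^L * u⌋ : ℤ) : ℝ) ≤ (b:ℝ)^L * u := Int.floor_le _
      _ ≤ (b:ℝ)^L * 1 := by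
          apply mul_le_mul_of_nonneg_left hu1.le (by positivity)
      _ = (b:ℝ)^L := mul_one _
  rw [abs_mul]
  have h1 : |if k % 2 = 0 then (1:ℝ) else -1| = 1 := by split <;> simp
  rw [h1, one_mul, abs_div, abs_of_nonneg ha0,
    abs_of_pos (by positivity : (0:ℝ) < (b:ℝ)^(G ν (k+1)))]
  rw [hGL, pow_add, div_le_iff₀ (by positivity)]
  calc ((⌊(b:ℝ)^L * u⌋ : ℤ) : ℝ) ≤ (b:ℝ)^L := ha1
    _ = ((b:ℝ)^(G ν k))⁻¹ * ((b:ℝ)^(G ν k) * (b:ℝ)^L) := by field_simp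

lemma D_summable {m b : ℕ} {ν : Fin 2 → ℝ} (θ : Fin 2 → Fin m → ℝ) (x : Fin m → ℝ)
    (hb : 2 ≤ b) (hν : ∀ i, 1 < ν i) (j : Fin m) :
    Summable (fun k => D m b ν θ x k j) := by
  apply Summable.of_norm_bounded (g := fun k : ℕ => ((2:ℝ)⁻¹)^k)
  · exact summable_geometric_of_lt_one (by norm_num) (by norm_num)
  · intro k
    rw [Real.norm_eq_abs]
    refine le_trans (D_bound θ x hb hν k j) ?_
    rw [inv_pow]
    apply inv_anti₀ (by positivity)
    calc (2:ℝ)^k ≤ (2:ℝ)^(G ν k) := by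
          apply pow_le_pow_right₀ (by norm_num)
          have := G_ge hν k; omega
      _ ≤ (b:ℝ)^(G ν k) := by
          apply pow_le_pow_left₀ (by norm_num)
          exact_mod_cast hb

/-- The limit point. -/
noncomputable def Y (m b : ℕ) (ν : Fin 2 → ℝ) (θ : Fin 2 → Fin m → ℝ) (x : Fin m → ℝ)
    (j : Fin m) : ℝ := ∑' k, D m b ν θ x k j

lemma tail_bound {m b : ℕ} {ν : Fin 2 → ℝ} {θ : Fin 2 → Fin m → ℝ} {x : Fin m → ℝ}
    (hb : 2 ≤ b) (hν : ∀ i, 1 < ν i) (K : ℕ) (j : Fin m) :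
    |Y m b ν θ x j - S m b ν θ x K j| ≤ 2 * ((b:ℝ)^(G ν K))⁻¹ := by
  have hbpos : (0:ℝ) < b := by positivity
  have hsum := D_summable θ x hb hν j
  have htail : Y m b ν θ x j - S m b ν θ x K j = ∑' n, D m b ν θ x (n + K) j := by
    rw [Y, S_eq_sum, ← Summable.sum_add_tsum_nat_add K hsum]; ring
  have hGadd : ∀ n : ℕ, G ν K + n ≤ G ν (n + K) := by
    intro n
    induction n with
    | zero => simp
    | succ q ih =>
        have h2 := (G_basic hν (q + K)).2
        have e : q + 1 + K = (q + K) + 1 := by omega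
        rw [e]; omega
  have hb1 : (1:ℝ) < b := by exact_mod_cast hb
  have hbinv : (b:ℝ)⁻¹ ≤ 2⁻¹ := by
    apply inv_anti₀ (by norm_num); exact_mod_cast hb
  have hbinv1 : (b:ℝ)⁻¹ < 1 := by rw [inv_lt_one_iff₀]; right; exact hb1
  have hbound : ∀ n : ℕ, |D m b ν θ x (n + K) j| ≤ ((b:ℝ)^(G ν K))⁻¹ * ((b:ℝ)⁻¹)^n := by
    intro n
    refine le_trans (D_bound θ x hb hν (n + K) j) ?_
    rw [inv_pow, ← mul_inv, ← pow_add]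
    apply inv_anti₀ (by positivity)
    apply pow_le_pow_right₀ hb1.le (hGadd n)
  have hgsum : Summable (fun n : ℕ => ((b:ℝ)^(G ν K))⁻¹ * ((b:ℝ)⁻¹)^n) :=
    Summable.mul_left _ (summable_geometric_of_lt_one (by positivity) hbinv1)
  have hsumK : Summable (fun n => D m b ν θ x (n + K) j) :=
    (summable_nat_add_iff K).2 hsum
  rw [htail]
  calc |∑' n, D m b ν θ x (n + K) j| ≤ ∑' n, |D m b ν θ x (n + K) j| := by
        have := norm_tsum_le_tsum_norm (f := fun n => D m b ν θ x (n + K) j) hsumK.norm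
        simpa [Real.norm_eq_abs] using this
    _ ≤ ∑' n, ((b:ℝ)^(G ν K))⁻¹ * ((b:ℝ)⁻¹)^n := Summable.tsum_le_tsum hbound hsumK.abs hgsum
    _ = ((b:ℝ)^(G ν K))⁻¹ * (1 - (b:ℝ)⁻¹)⁻¹ := by
        rw [tsum_mul_left, tsum_geometric_of_lt_one (by positivity) hbinv1]
    _ ≤ ((b:ℝ)^(G ν K))⁻¹ * 2 := by
        apply mul_le_mul_of_nonneg_left _ (by positivity)
        rw [inv_le_iff_one_le_mul₀ (by linarith)]
        nlinarith
    _ = 2 * ((b:ℝ)^(G ν K))⁻¹ := mul_comm _ _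


lemma step_close {m b : ℕ} {ν : Fin 2 → ℝ} (θ : Fin 2 → Fin m → ℝ) (x : Fin m → ℝ)
    (hb : 2 ≤ b) (hν : ∀ i, 1 < ν i) (k : ℕ) (j : Fin m) :
    ∃ p : ℤ, |(b:ℝ)^(G ν k) *
        (if k % 2 = 0 then S m b ν θ x (k+1) j else x j - S m b ν θ x (k+1) j)
      - p - θ ⟨k % 2, by omega⟩ j| ≤ ((b:ℝ)^(G ν (k+1) - G ν k))⁻¹ := by
  have hG : G ν k < G ν (k+1) := (G_basic hν k).2
  set L := G ν (k+1) - G ν k with hL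
  have hGL : G ν (k+1) = G ν k + L := by omega
  set base := (if k % 2 = 0 then S m b ν θ x k j else x j - S m b ν θ x k j) with hbase
  set τ := θ ⟨k % 2, by omega⟩ j with hτ
  obtain ⟨p, hp⟩ := core hb (G ν k) L base τ
  refine ⟨p, ?_⟩
  have hiff : (if k % 2 = 0 then S m b ν θ x (k+1) j else x j - S m b ν θ x (k+1) j)
      = base + (⌊(b:ℝ)^L * Int.fract (τ - (b:ℝ)^(G ν k) * base)⌋ : ℤ)
        / (b:ℝ)^(G ν k + L) := by
    rw [← hGL, hbase, hτ]
    by_cases h : k % 2 = 0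
    · simp only [S, h, reduceIte, ← hL]; ring
    · have h1 : k % 2 = 1 := by omega
      simp only [S, h1, one_ne_zero, reduceIte, ← hL]; ring
  rw [hiff]
  exact hp

lemma scale_est {m b : ℕ} {ν : Fin 2 → ℝ} (θ : Fin 2 → Fin m → ℝ) (x : Fin m → ℝ)
    (hb : 2 ≤ b) (hν : ∀ i, 1 < ν i) (k : ℕ) :
    ∃ p : Fin m → ℤ, ∀ j,
      |(b:ℝ)^(G ν k) * (if k % 2 = 0 then Y m b ν θ x j else x j - Y m b ν θ x j)
        - p j - θ ⟨k % 2, by omega⟩ j| ≤ 3 * ((b:ℝ)^(G ν (k+1) - G ν k))⁻¹ := by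
  have hbpos : (0:ℝ) < b := by positivity
  have hG : G ν k < G ν (k+1) := (G_basic hν k).2
  set L := G ν (k+1) - G ν k with hL
  have hGL : G ν (k+1) = G ν k + L := by omega
  choose p hp using fun j => step_close θ x hb hν k j
  refine ⟨p, fun j => ?_⟩
  have h2 := tail_bound (θ := θ) (x := x) hb hν (k+1) j
  have hdiff : |(if k % 2 = 0 then Y m b ν θ x j else x j - Y m b ν θ x j)
      - (if k % 2 = 0 then S m b ν θ x (k+1) j else x j - S m b ν θ x (k+1) j)|
      = |Y m b ν θ x j - S m b ν θ x (k+1) j| := by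
    by_cases h : k % 2 = 0
    · simp only [h, reduceIte]
    · simp only [h, reduceIte]
      rw [show x j - Y m b ν θ x j - (x j - S m b ν θ x (k+1) j)
        = -(Y m b ν θ x j - S m b ν θ x (k+1) j) by ring, abs_neg]
  have key : |(b:ℝ)^(G ν k) * (if k % 2 = 0 then Y m b ν θ x j else x j - Y m b ν θ x j)
      - p j - θ ⟨k % 2, by omega⟩ j|
      ≤ (b:ℝ)^(G ν k) * |Y m b ν θ x j - S m b ν θ x (k+1) j|
        + |(b:ℝ)^(G ν k) *
            (if k % 2 = 0 then S m b ν θ x (k+1) j else x j - S m b ν θ x (k+1) j)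
          - p j - θ ⟨k % 2, by omega⟩ j| := by
    rw [← hdiff]
    calc _ = |(b:ℝ)^(G ν k) * ((if k % 2 = 0 then Y m b ν θ x j else x j - Y m b ν θ x j)
          - (if k % 2 = 0 then S m b ν θ x (k+1) j else x j - S m b ν θ x (k+1) j))
        + ((b:ℝ)^(G ν k) *
            (if k % 2 = 0 then S m b ν θ x (k+1) j else x j - S m b ν θ x (k+1) j)
          - p j - θ ⟨k % 2, by omega⟩ j)| := by ring_nf
      _ ≤ _ := by
          refine le_trans (abs_add_le _ _) ?_
          rw [abs_mul, abs_of_pos (by positivity : (0:ℝ) < (b:ℝ)^(G ν k))]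
  refine le_trans key ?_
  have hη : (b:ℝ)^(G ν k) * |Y m b ν θ x j - S m b ν θ x (k+1) j|
      ≤ 2 * ((b:ℝ)^L)⁻¹ := by
    calc (b:ℝ)^(G ν k) * |Y m b ν θ x j - S m b ν θ x (k+1) j|
        ≤ (b:ℝ)^(G ν k) * (2 * ((b:ℝ)^(G ν (k+1)))⁻¹) :=
          mul_le_mul_of_nonneg_left h2 (by positivity)
      _ = 2 * ((b:ℝ)^L)⁻¹ := by rw [hGL, pow_add]; field_simp
  have := hp j
  linarith

lemma L_lower {ν : Fin 2 → ℝ} (hν : ∀ i, 1 < ν i) (k : ℕ) :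
    ν ⟨k % 2, by omega⟩ * (G ν k : ℝ) - (G ν k : ℝ) ≤ ((G ν (k+1) - G ν k : ℕ) : ℝ) := by
  have hG : G ν k < G ν (k+1) := (G_basic hν k).2
  have h : ν ⟨k % 2, by omega⟩ * (G ν k : ℝ) ≤ (G ν (k+1) : ℝ) := by
    rw [show G ν (k+1) = ⌈ν ⟨k % 2, by omega⟩ * (G ν k : ℝ)⌉₊ from rfl]
    exact Nat.le_ceil _
  rw [Nat.cast_sub hG.le]
  linarith

lemma G2_upper {ν : Fin 2 → ℝ} (hν : ∀ i, 1 < ν i) (k : ℕ) :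
    (G ν (k+2) : ℝ) ≤ (ν 0 * ν 1) * (G ν k : ℝ) + (ν 0 + ν 1 + 1) := by
  have hGpos : (1:ℝ) ≤ (G ν k : ℝ) := by exact_mod_cast (G_basic hν k).1
  have h1 : (G ν (k+1) : ℝ) ≤ ν ⟨k % 2, by omega⟩ * (G ν k : ℝ) + 1 := by
    rw [show G ν (k+1) = ⌈ν ⟨k % 2, by omega⟩ * (G ν k : ℝ)⌉₊ from rfl]
    have hpos : 0 ≤ ν ⟨k % 2, by omega⟩ * (G ν k : ℝ) := by
      have := hν (⟨k % 2, by omega⟩ : Fin 2); nlinarith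
    exact (Nat.ceil_lt_add_one hpos).le
  have h2 : (G ν (k+2) : ℝ) ≤ ν ⟨(k+1) % 2, by omega⟩ * (G ν (k+1) : ℝ) + 1 := by
    rw [show G ν (k+2) = ⌈ν ⟨(k+1) % 2, by omega⟩ * (G ν (k+1) : ℝ)⌉₊ from rfl]
    have hpos : 0 ≤ ν ⟨(k+1) % 2, by omega⟩ * (G ν (k+1) : ℝ) := by
      have := hν (⟨(k+1) % 2, by omega⟩ : Fin 2); positivity
    exact (Nat.ceil_lt_add_one hpos).le
  have hG1pos : (1:ℝ) ≤ (G ν (k+1) : ℝ) := by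
    exact_mod_cast le_trans (G_basic hν k).1 (G_basic hν k).2.le
  rcases Nat.even_or_odd k with he | ho
  · have e0 : (⟨k % 2, by omega⟩ : Fin 2) = 0 := by
      apply Fin.ext; simp [Nat.even_iff.1 he]
    have e1 : (⟨(k+1) % 2, by omega⟩ : Fin 2) = 1 := by
      apply Fin.ext; simp [Nat.succ_mod_two_eq_one_iff.2 (Nat.even_iff.1 he)]
    rw [e0] at h1; rw [e1] at h2
    have h0 := hν 0; have hh1 := hν 1
    nlinarith
  · have e0 : (⟨k % 2, by omega⟩ : Fin 2) = 1 := by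
      apply Fin.ext; simp [Nat.odd_iff.1 ho]
    have e1 : (⟨(k+1) % 2, by omega⟩ : Fin 2) = 0 := by
      apply Fin.ext; simp [Nat.succ_mod_two_eq_zero_iff.2 (Nat.odd_iff.1 ho)]
    rw [e0] at h1; rw [e1] at h2
    have h0 := hν 0; have hh1 := hν 1
    nlinarith

end Stmt14

/-- Let `m ≥ 1`, `b ≥ 2`, inhomogeneities `θ 0, θ 1 ∈ ℝᵐ` and `ν 0, ν 1 > 1` with
`Λ = ν 0 · ν 1`. Every `x ∈ ℝᵐ` decomposes as `x = y 0 + y 1` where for `i = 0, 1`,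
for every `w < (ν i − 1)/Λ` and every `c > 0`, for all sufficiently large `Q` the system
`1 ≤ q ≤ Q`, `‖q · (y i) − p − θ i‖_∞ ≤ c Q^{−w}` has a solution with `q` an integer
power of `b` and `p ∈ ℤᵐ`. -/
theorem stmt_14 (m b : ℕ) (hm : 1 ≤ m) (hb : 2 ≤ b)
    (θ : Fin 2 → Fin m → ℝ) (ν : Fin 2 → ℝ) (hν : ∀ i, 1 < ν i)
    (x : Fin m → ℝ) :
    ∃ y : Fin 2 → Fin m → ℝ, y 0 + y 1 = x ∧
      ∀ i : Fin 2, ∀ w : ℝ, w < (ν i - 1) / (ν 0 * ν 1) →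
        ∀ c : ℝ, 0 < c → ∃ Q₀ : ℝ, ∀ Q : ℝ, Q₀ ≤ Q →
          ∃ N : ℕ, ∃ p : Fin m → ℤ,
            1 ≤ (b : ℝ) ^ N ∧ (b : ℝ) ^ N ≤ Q ∧
            ‖(fun j => (b : ℝ) ^ N * y i j - (p j : ℝ) - θ i j)‖ ≤ c * Q ^ (-w) := by
  classical
  have hν0 := hν 0
  have hν1 := hν 1
  have hB1 : (1:ℝ) < (b:ℝ) := by exact_mod_cast hb
  have hB0 : (0:ℝ) < (b:ℝ) := by linarith
  set Yf := Stmt14.Y m b ν θ x with hYf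
  set yy : Fin 2 → Fin m → ℝ := ![Yf, fun j => x j - Yf j] with hyy
  have hΛpos : 0 < ν 0 * ν 1 := by nlinarith
  refine ⟨yy, ?_, ?_⟩
  · funext j
    show yy 0 j + yy 1 j = x j
    simp only [hyy, Matrix.cons_val_zero, Matrix.cons_val_one, Matrix.head_cons]
    ring
  intro i w hw c hc
  -- main case : 0 ≤ w
  have main : ∀ w' : ℝ, 0 ≤ w' → w' < (ν i - 1) / (ν 0 * ν 1) → ∀ c' : ℝ, 0 < c' →
      ∃ Q₀ : ℝ, 1 ≤ Q₀ ∧ ∀ Q : ℝ, Q₀ ≤ Q →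
        ∃ N : ℕ, ∃ p : Fin m → ℤ,
          1 ≤ (b : ℝ) ^ N ∧ (b : ℝ) ^ N ≤ Q ∧
          ‖(fun j => (b : ℝ) ^ N * yy i j - (p j : ℝ) - θ i j)‖ ≤ c' * Q ^ (-w') := by
    intro w' hw'0 hw' c' hc'
    set Λ := ν 0 * ν 1 with hΛ
    set C := ν 0 + ν 1 + 1 with hC
    have hCpos : 0 < C := by simp only [hC]; nlinarith
    have hδ : 0 < ν i - 1 - w' * Λ := by
      have := (lt_div_iff₀ hΛpos).1 hw'
      linarith
    set δ := ν i - 1 - w' * Λ with hδdef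
    have hbδ : 1 < (b:ℝ) ^ δ := by
      rw [show (1:ℝ) = (b:ℝ) ^ (0:ℝ) from (Real.rpow_zero _).symm]
      exact Real.rpow_lt_rpow_of_exponent_lt hB1 hδ
    obtain ⟨n₀, hn₀⟩ := Filter.eventually_atTop.1
      ((tendsto_pow_atTop_atTop_of_one_lt hbδ).eventually_ge_atTop
        (3 * (b:ℝ) ^ (w' * C) / c'))
    set k₀ := 2 * n₀ + i.val with hk₀
    refine ⟨max ((b:ℝ)^(Stmt14.G ν k₀)) ((k₀:ℝ)+1), ?_, ?_⟩
    · refine le_trans ?_ (le_max_right _ _)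
      have : (0:ℝ) ≤ (k₀:ℝ) := Nat.cast_nonneg _
      linarith
    intro Q hQ
    have hQk₀ : (k₀:ℝ) + 1 ≤ Q := le_trans (le_max_right _ _) hQ
    have hQ1 : (1:ℝ) ≤ Q := by
      have : (0:ℝ) ≤ (k₀:ℝ) := Nat.cast_nonneg _
      linarith
    have hQ0 : (0:ℝ) < Q := by linarith
    set P : ℕ → Prop := fun k => k % 2 = i.val ∧ (b:ℝ)^(Stmt14.G ν k) ≤ Q with hP
    have hival : i.val < 2 := i.isLt
    have hPk₀ : P k₀ := ⟨by omega, le_trans (le_max_left _ _) hQ⟩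
    have hk₀n : k₀ ≤ ⌈Q⌉₊ := by
      have h1 : (k₀:ℝ) ≤ (⌈Q⌉₊ : ℝ) := le_trans (by linarith) (Nat.le_ceil Q)
      exact_mod_cast h1
    set k := Nat.findGreatest P ⌈Q⌉₊ with hk
    have hPk : P k := Nat.findGreatest_spec hk₀n hPk₀
    have hkk₀ : k₀ ≤ k := Nat.le_findGreatest hk₀n hPk₀
    have hpar : k % 2 = i.val := hPk.1
    have hbNQ : (b:ℝ)^(Stmt14.G ν k) ≤ Q := hPk.2
    have hup : Q < (b:ℝ)^(Stmt14.G ν (k+2)) := by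
      by_cases hcase : k + 2 ≤ ⌈Q⌉₊
      · have hng := Nat.findGreatest_is_greatest (show Nat.findGreatest P ⌈Q⌉₊ < k+2 by omega)
          hcase
        by_contra hcon
        push_neg at hcon
        exact hng ⟨by omega, hcon⟩
      · push_neg at hcase
        have hQk : Q ≤ (k:ℝ) + 1 := by
          have h1 : Q ≤ (⌈Q⌉₊ : ℝ) := Nat.le_ceil Q
          have h2 : (⌈Q⌉₊:ℝ) ≤ (k:ℝ)+1 := by exact_mod_cast Nat.lt_succ_iff.1 (by omega)
          linarith
        have h3 : ((k:ℝ)+1) < (2:ℝ)^(k+3) := by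
          have h4 : (k+1 : ℕ) < 2^(k+3) := lt_of_lt_of_le Nat.lt_two_pow_self
            (Nat.pow_le_pow_right (by norm_num) (by omega))
          exact_mod_cast h4
        have h4 : (2:ℝ)^(k+3) ≤ (2:ℝ)^(Stmt14.G ν (k+2)) :=
          pow_le_pow_right₀ one_le_two (Stmt14.G_ge hν (k+2))
        have h5 : (2:ℝ)^(Stmt14.G ν (k+2)) ≤ (b:ℝ)^(Stmt14.G ν (k+2)) :=
          pow_le_pow_left₀ (by norm_num) (by exact_mod_cast hb) _
        linarith
    obtain ⟨p, hp⟩ := Stmt14.scale_est θ x hb hν k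
    refine ⟨Stmt14.G ν k, p, one_le_pow₀ hB1.le, hbNQ, ?_⟩
    have hθeq : (⟨k % 2, by omega⟩ : Fin 2) = i := Fin.ext (by simpa using hpar)
    have hyi : ∀ j, yy i j = (if k % 2 = 0 then Yf j else x j - Yf j) := by
      intro j
      by_cases hk2 : k % 2 = 0
      · have hi0 : i = 0 := by apply Fin.ext; omega
        rw [hi0, if_pos hk2]
        simp [hyy]
      · have hi1 : i = 1 := by apply Fin.ext; omega
        rw [hi1, if_neg hk2]
        simp [hyy]
    -- the chain bound
    set Gk := Stmt14.G ν k with hGk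
    set Gk2 := Stmt14.G ν (k+2) with hGk2
    set L := Stmt14.G ν (k+1) - Stmt14.G ν k with hLdef
    have hLlow : (ν i - 1) * (Gk:ℝ) ≤ (L:ℝ) := by
      have h6 := Stmt14.L_lower hν k
      rw [show (⟨k % 2, by omega⟩ : Fin 2) = i from hθeq] at h6
      have : ν i * (Gk:ℝ) - (Gk:ℝ) ≤ (L:ℝ) := h6
      linarith
    have hG2up : (Gk2:ℝ) ≤ Λ * (Gk:ℝ) + C := Stmt14.G2_upper hν k
    have hGkn₀ : n₀ ≤ Gk := by
      have h7 := Stmt14.G_ge hν k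
      omega
    have hA := hn₀ Gk hGkn₀
    have hconv : ((b:ℝ) ^ δ) ^ (Gk:ℕ) = (b:ℝ) ^ (δ * (Gk:ℝ)) := by
      rw [Real.rpow_mul hB0.le, Real.rpow_natCast]
    have h3c : 3 * (b:ℝ) ^ (w' * C) ≤ c' * (b:ℝ) ^ (δ * (Gk:ℝ)) := by
      rw [← hconv]
      have := (div_le_iff₀ hc').1 hA
      linarith
    have hexp : -(L:ℝ) ≤ w' * C - δ * (Gk:ℝ) - (Gk2:ℝ) * w' := by
      have h8 : w' * (Gk2:ℝ) ≤ w' * (Λ * (Gk:ℝ) + C) := mul_le_mul_of_nonneg_left hG2up hw'0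
      have h9 : δ * (Gk:ℝ) = (ν i - 1) * (Gk:ℝ) - w' * Λ * (Gk:ℝ) := by
        rw [hδdef]; ring
      nlinarith
    have hchain : 3 * ((b:ℝ)^(L:ℕ))⁻¹ ≤ c' * Q ^ (-w') := by
      have e1 : ((b:ℝ)^(L:ℕ))⁻¹ = (b:ℝ) ^ (-(L:ℝ)) := by
        rw [Real.rpow_neg hB0.le, Real.rpow_natCast]
      have step1 : (b:ℝ) ^ (-(L:ℝ)) ≤ (b:ℝ) ^ (w' * C - δ * (Gk:ℝ) - (Gk2:ℝ) * w') :=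
        Real.rpow_le_rpow_of_exponent_le hB1.le hexp
      have e2 : (b:ℝ) ^ (w' * C - δ * (Gk:ℝ) - (Gk2:ℝ) * w')
          = (b:ℝ) ^ (w' * C) * ((b:ℝ) ^ (δ * (Gk:ℝ)))⁻¹ * (b:ℝ) ^ (-((Gk2:ℝ) * w')) := by
        rw [show w' * C - δ * (Gk:ℝ) - (Gk2:ℝ) * w'
            = w' * C + (-(δ * (Gk:ℝ))) + (-((Gk2:ℝ) * w')) by ring,
          Real.rpow_add hB0, Real.rpow_add hB0, Real.rpow_neg hB0.le]
      have step2 : 3 * (b:ℝ) ^ (w' * C - δ * (Gk:ℝ) - (Gk2:ℝ) * w')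
          ≤ c' * (b:ℝ) ^ (-((Gk2:ℝ) * w')) := by
        rw [e2]
        have hpos1 : (0:ℝ) < (b:ℝ) ^ (δ * (Gk:ℝ)) := Real.rpow_pos_of_pos hB0 _
        have hpos2 : (0:ℝ) < (b:ℝ) ^ (-((Gk2:ℝ) * w')) := Real.rpow_pos_of_pos hB0 _
        calc 3 * ((b:ℝ) ^ (w' * C) * ((b:ℝ) ^ (δ * (Gk:ℝ)))⁻¹ * (b:ℝ) ^ (-((Gk2:ℝ) * w')))
            = (3 * (b:ℝ) ^ (w' * C)) * (((b:ℝ) ^ (δ * (Gk:ℝ)))⁻¹ * (b:ℝ) ^ (-((Gk2:ℝ) * w'))) := by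
              ring
          _ ≤ (c' * (b:ℝ) ^ (δ * (Gk:ℝ))) * (((b:ℝ) ^ (δ * (Gk:ℝ)))⁻¹ * (b:ℝ) ^ (-((Gk2:ℝ) * w'))) := by
              apply mul_le_mul_of_nonneg_right h3c
              positivity
          _ = c' * (b:ℝ) ^ (-((Gk2:ℝ) * w')) := by
              field_simp
      have step3 : c' * (b:ℝ) ^ (-((Gk2:ℝ) * w')) ≤ c' * Q ^ (-w') := by
        apply mul_le_mul_of_nonneg_left _ hc'.le
        rw [Real.rpow_neg hB0.le, Real.rpow_neg hQ0.le]
        apply inv_anti₀ (Real.rpow_pos_of_pos hQ0 _)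
        calc Q ^ w' ≤ ((b:ℝ)^(Gk2:ℕ)) ^ w' :=
              Real.rpow_le_rpow hQ0.le hup.le hw'0
          _ = (b:ℝ) ^ ((Gk2:ℝ) * w') := by
              rw [← Real.rpow_natCast (b:ℝ) Gk2, ← Real.rpow_mul hB0.le]
      calc 3 * ((b:ℝ)^(L:ℕ))⁻¹ = 3 * (b:ℝ) ^ (-(L:ℝ)) := by rw [e1]
        _ ≤ 3 * (b:ℝ) ^ (w' * C - δ * (Gk:ℝ) - (Gk2:ℝ) * w') := by
            apply mul_le_mul_of_nonneg_left step1 (by norm_num)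
        _ ≤ c' * (b:ℝ) ^ (-((Gk2:ℝ) * w')) := step2
        _ ≤ c' * Q ^ (-w') := step3
    rw [pi_norm_le_iff_of_nonneg (by positivity)]
    intro j
    rw [Real.norm_eq_abs]
    have hest := hp j
    rw [hθeq, ← hyi j] at hest
    exact le_trans hest hchain
  by_cases hw0 : 0 ≤ w
  · obtain ⟨Q₀, _, h⟩ := main w hw0 hw c hc
    exact ⟨Q₀, fun Q hQ => h Q hQ⟩
  · push_neg at hw0
    have hpos : (0:ℝ) < (ν i - 1) / (ν 0 * ν 1) := by
      apply div_pos _ hΛpos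
      have := hν i; linarith
    obtain ⟨Q₀, hQ₀1, h⟩ := main 0 le_rfl hpos c hc
    refine ⟨Q₀, fun Q hQ => ?_⟩
    obtain ⟨N, p, h1, h2, h3⟩ := h Q hQ
    refine ⟨N, p, h1, h2, ?_⟩
    have hQ1 : 1 ≤ Q := le_trans hQ₀1 hQ
    refine le_trans h3 ?_
    have e0 : c * Q ^ (-(0:ℝ)) = c := by norm_num
    rw [e0]
    calc c = c * 1 := (mul_one c).symm
      _ ≤ c * Q ^ (-w) := by
          apply mul_le_mul_of_nonneg_left _ hc.le
          rw [show (1:ℝ) = Q ^ (0:ℝ) from (Real.rpow_zero Q).symm]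
          exact Real.rpow_le_rpow_of_exponent_le hQ1 (by linarith)
end

section
/- Let m ≥ 1 and b ≥ 2. For every x ∈ ℝᵐ and every w ∈ (0,1), there exist x₀, x₁ ∈ ℝᵐ with x = x₀ + x₁ such that: (a) x₁ lies in 𝒮^{(b)}_m(w'), i.e., for every c > 0 and all large Q there exist a power q = bᴺ ≤ Q and p ∈ ℤᵐ with ‖q x₁ − p‖_∞ ≤ c Q^{−w'} for every w' < w; and (b) ω^{(b)}_m(x₀) ≥ 1/w − 1, i.e., for arbitrarily large t there is p ∈ ℤᵐ with ‖b^t x₀ − p‖_∞ ≤ (b^t)^{−(1/w − 1)}. -/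
noncomputable def rtr (B y : ℝ) (n : ℕ) : ℝ := ⌊B ^ n * y⌋ / B ^ n

lemma rtr_sub {B : ℝ} (hB : 2 ≤ B) (y : ℝ) (n : ℕ) : |y - rtr B y n| ≤ 1 / B ^ n := by
  have hBpos : (0:ℝ) < B ^ n := pow_pos (by linarith) n
  have h1 : B ^ n * y - ⌊B ^ n * y⌋ = Int.fract (B ^ n * y) := rfl
  have h2 : y - rtr B y n = Int.fract (B ^ n * y) / B ^ n := by
    rw [rtr, Int.fract, sub_div, mul_div_cancel_left₀ _ hBpos.ne']
  rw [h2, abs_of_nonneg (div_nonneg (Int.fract_nonneg _) hBpos.le)]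
  gcongr
  · exact (Int.fract_lt_one _).le

lemma rtr_int (b : ℕ) (hb : 1 ≤ b) (y : ℝ) {n N : ℕ} (h : n ≤ N) :
    ((b ^ (N - n) * ⌊(b:ℝ) ^ n * y⌋ : ℤ) : ℝ) = (b:ℝ) ^ N * rtr (b:ℝ) y n := by
  have hbpos : (0:ℝ) < (b:ℝ) ^ n := pow_pos (by exact_mod_cast hb) n
  have hpow : (b:ℝ) ^ N = (b:ℝ) ^ (N - n) * (b:ℝ) ^ n := by
    rw [← pow_add, Nat.sub_add_cancel h]
  rw [rtr, hpow]
  push_cast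
  field_simp

noncomputable def gpair (w : ℝ) : ℕ → ℕ × ℕ
  | 0 => (1, 3)
  | j+1 => (⌈((gpair w j).2 : ℝ) / w⌉₊ + 2, (j+4) * (⌈((gpair w j).2 : ℝ) / w⌉₊ + 2))

noncomputable def gA (w : ℝ) (j : ℕ) : ℕ := (gpair w j).1
noncomputable def gT (w : ℝ) (j : ℕ) : ℕ := (gpair w j).2

lemma one_le_gA (w : ℝ) (j : ℕ) : 1 ≤ gA w j := by
  cases j with
  | zero => exact le_refl 1
  | succ j => simp [gA, gpair]

lemma gT_eq (w : ℝ) (j : ℕ) : gT w j = (j + 3) * gA w j := by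
  cases j with
  | zero => rfl
  | succ j => rfl

lemma gA_lt_gT (w : ℝ) (j : ℕ) : gA w j < gT w j := by
  rw [gT_eq]
  calc gA w j = 1 * gA w j := (one_mul _).symm
  _ < (j + 3) * gA w j := by
      have h := one_le_gA w j; nlinarith

lemma gA_succ_ge (w : ℝ) (hw : 0 < w) (j : ℕ) :
    (gT w j : ℝ) / w + 2 ≤ (gA w (j+1) : ℝ) := by
  have h : gA w (j+1) = ⌈((gT w j : ℕ) : ℝ) / w⌉₊ + 2 := rfl
  have := Nat.le_ceil ((gT w j : ℝ) / w)
  rw [h]; push_cast; linarith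

lemma gA_succ_le (w : ℝ) (hw : 0 < w) (j : ℕ) :
    (gA w (j+1) : ℝ) ≤ (gT w j : ℝ) / w + 3 := by
  have h : gA w (j+1) = ⌈((gT w j : ℕ) : ℝ) / w⌉₊ + 2 := rfl
  have h2 := Nat.ceil_lt_add_one (div_nonneg (by positivity) hw.le : (0:ℝ) ≤ (gT w j : ℝ) / w)
  rw [h]; push_cast; linarith

lemma gT_lt_gA_succ (w : ℝ) (hw : 0 < w) (hw1 : w < 1) (j : ℕ) :
    gT w j < gA w (j+1) := by
  have h1 := gA_succ_ge w hw j
  have h2 : (gT w j : ℝ) ≤ (gT w j : ℝ) / w := by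
    rw [le_div_iff₀ hw]
    have h0 : (0:ℝ) ≤ (gT w j : ℝ) := by positivity
    nlinarith
  exact_mod_cast lt_of_le_of_lt (le_trans h2 (by linarith)) (by linarith : (gA w (j+1) : ℝ) - 2 < gA w (j+1))

lemma gA_strict (w : ℝ) (hw : 0 < w) (hw1 : w < 1) (j : ℕ) : gA w j < gA w (j+1) :=
  lt_trans (gA_lt_gT w j) (gT_lt_gA_succ w hw hw1 j)

lemma gT_strict (w : ℝ) (hw : 0 < w) (hw1 : w < 1) (j : ℕ) : gT w j < gT w (j+1) :=
  lt_trans (gT_lt_gA_succ w hw hw1 j) (gA_lt_gT w (j+1))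

lemma gA_add_le (w : ℝ) (hw : 0 < w) (hw1 : w < 1) (j k : ℕ) : gA w j + k ≤ gA w (j + k) := by
  induction k with
  | zero => simp
  | succ k ih =>
      have h := gA_strict w hw hw1 (j + k)
      have : j + (k+1) = (j+k)+1 := by omega
      rw [this]; omega

lemma gT_add_le (w : ℝ) (hw : 0 < w) (hw1 : w < 1) (j k : ℕ) : gT w j + k ≤ gT w (j + k) := by
  induction k with
  | zero => simp
  | succ k ih =>
      have h := gT_strict w hw hw1 (j + k)
      have : j + (k+1) = (j+k)+1 := by omega
      rw [this]; omega

lemma gA_ge (w : ℝ) (hw : 0 < w) (hw1 : w < 1) (j : ℕ) : j + 1 ≤ gA w j := by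
  have := gA_add_le w hw hw1 0 j
  simpa using (by have h := one_le_gA w 0; omega : j + 1 ≤ gA w 0 + j).trans this

lemma geom_tail {B : ℝ} (hB : 2 ≤ B) (u : ℕ → ℕ) (hu : ∀ k, u 0 + k ≤ u k)
    (f : ℕ → ℝ) (hf : ∀ k, |f k| ≤ 2 / B ^ (u k)) :
    Summable f ∧ |∑' k, f k| ≤ 4 / B ^ (u 0) := by
  have hB0 : (0:ℝ) < B := by linarith
  have hbd : ∀ k, |f k| ≤ (2 / B ^ (u 0)) * (1/2) ^ k := by
    intro k
    have h1 : B ^ (u 0) * 2 ^ k ≤ B ^ (u k) := by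
      calc B ^ (u 0) * 2 ^ k ≤ B ^ (u 0) * B ^ k := by gcongr <;> linarith
      _ = B ^ (u 0 + k) := (pow_add B _ _).symm
      _ ≤ B ^ (u k) := pow_le_pow_right₀ (by linarith) (hu k)
    have h2 : (2:ℝ) / B ^ (u k) ≤ 2 / (B ^ (u 0) * 2 ^ k) := by
      apply div_le_div_of_nonneg_left (by norm_num) (by positivity) h1
    calc |f k| ≤ 2 / B ^ (u k) := hf k
    _ ≤ 2 / (B ^ (u 0) * 2 ^ k) := h2
    _ = (2 / B ^ (u 0)) * (1/2) ^ k := by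
        rw [div_mul_eq_div_div, div_pow]
        ring
  have hg : Summable (fun k => (2 / B ^ (u 0)) * (1/2:ℝ) ^ k) :=
    (summable_geometric_of_lt_one (by norm_num) (by norm_num)).mul_left _
  have habs : Summable (fun k => |f k|) :=
    Summable.of_nonneg_of_le (fun k => abs_nonneg _) hbd hg
  have hsumf : Summable f := habs.of_abs
  refine ⟨hsumf, ?_⟩
  have hnorm : Summable (fun k => ‖f k‖) := by simpa only [Real.norm_eq_abs] using habs
  have hle := norm_tsum_le_tsum_norm hnorm
  simp only [Real.norm_eq_abs] at hle
  calc |∑' k, f k| ≤ ∑' k, |f k| := hle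
  _ ≤ ∑' k, (2 / B ^ (u 0)) * (1/2:ℝ) ^ k := Summable.tsum_le_tsum hbd habs hg
  _ = (2 / B ^ (u 0)) * ∑' k, (1/2:ℝ) ^ k := tsum_mul_left
  _ = (2 / B ^ (u 0)) * 2 := by
        rw [tsum_geometric_of_lt_one (by norm_num) (by norm_num)]
        norm_num
  _ = 4 / B ^ (u 0) := by ring

set_option maxHeartbeats 1600000

/-- Let `m ≥ 1`, `b ≥ 2`. For every `x ∈ ℝᵐ` and `w ∈ (0,1)` there exist `x₀, x₁` with
`x = x₀ + x₁` such that (a) `x₁ ∈ 𝒮^{(b)}_m(w)`: for every `w' < w` and every `c > 0`,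
for all large `Q` there are a power `q = bᴺ ≤ Q` and `p ∈ ℤᵐ` with
`‖q x₁ − p‖_∞ ≤ c Q^{−w'}`; and (b) `ω^{(b)}_m(x₀) ≥ 1/w − 1`: for arbitrarily large `t`
there is `p ∈ ℤᵐ` with `‖b^t x₀ − p‖_∞ ≤ (b^t)^{−(1/w − 1)}`. -/
theorem stmt_15 (m b : ℕ) (hm : 1 ≤ m) (hb : 2 ≤ b)
    (x : Fin m → ℝ) (w : ℝ) (hw : w ∈ Set.Ioo (0 : ℝ) 1) :
    ∃ x₀ x₁ : Fin m → ℝ, x = x₀ + x₁ ∧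
      (∀ w' : ℝ, w' < w → ∀ c : ℝ, 0 < c → ∃ Q₀ : ℝ, ∀ Q : ℝ, Q₀ ≤ Q →
        ∃ N : ℕ, ∃ p : Fin m → ℤ, (b : ℝ) ^ N ≤ Q ∧
          ‖(fun i => (b : ℝ) ^ N * x₁ i - (p i : ℝ))‖ ≤ c * Q ^ (-w')) ∧
      (∀ t₀ : ℕ, ∃ t : ℕ, t₀ ≤ t ∧ ∃ p : Fin m → ℤ,
        ‖(fun i => (b : ℝ) ^ t * x₀ i - (p i : ℝ))‖ ≤ ((b : ℝ) ^ t) ^ (-(1 / w - 1))) := by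
  classical
  obtain ⟨hw0, hw1⟩ := hw
  have hB : (2:ℝ) ≤ (b:ℝ) := by exact_mod_cast hb
  have hB0 : (0:ℝ) < (b:ℝ) := by linarith
  have hB1 : (1:ℝ) ≤ (b:ℝ) := by linarith
  -- truncations
  set r : Fin m → ℕ → ℝ := fun i n => rtr (b:ℝ) (x i) n with hr_def
  have hr : ∀ i n, |x i - r i n| ≤ 1 / (b:ℝ) ^ n := fun i n => rtr_sub hB (x i) n
  set d0 : Fin m → ℕ → ℝ := fun i j => r i (gT w j) - r i (gA w j) with hd0_def
  set d1 : Fin m → ℕ → ℝ := fun i j => r i (gA w (j+1)) - r i (gT w j) with hd1_def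
  have hAmono : Monotone (gA w) :=
    (strictMono_nat_of_lt_succ (gA_strict w hw0 hw1)).monotone
  have hTmono : Monotone (gT w) :=
    (strictMono_nat_of_lt_succ (gT_strict w hw0 hw1)).monotone
  have hpow_le : ∀ {n n' : ℕ}, n ≤ n' → (b:ℝ) ^ n ≤ (b:ℝ) ^ n' :=
    fun h => pow_le_pow_right₀ hB1 h
  have hd0bd : ∀ i j, |d0 i j| ≤ 2 / (b:ℝ) ^ (gA w j) := by
    intro i j
    have h1 := hr i (gT w j)
    have h2 := hr i (gA w j)
    have h3 : (1:ℝ) / (b:ℝ) ^ (gT w j) ≤ 1 / (b:ℝ) ^ (gA w j) := by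
      apply one_div_le_one_div_of_le (by positivity) (hpow_le (gA_lt_gT w j).le)
    have : |d0 i j| ≤ |r i (gT w j) - x i| + |x i - r i (gA w j)| := by
      rw [hd0_def]
      exact (abs_sub_le _ _ _).trans_eq (by rw [abs_sub_comm (r i (gT w j)) (x i)]) |>.trans_eq rfl
    rw [abs_sub_comm] at h1
    calc |d0 i j| ≤ |r i (gT w j) - x i| + |x i - r i (gA w j)| := this
    _ ≤ 1 / (b:ℝ) ^ (gT w j) + 1 / (b:ℝ) ^ (gA w j) := add_le_add h1 h2
    _ ≤ 2 / (b:ℝ) ^ (gA w j) := by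
        have h4 : (2:ℝ)/(b:ℝ)^(gA w j) = 1/(b:ℝ)^(gA w j) + 1/(b:ℝ)^(gA w j) := by ring
        linarith
  have hd1bd : ∀ i j, |d1 i j| ≤ 2 / (b:ℝ) ^ (gT w j) := by
    intro i j
    have h1 := hr i (gA w (j+1))
    have h2 := hr i (gT w j)
    have h3 : (1:ℝ) / (b:ℝ) ^ (gA w (j+1)) ≤ 1 / (b:ℝ) ^ (gT w j) := by
      apply one_div_le_one_div_of_le (by positivity) (hpow_le (gT_lt_gA_succ w hw0 hw1 j).le)
    rw [abs_sub_comm] at h1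
    calc |d1 i j| ≤ |r i (gA w (j+1)) - x i| + |x i - r i (gT w j)| := by
          rw [hd1_def]; exact abs_sub_le _ _ _
    _ ≤ 1 / (b:ℝ) ^ (gA w (j+1)) + 1 / (b:ℝ) ^ (gT w j) := add_le_add h1 h2
    _ ≤ 2 / (b:ℝ) ^ (gT w j) := by
        have h4 : (2:ℝ)/(b:ℝ)^(gT w j) = 1/(b:ℝ)^(gT w j) + 1/(b:ℝ)^(gT w j) := by ring
        linarith
  -- tails
  have htail1 : ∀ (i : Fin m) (j : ℕ), Summable (fun k => d1 i (k + j)) ∧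
      |∑' k, d1 i (k + j)| ≤ 4 / (b:ℝ) ^ (gT w j) := by
    intro i j
    have := geom_tail hB (fun k => gT w (k + j))
      (fun k => by simpa using gT_add_le w hw0 hw1 j k |>.trans_eq (by rw [Nat.add_comm j k]))
      (fun k => d1 i (k + j)) (fun k => hd1bd i (k + j))
    simpa using this
  have htail0 : ∀ (i : Fin m) (j : ℕ), Summable (fun k => d0 i (k + j)) ∧
      |∑' k, d0 i (k + j)| ≤ 4 / (b:ℝ) ^ (gA w j) := by
    intro i j
    have := geom_tail hB (fun k => gA w (k + j))
      (fun k => by simpa using gA_add_le w hw0 hw1 j k |>.trans_eq (by rw [Nat.add_comm j k]))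
      (fun k => d0 i (k + j)) (fun k => hd0bd i (k + j))
    simpa using this
  have hs1 : ∀ i, Summable (d1 i) := by
    intro i
    have := (htail1 i 0).1
    simpa using this
  have hs0 : ∀ i, Summable (d0 i) := by
    intro i
    have := (htail0 i 0).1
    simpa using this
  -- definition of the pieces
  refine ⟨fun i => r i (gA w 0) + ∑' j, d0 i j, fun i => ∑' j, d1 i j, ?_, ?_, ?_⟩
  · -- x = x₀ + x₁
    funext i
    have hsum : Summable (fun j => d0 i j + d1 i j) := (hs0 i).add (hs1 i)
    have hpart : ∀ n, ∑ j ∈ Finset.range n, (d0 i j + d1 i j)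
        = r i (gA w n) - r i (gA w 0) := by
      intro n
      have : ∀ j, d0 i j + d1 i j = r i (gA w (j+1)) - r i (gA w j) := by
        intro j; rw [hd0_def, hd1_def]; ring
      simp only [this]
      exact Finset.sum_range_sub (fun j => r i (gA w j)) n
    have htends : Filter.Tendsto (fun n => r i (gA w n)) Filter.atTop (nhds (x i)) := by
      have hz : Filter.Tendsto (fun n => r i (gA w n) - x i) Filter.atTop (nhds 0) := by
        have hg : Filter.Tendsto (fun n : ℕ => (1/2:ℝ) ^ n) Filter.atTop (nhds 0) :=
          tendsto_pow_atTop_nhds_zero_of_lt_one (by norm_num) (by norm_num)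
        apply squeeze_zero_norm _ hg
        intro n
        rw [Real.norm_eq_abs, abs_sub_comm]
        refine (hr i (gA w n)).trans ?_
        have h1 : (2:ℝ) ^ n ≤ (b:ℝ) ^ (gA w n) := by
          calc (2:ℝ) ^ n ≤ (2:ℝ) ^ (gA w n) :=
            pow_le_pow_right₀ (by norm_num) (by have := gA_ge w hw0 hw1 n; omega)
          _ ≤ (b:ℝ) ^ (gA w n) := by gcongr
        rw [div_pow, one_pow]
        exact one_div_le_one_div_of_le (by positivity) h1
      have := hz.add_const (x i)
      simpa using this
    have hlim : Filter.Tendsto (fun n => ∑ j ∈ Finset.range n, (d0 i j + d1 i j))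
        Filter.atTop (nhds (x i - r i (gA w 0))) := by
      simp only [hpart]
      exact htends.sub_const _
    have heq : ∑' j, (d0 i j + d1 i j) = x i - r i (gA w 0) :=
      tendsto_nhds_unique hsum.hasSum.tendsto_sum_nat hlim
    have hadd := Summable.tsum_add (hs0 i) (hs1 i)
    simp only [Pi.add_apply]
    linarith [heq, hadd]
  · -- part (a): singular part
    intro w' hw' c hc
    set w'' := max w' 0 with hw''_def
    have hw''0 : 0 ≤ w'' := le_max_right _ _
    have hw''w : w'' < w := max_lt hw' hw0
    have hw'w'' : w' ≤ w'' := le_max_left _ _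
    set θ := w'' / w with hθ_def
    have hθ0 : 0 ≤ θ := div_nonneg hw''0 hw0.le
    have hθ1 : θ < 1 := (div_lt_one hw0).mpr hw''w
    -- choose thresholds
    obtain ⟨J₁, hJ₁⟩ := exists_nat_ge (2 / (1 - θ))
    obtain ⟨J₂, hJ₂⟩ := exists_pow_lt_of_lt_one
      (show (0:ℝ) < c / (b:ℝ) ^ ((1:ℝ) + 3 * w'') by positivity) (by norm_num : (1/2:ℝ) < 1)
    set J := J₁ + J₂ with hJ_def
    -- key estimate for j ≥ J
    have hkey : ∀ j, J ≤ j →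
        (b:ℝ) ^ (((gA w j : ℝ) + 2 - (gT w j : ℝ)) + w'' * (gA w (j+1) : ℝ)) ≤ c := by
      intro j hj
      set aj := (gA w j : ℝ) with haj_def
      set tj := (gT w j : ℝ) with htj_def
      set a1 := (gA w (j+1) : ℝ) with ha1_def
      have haj0 : (0:ℝ) ≤ aj := by positivity
      have h1 : tj = ((j:ℝ) + 3) * aj := by
        rw [htj_def, haj_def, gT_eq]; push_cast; ring
      have h2 : a1 ≤ tj / w + 3 := gA_succ_le w hw0 j
      have h3 : (j:ℝ) + 1 ≤ aj := by
        rw [haj_def]; exact_mod_cast gA_ge w hw0 hw1 j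
      have h4 : w'' * a1 ≤ θ * tj + 3 * w'' := by
        have := mul_le_mul_of_nonneg_left h2 hw''0
        rw [hθ_def]
        calc w'' * a1 ≤ w'' * (tj / w + 3) := this
        _ = w'' / w * tj + 3 * w'' := by field_simp
      have hJ1j : (J₁ : ℝ) ≤ (j : ℝ) := by exact_mod_cast (by omega : J₁ ≤ j)
      have hstep : 2 ≤ (1 - θ) * ((j:ℝ) + 3) := by
        have h5 : 2 / (1 - θ) ≤ (j:ℝ) := le_trans hJ₁ hJ1j
        have h6 : (0:ℝ) < 1 - θ := by linarith
        rw [div_le_iff₀ h6] at h5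
        nlinarith
      have hstep2 : 2 * aj ≤ (1 - θ) * ((j:ℝ) + 3) * aj := by nlinarith
      have hE : (aj + 2 - tj) + w'' * a1 ≤ -(j:ℝ) + 1 + 3 * w'' := by
        have htheta_tj : (1 - θ) * tj = (1 - θ) * ((j:ℝ) + 3) * aj := by rw [h1]; ring
        nlinarith [h4, hstep2, h3, htheta_tj]
      have hJ2j : J₂ ≤ j := by omega
      calc (b:ℝ) ^ ((aj + 2 - tj) + w'' * a1)
          ≤ (b:ℝ) ^ (-(j:ℝ) + 1 + 3 * w'') :=
            Real.rpow_le_rpow_of_exponent_le hB1 hE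
      _ = (b:ℝ) ^ ((1:ℝ) + 3 * w'') * ((b:ℝ) ^ (j:ℝ))⁻¹ := by
            rw [← Real.rpow_neg hB0.le, ← Real.rpow_add hB0]; ring_nf
      _ ≤ (b:ℝ) ^ ((1:ℝ) + 3 * w'') * (1/2:ℝ) ^ j := by
            apply mul_le_mul_of_nonneg_left ?_ (Real.rpow_nonneg hB0.le _)
            rw [Real.rpow_natCast, div_pow, one_pow, inv_eq_one_div]
            apply one_div_le_one_div_of_le (by positivity)
            exact pow_le_pow_left₀ (by norm_num) hB j
      _ ≤ (b:ℝ) ^ ((1:ℝ) + 3 * w'') * (1/2:ℝ) ^ J₂ := by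
            apply mul_le_mul_of_nonneg_left ?_ (Real.rpow_nonneg hB0.le _)
            exact pow_le_pow_of_le_one (by norm_num) (by norm_num) hJ2j
      _ ≤ (b:ℝ) ^ ((1:ℝ) + 3 * w'') * (c / (b:ℝ) ^ ((1:ℝ) + 3 * w'')) := by
            apply mul_le_mul_of_nonneg_left hJ₂.le (Real.rpow_nonneg hB0.le _)
      _ = c := by field_simp
    -- growth bound for locating j
    have hgrow : ∀ j : ℕ, (j:ℝ) < (b:ℝ) ^ (gA w j) := by
      intro j
      have h1 : j < 2 ^ (gA w j) := lt_of_lt_of_le (Nat.lt_two_pow_self (n := j))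
        (Nat.pow_le_pow_right (by norm_num) (by have := gA_ge w hw0 hw1 j; omega))
      have h2 : (2:ℝ) ^ (gA w j) ≤ (b:ℝ) ^ (gA w j) := by gcongr
      calc (j:ℝ) < (2:ℝ) ^ (gA w j) := by exact_mod_cast h1
      _ ≤ (b:ℝ) ^ (gA w j) := h2
    refine ⟨(b:ℝ) ^ (gA w J), ?_⟩
    intro Q hQ
    have hQ1 : (1:ℝ) ≤ Q := le_trans (one_le_pow₀ hB1) hQ
    have hQ0 : (0:ℝ) < Q := by linarith
    set P : ℕ → Prop := fun j => (b:ℝ) ^ (gA w j) ≤ Q with hP_def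
    have hPJ : P J := hQ
    have hJfloor : J ≤ ⌊Q⌋₊ := Nat.le_floor (le_trans (hgrow J).le hQ)
    set j := Nat.findGreatest P ⌊Q⌋₊ with hj_def
    have hPj : P j := Nat.findGreatest_spec hJfloor hPJ
    have hJj : J ≤ j := Nat.le_findGreatest hJfloor hPJ
    have hnot : ¬ P (j+1) := by
      by_cases hc1 : j + 1 ≤ ⌊Q⌋₊
      · exact Nat.findGreatest_is_greatest (by omega) hc1
      · intro hcon
        have h1 : Q < (j:ℝ) + 1 := by
          have := Nat.lt_floor_add_one Q
          have h2 : (⌊Q⌋₊ : ℝ) ≤ (j:ℝ) := by exact_mod_cast (by omega : ⌊Q⌋₊ ≤ j)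
          linarith
        have h2 : ((j:ℝ) + 1) < (b:ℝ) ^ (gA w (j+1)) := by
          have := hgrow (j+1); push_cast at this ⊢; linarith
        have hcon' : (b:ℝ) ^ (gA w (j+1)) ≤ Q := hcon
        linarith
    have hQup : Q < (b:ℝ) ^ (gA w (j+1)) := not_le.mp hnot
    -- the integer points
    refine ⟨gA w j, fun i => ∑ k ∈ Finset.range j,
      ((b:ℤ) ^ (gA w j - gA w (k+1)) * ⌊(b:ℝ) ^ (gA w (k+1)) * x i⌋
        - (b:ℤ) ^ (gA w j - gT w k) * ⌊(b:ℝ) ^ (gT w k) * x i⌋), hPj, ?_⟩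
    rw [pi_norm_le_iff_of_nonneg (by positivity)]
    intro i
    have hpi : ((∑ k ∈ Finset.range j,
        ((b:ℤ) ^ (gA w j - gA w (k+1)) * ⌊(b:ℝ) ^ (gA w (k+1)) * x i⌋
          - (b:ℤ) ^ (gA w j - gT w k) * ⌊(b:ℝ) ^ (gT w k) * x i⌋) : ℤ) : ℝ)
        = (b:ℝ) ^ (gA w j) * ∑ k ∈ Finset.range j, d1 i k := by
      rw [Finset.mul_sum]
      push_cast
      apply Finset.sum_congr rfl
      intro k hk
      have hk' : k + 1 ≤ j := Finset.mem_range.mp hk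
      have e1 : ((b:ℝ)) ^ (gA w j - gA w (k+1)) * (⌊(b:ℝ) ^ (gA w (k+1)) * x i⌋ : ℝ)
          = (b:ℝ) ^ (gA w j) * r i (gA w (k+1)) := by
        have := rtr_int b (by omega) (x i) (hAmono hk')
        push_cast at this
        rw [← this]
      have e2 : ((b:ℝ)) ^ (gA w j - gT w k) * (⌊(b:ℝ) ^ (gT w k) * x i⌋ : ℝ)
          = (b:ℝ) ^ (gA w j) * r i (gT w k) := by
        have hle : gT w k ≤ gA w j := le_trans (gT_lt_gA_succ w hw0 hw1 k).le (hAmono hk')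
        have := rtr_int b (by omega) (x i) hle
        push_cast at this
        rw [← this]
      rw [e1, e2, hd1_def]
      ring
    simp only [Real.norm_eq_abs]
    rw [hpi]
    have hsplit : ∑' k, d1 i k = (∑ k ∈ Finset.range j, d1 i k) + ∑' k, d1 i (k + j) :=
      (Summable.sum_add_tsum_nat_add j (hs1 i)).symm
    have hdiff : (b:ℝ) ^ (gA w j) * (∑' k, d1 i k) - (b:ℝ) ^ (gA w j) * ∑ k ∈ Finset.range j, d1 i k
        = (b:ℝ) ^ (gA w j) * ∑' k, d1 i (k + j) := by
      rw [hsplit]; ring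
    rw [hdiff]
    have htb := (htail1 i j).2
    calc |(b:ℝ) ^ (gA w j) * ∑' k, d1 i (k + j)|
        = (b:ℝ) ^ (gA w j) * |∑' k, d1 i (k + j)| := by
          rw [abs_mul, abs_of_nonneg (by positivity)]
    _ ≤ (b:ℝ) ^ (gA w j) * (4 / (b:ℝ) ^ (gT w j)) := by gcongr
    _ ≤ (b:ℝ) ^ (((gA w j : ℝ) + 2 - (gT w j : ℝ))) := by
        have e3 : (b:ℝ) ^ (((gA w j : ℝ) + 2 - (gT w j : ℝ)))
            = (b:ℝ) ^ (gA w j) * ((b:ℝ) ^ (2:ℕ) / (b:ℝ) ^ (gT w j)) := by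
          rw [Real.rpow_sub hB0, Real.rpow_add hB0]
          rw [Real.rpow_natCast, show ((2:ℝ)) = ((2:ℕ):ℝ) by norm_num, Real.rpow_natCast,
            Real.rpow_natCast]
          ring
        rw [e3]
        gcongr
        nlinarith
    _ ≤ c * (b:ℝ) ^ (-(w'' * (gA w (j+1) : ℝ))) := by
        have e4 : (b:ℝ) ^ (((gA w j : ℝ) + 2 - (gT w j : ℝ)))
            = (b:ℝ) ^ ((((gA w j : ℝ) + 2 - (gT w j : ℝ)) + w'' * (gA w (j+1) : ℝ)))
              * (b:ℝ) ^ (-(w'' * (gA w (j+1) : ℝ))) := by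
          rw [← Real.rpow_add hB0]; ring_nf
        rw [e4]
        exact mul_le_mul_of_nonneg_right (hkey j hJj) (Real.rpow_nonneg hB0.le _)
    _ ≤ c * Q ^ (-w'') := by
        gcongr
        have : (b:ℝ) ^ (-(w'' * (gA w (j+1) : ℝ))) = ((b:ℝ) ^ (gA w (j+1))) ^ (-w'') := by
          rw [← Real.rpow_natCast (b:ℝ) (gA w (j+1)), ← Real.rpow_mul hB0.le]
          ring_nf
        rw [this]
        apply Real.rpow_le_rpow_of_nonpos hQ0 hQup.le (by linarith)
    _ ≤ c * Q ^ (-w') := by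
        exact mul_le_mul_of_nonneg_left
          (Real.rpow_le_rpow_of_exponent_le hQ1 (by linarith)) hc.le
  · -- part (b): the ordinary exponent part
    intro t₀
    refine ⟨gT w t₀, ?_, ?_⟩
    · have h1 := gA_ge w hw0 hw1 t₀
      have h2 := gA_lt_gT w t₀
      omega
    set j := t₀ with hj_def
    refine ⟨fun i => (b:ℤ) ^ (gT w j - gA w 0) * ⌊(b:ℝ) ^ (gA w 0) * x i⌋
      + ∑ k ∈ Finset.range (j+1),
        ((b:ℤ) ^ (gT w j - gT w k) * ⌊(b:ℝ) ^ (gT w k) * x i⌋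
          - (b:ℤ) ^ (gT w j - gA w k) * ⌊(b:ℝ) ^ (gA w k) * x i⌋), ?_⟩
    rw [pi_norm_le_iff_of_nonneg (by positivity)]
    intro i
    have hpi : (((b:ℤ) ^ (gT w j - gA w 0) * ⌊(b:ℝ) ^ (gA w 0) * x i⌋
        + ∑ k ∈ Finset.range (j+1),
          ((b:ℤ) ^ (gT w j - gT w k) * ⌊(b:ℝ) ^ (gT w k) * x i⌋
            - (b:ℤ) ^ (gT w j - gA w k) * ⌊(b:ℝ) ^ (gA w k) * x i⌋) : ℤ) : ℝ)
        = (b:ℝ) ^ (gT w j) * (r i (gA w 0) + ∑ k ∈ Finset.range (j+1), d0 i k) := by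
      have e0 : ((b:ℝ)) ^ (gT w j - gA w 0) * (⌊(b:ℝ) ^ (gA w 0) * x i⌋ : ℝ)
          = (b:ℝ) ^ (gT w j) * r i (gA w 0) := by
        have hle : gA w 0 ≤ gT w j := le_trans (hAmono (Nat.zero_le j)) (gA_lt_gT w j).le
        have := rtr_int b (by omega) (x i) hle
        push_cast at this
        rw [← this]
      rw [mul_add, Finset.mul_sum]
      push_cast
      rw [e0]
      congr 1
      apply Finset.sum_congr rfl
      intro k hk
      have hk' : k ≤ j := by have := Finset.mem_range.mp hk; omega
      have e1 : ((b:ℝ)) ^ (gT w j - gT w k) * (⌊(b:ℝ) ^ (gT w k) * x i⌋ : ℝ)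
          = (b:ℝ) ^ (gT w j) * r i (gT w k) := by
        have := rtr_int b (by omega) (x i) (hTmono hk')
        push_cast at this
        rw [← this]
      have e2 : ((b:ℝ)) ^ (gT w j - gA w k) * (⌊(b:ℝ) ^ (gA w k) * x i⌋ : ℝ)
          = (b:ℝ) ^ (gT w j) * r i (gA w k) := by
        have hle : gA w k ≤ gT w j := le_trans (hAmono hk') (gA_lt_gT w j).le
        have := rtr_int b (by omega) (x i) hle
        push_cast at this
        rw [← this]
      rw [e1, e2, hd0_def]
      ring
    simp only [Real.norm_eq_abs]
    rw [hpi]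
    have hsplit : ∑' k, d0 i k = (∑ k ∈ Finset.range (j+1), d0 i k) + ∑' k, d0 i (k + (j+1)) :=
      (Summable.sum_add_tsum_nat_add (j+1) (hs0 i)).symm
    have hdiff : (b:ℝ) ^ (gT w j) * (r i (gA w 0) + ∑' k, d0 i k)
        - (b:ℝ) ^ (gT w j) * (r i (gA w 0) + ∑ k ∈ Finset.range (j+1), d0 i k)
        = (b:ℝ) ^ (gT w j) * ∑' k, d0 i (k + (j+1)) := by
      rw [hsplit]; ring
    rw [hdiff]
    have htb := (htail0 i (j+1)).2
    have hkey2 : (gT w j : ℝ) / w + 2 ≤ (gA w (j+1) : ℝ) := gA_succ_ge w hw0 j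
    calc |(b:ℝ) ^ (gT w j) * ∑' k, d0 i (k + (j+1))|
        = (b:ℝ) ^ (gT w j) * |∑' k, d0 i (k + (j+1))| := by
          rw [abs_mul, abs_of_nonneg (by positivity)]
    _ ≤ (b:ℝ) ^ (gT w j) * (4 / (b:ℝ) ^ (gA w (j+1))) := by gcongr
    _ ≤ (b:ℝ) ^ (((gT w j : ℝ) + 2 - (gA w (j+1) : ℝ))) := by
        have e3 : (b:ℝ) ^ (((gT w j : ℝ) + 2 - (gA w (j+1) : ℝ)))
            = (b:ℝ) ^ (gT w j) * ((b:ℝ) ^ (2:ℕ) / (b:ℝ) ^ (gA w (j+1))) := by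
          rw [Real.rpow_sub hB0, Real.rpow_add hB0]
          rw [Real.rpow_natCast, show ((2:ℝ)) = ((2:ℕ):ℝ) by norm_num, Real.rpow_natCast,
            Real.rpow_natCast]
          ring
        rw [e3]
        gcongr
        nlinarith
    _ ≤ ((b:ℝ) ^ (gT w j)) ^ (-(1 / w - 1)) := by
        rw [← Real.rpow_natCast (b:ℝ) (gT w j), ← Real.rpow_mul hB0.le]
        apply Real.rpow_le_rpow_of_exponent_le hB1
        have hgt0 : (0:ℝ) ≤ (gT w j : ℝ) := by positivity
        have : (gT w j : ℝ) * (-(1 / w - 1)) = (gT w j : ℝ) - (gT w j : ℝ) / w := by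
          field_simp; ring
        rw [this]
        linarith
end

section
/- Let m ≥ 1, b ≥ 2, and let Θ = {θ₁, θ₂, …} ⊆ ℝᵐ be a countable set. Then the set of x ∈ ℝᵐ such that ω^{(b)}_{m,θ}(x) = ∞ for every θ ∈ Θ is comeagre in ℝᵐ; in particular it is nonempty and dense. -/
open Filter

private lemma aux_open_dense (m b : ℕ) (hb : 2 ≤ b) (θ : Fin m → ℝ) (n t₀ : ℕ) :
    {x : Fin m → ℝ | ∃ t : ℕ, t₀ ≤ t ∧ ∃ p : Fin m → ℤ,
        ‖(fun i => (b : ℝ) ^ t * x i - (p i : ℝ) - θ i)‖ < ((b : ℝ) ^ t) ^ (-(n : ℝ))}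
      ∈ residual (Fin m → ℝ) := by
  have hb1 : (1 : ℝ) < (b : ℝ) := by exact_mod_cast Nat.lt_of_lt_of_le one_lt_two hb
  have hb0 : (0 : ℝ) < (b : ℝ) := lt_trans one_pos hb1
  refine residual_of_dense_open ?_ ?_
  · -- open
    have : {x : Fin m → ℝ | ∃ t : ℕ, t₀ ≤ t ∧ ∃ p : Fin m → ℤ,
        ‖(fun i => (b : ℝ) ^ t * x i - (p i : ℝ) - θ i)‖ < ((b : ℝ) ^ t) ^ (-(n : ℝ))}
        = ⋃ t : ℕ, ⋃ _ : t₀ ≤ t, ⋃ p : Fin m → ℤ,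
          {x : Fin m → ℝ | ‖(fun i => (b : ℝ) ^ t * x i - (p i : ℝ) - θ i)‖
            < ((b : ℝ) ^ t) ^ (-(n : ℝ))} := by
      ext x; simp [Set.mem_iUnion]
    rw [this]
    refine isOpen_iUnion fun t => isOpen_iUnion fun _ => isOpen_iUnion fun p => ?_
    have hc : Continuous fun x : Fin m → ℝ =>
        ‖(fun i => (b : ℝ) ^ t * x i - (p i : ℝ) - θ i)‖ := by
      refine Continuous.norm ?_
      exact continuous_pi fun i => ((continuous_const.mul (continuous_apply i)).sub
        continuous_const).sub continuous_const
    exact isOpen_lt hc continuous_const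
  · -- dense
    rw [Metric.dense_iff]
    intro x ε hε
    obtain ⟨T, hT⟩ := pow_unbounded_of_one_lt (1 / ε) hb1
    set t := max t₀ T with ht
    have hbt : (0 : ℝ) < (b : ℝ) ^ t := pow_pos hb0 t
    have hbtT : (b : ℝ) ^ T ≤ (b : ℝ) ^ t := pow_le_pow_right₀ hb1.le (le_max_right _ _)
    set p : Fin m → ℤ := fun i => ⌊(b : ℝ) ^ t * x i - θ i⌋ with hp
    set y : Fin m → ℝ := fun i => ((p i : ℝ) + θ i) / (b : ℝ) ^ t with hy
    refine ⟨y, ?_, t, le_max_left _ _, p, ?_⟩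
    · rw [Metric.mem_ball, dist_pi_lt_iff hε]
      intro i
      have hfr : Int.fract ((b : ℝ) ^ t * x i - θ i)
          = (b : ℝ) ^ t * x i - θ i - (p i : ℝ) := by
        rw [hp, Int.fract]
      have : y i - x i = -(Int.fract ((b : ℝ) ^ t * x i - θ i)) / (b : ℝ) ^ t := by
        rw [hy, hfr]
        field_simp
        ring
      rw [Real.dist_eq, this]
      rw [abs_div, abs_neg, abs_of_pos hbt]
      rw [div_lt_iff₀ hbt]
      calc |Int.fract ((b : ℝ) ^ t * x i - θ i)| < 1 := by
            rw [abs_of_nonneg (Int.fract_nonneg _)]; exact Int.fract_lt_one _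
        _ ≤ ε * (b : ℝ) ^ t := by
            have h1 : 1 / ε < (b : ℝ) ^ t := lt_of_lt_of_le hT hbtT
            rw [div_lt_iff₀ hε] at h1
            linarith [h1]
    · have hzero : (fun i => (b : ℝ) ^ t * y i - (p i : ℝ) - θ i) = 0 := by
        funext i
        rw [hy]
        field_simp
        simp only [Pi.zero_apply]; ring
      rw [hzero, norm_zero]
      exact Real.rpow_pos_of_pos hbt _

/-- For `m ≥ 1`, `b ≥ 2` and a countable set `Θ ⊆ ℝᵐ`, the set of `x ∈ ℝᵐ` with
`ω^{(b)}_{m,θ}(x) = ∞` for every `θ ∈ Θ` (i.e. for every `N > 0` there are arbitrarily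
large `t` and `p ∈ ℤᵐ` with `‖b^t x − p − θ‖_∞ ≤ (b^t)^{−N}`) is comeagre in `ℝᵐ`;
in particular it is nonempty and dense. -/
theorem stmt_18 (m b : ℕ) (hm : 1 ≤ m) (hb : 2 ≤ b)
    (Θ : Set (Fin m → ℝ)) (hΘ : Θ.Countable) :
    {x : Fin m → ℝ | ∀ θ ∈ Θ, ∀ N : ℝ, 0 < N → ∀ t₀ : ℕ, ∃ t : ℕ, t₀ ≤ t ∧
        ∃ p : Fin m → ℤ,
          ‖(fun i => (b : ℝ) ^ t * x i - (p i : ℝ) - θ i)‖ ≤ ((b : ℝ) ^ t) ^ (-N)}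
      ∈ residual (Fin m → ℝ) ∧
    {x : Fin m → ℝ | ∀ θ ∈ Θ, ∀ N : ℝ, 0 < N → ∀ t₀ : ℕ, ∃ t : ℕ, t₀ ≤ t ∧
        ∃ p : Fin m → ℤ,
          ‖(fun i => (b : ℝ) ^ t * x i - (p i : ℝ) - θ i)‖ ≤ ((b : ℝ) ^ t) ^ (-N)}.Nonempty ∧
    Dense {x : Fin m → ℝ | ∀ θ ∈ Θ, ∀ N : ℝ, 0 < N → ∀ t₀ : ℕ, ∃ t : ℕ, t₀ ≤ t ∧
        ∃ p : Fin m → ℤ,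
          ‖(fun i => (b : ℝ) ^ t * x i - (p i : ℝ) - θ i)‖ ≤ ((b : ℝ) ^ t) ^ (-N)} := by
  have hb1 : (1 : ℝ) ≤ (b : ℝ) := by exact_mod_cast Nat.le_of_lt (Nat.lt_of_lt_of_le one_lt_two hb)
  have hkey : {x : Fin m → ℝ | ∀ θ ∈ Θ, ∀ N : ℝ, 0 < N → ∀ t₀ : ℕ, ∃ t : ℕ, t₀ ≤ t ∧
        ∃ p : Fin m → ℤ,
          ‖(fun i => (b : ℝ) ^ t * x i - (p i : ℝ) - θ i)‖ ≤ ((b : ℝ) ^ t) ^ (-N)}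
      ∈ residual (Fin m → ℝ) := by
    have hmem : (⋂ θ ∈ Θ, ⋂ n : ℕ, ⋂ t₀ : ℕ,
        {x : Fin m → ℝ | ∃ t : ℕ, t₀ ≤ t ∧ ∃ p : Fin m → ℤ,
          ‖(fun i => (b : ℝ) ^ t * x i - (p i : ℝ) - θ i)‖ < ((b : ℝ) ^ t) ^ (-(n : ℝ))})
        ∈ residual (Fin m → ℝ) := by
      refine (countable_bInter_mem hΘ).mpr fun θ hθ => ?_
      exact countable_iInter_mem.mpr fun n => countable_iInter_mem.mpr fun t₀ =>
        aux_open_dense m b hb θ n t₀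
    refine mem_of_superset hmem ?_
    intro x hx θ hθ N hN t₀
    simp only [Set.mem_iInter] at hx
    obtain ⟨t, ht, p, hp⟩ := hx θ hθ ⌈N⌉₊ t₀
    refine ⟨t, ht, p, hp.le.trans ?_⟩
    refine Real.rpow_le_rpow_of_exponent_le (one_le_pow₀ hb1) ?_
    exact neg_le_neg (Nat.le_ceil N)
  exact ⟨hkey, (dense_of_mem_residual hkey).nonempty, dense_of_mem_residual hkey⟩
end

section
/- There exist subsets A, B of ℝᵐ such that A + A = B + B = ℝᵐ while the Hausdorff dimension of A + B is strictly less than m. -/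
open Filter Set MeasureTheory Topology

noncomputable section

/-- Value of a base-6 digit sequence. -/
def gval (d : ℕ → ℕ) : ℝ := ∑' i, (d i : ℝ) * (6:ℝ)⁻¹ ^ (i+1)

lemma summable_digit {d : ℕ → ℕ} {c : ℕ} (hd : ∀ i, d i ≤ c) :
    Summable (fun i => (d i : ℝ) * (6:ℝ)⁻¹ ^ (i+1)) := by
  refine Summable.of_nonneg_of_le (fun i => by positivity)
    (fun i => ?_)
    (((summable_geometric_of_lt_one (by norm_num) (by norm_num)).mul_left
      ((c:ℝ) * 6⁻¹)) : Summable (fun i => ((c:ℝ) * 6⁻¹) * (6:ℝ)⁻¹ ^ i))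
  have : (d i : ℝ) ≤ c := by exact_mod_cast hd i
  calc (d i : ℝ) * (6:ℝ)⁻¹ ^ (i+1) ≤ (c:ℝ) * (6:ℝ)⁻¹ ^ (i+1) := by
        apply mul_le_mul_of_nonneg_right this (by positivity)
    _ = ((c:ℝ) * 6⁻¹) * (6:ℝ)⁻¹ ^ i := by ring

lemma gval_nonneg (d : ℕ → ℕ) : 0 ≤ gval d :=
  tsum_nonneg (fun i => by positivity)

lemma gval_le {d : ℕ → ℕ} {c : ℕ} (hd : ∀ i, d i ≤ c) : gval d ≤ c / 5 := by
  have h1 : gval d ≤ ∑' i, ((c:ℝ) * 6⁻¹) * (6:ℝ)⁻¹ ^ i := by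
    apply Summable.tsum_le_tsum _ (summable_digit hd)
      ((summable_geometric_of_lt_one (by norm_num) (by norm_num)).mul_left _)
    intro i
    have : (d i : ℝ) ≤ c := by exact_mod_cast hd i
    calc (d i : ℝ) * (6:ℝ)⁻¹ ^ (i+1) ≤ (c:ℝ) * (6:ℝ)⁻¹ ^ (i+1) :=
          mul_le_mul_of_nonneg_right this (by positivity)
      _ = ((c:ℝ) * 6⁻¹) * (6:ℝ)⁻¹ ^ i := by ring
  rw [tsum_mul_left, tsum_geometric_of_lt_one (by norm_num) (by norm_num)] at h1
  calc gval d ≤ (c * 6⁻¹) * (1 - 6⁻¹)⁻¹ := h1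
    _ = c / 5 := by norm_num; ring

lemma gval_trunc {d : ℕ → ℕ} {c : ℕ} (hd : ∀ i, d i ≤ c) (N : ℕ) :
    gval d = (∑ i ∈ Finset.range N, (d i : ℝ) * (6:ℝ)⁻¹ ^ (i+1))
      + (6:ℝ)⁻¹ ^ N * gval (fun i => d (i + N)) := by
  have hs := summable_digit hd
  rw [gval, ← Summable.sum_add_tsum_nat_add N hs]
  congr 1
  rw [gval, ← tsum_mul_left]
  congr 1
  funext i
  have : (6:ℝ)⁻¹ ^ (i + N + 1) = (6:ℝ)⁻¹ ^ N * (6:ℝ)⁻¹ ^ (i+1) := by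
    rw [← pow_add]; ring_nf
  rw [this]; ring

lemma gval_trunc_bound {d : ℕ → ℕ} {c : ℕ} (hd : ∀ i, d i ≤ c) (N : ℕ) :
    |gval d - ∑ i ∈ Finset.range N, (d i : ℝ) * (6:ℝ)⁻¹ ^ (i+1)| ≤ (c / 5) * (6:ℝ)⁻¹ ^ N := by
  rw [gval_trunc hd N]
  rw [add_sub_cancel_left]
  have hnn : (0:ℝ) ≤ (6:ℝ)⁻¹ ^ N * gval (fun i => d (i + N)) :=
    mul_nonneg (by positivity) (gval_nonneg _)
  rw [abs_of_nonneg hnn]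
  rw [mul_comm ((c:ℝ)/5)]
  exact mul_le_mul_of_nonneg_left (gval_le (fun i => hd (i + N))) (by positivity)

lemma gval_add {d e : ℕ → ℕ} {c c' : ℕ} (hd : ∀ i, d i ≤ c) (he : ∀ i, e i ≤ c') :
    gval (fun i => d i + e i) = gval d + gval e := by
  rw [gval, gval, gval, ← Summable.tsum_add (summable_digit hd) (summable_digit he)]
  congr 1; funext i; push_cast; ring

/-- Base-6 digit expansion of a real in `[0,1)`. -/
lemma exists_digits (x : ℝ) (h0 : 0 ≤ x) (h1 : x < 1) :
    ∃ d : ℕ → ℕ, (∀ i, d i ≤ 5) ∧ gval d = x := by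
  set D : ℕ → ℤ := fun n => ⌊x * 6 ^ n⌋ with hD
  have key : ∀ n, 6 * D n ≤ D (n+1) ∧ D (n+1) ≤ 6 * D n + 5 := by
    intro n
    constructor
    · have : (6 * D n : ℝ) ≤ x * 6 ^ (n+1) := by
        have := Int.floor_le (x * 6 ^ n)
        push_cast
        calc (6 : ℝ) * ⌊x * 6 ^ n⌋ ≤ 6 * (x * 6 ^ n) := by linarith
          _ = x * 6 ^ (n+1) := by ring
      exact_mod_cast Int.le_floor.2 (by exact_mod_cast this)
    · have : x * 6 ^ (n+1) < (6 * D n + 6 : ℝ) := by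
        have := Int.lt_floor_add_one (x * 6 ^ n)
        push_cast
        calc x * 6 ^ (n+1) = 6 * (x * 6 ^ n) := by ring
          _ < 6 * (⌊x * 6 ^ n⌋ + 1) := by linarith
          _ = 6 * ⌊x * 6 ^ n⌋ + 6 := by ring
      have h' : D (n+1) < 6 * D n + 6 := by
        have h2 : ⌊x * 6 ^ (n+1)⌋ < 6 * D n + 6 :=
          Int.floor_lt.2 (by push_cast; linarith [this])
        exact h2
      omega
  refine ⟨fun n => (D (n+1) - 6 * D n).toNat, fun n => ?_, ?_⟩
  · show (D (n+1) - 6 * D n).toNat ≤ 5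
    have := key n; omega
  · set d : ℕ → ℕ := fun n => (D (n+1) - 6 * D n).toNat with hd
    have hd5 : ∀ i, d i ≤ 5 := fun i => by
      show (D (i+1) - 6 * D i).toNat ≤ 5
      have := key i; omega
    have hD0 : D 0 = 0 := by
      simp only [hD, pow_zero, mul_one]
      rw [Int.floor_eq_zero_iff]
      exact ⟨h0, h1⟩
    have hcast : ∀ i, ((d i : ℝ)) = (D (i+1) : ℝ) - 6 * (D i : ℝ) := by
      intro i
      have := key i
      have : (d i : ℤ) = D (i+1) - 6 * D i := by
        show ((D (i+1) - 6 * D i).toNat : ℤ) = D (i+1) - 6 * D i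
        have := key i; omega
      exact_mod_cast congrArg (fun z : ℤ => (z : ℝ)) this
    have hpart : ∀ n, ∑ i ∈ Finset.range n, ((d i : ℝ)) * (6:ℝ)⁻¹ ^ (i+1)
        = (D n : ℝ) * (6:ℝ)⁻¹ ^ n := by
      intro n
      induction n with
      | zero => simp [hD0]
      | succ n ih =>
        rw [Finset.sum_range_succ, ih, hcast n]
        have h6 : (6:ℝ)⁻¹ ^ n = 6 * (6:ℝ)⁻¹ ^ (n+1) := by
          rw [pow_succ]; ring
        rw [h6]; ring
    have hsum := summable_digit hd5
    have hlim1 : Tendsto (fun n => ∑ i ∈ Finset.range n, ((d i : ℝ)) * (6:ℝ)⁻¹ ^ (i+1))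
        atTop (𝓝 (gval d)) := hsum.hasSum.tendsto_sum_nat
    have hbound : ∀ n, ‖(D n : ℝ) * (6:ℝ)⁻¹ ^ n - x‖ ≤ (6:ℝ)⁻¹ ^ n := by
      intro n
      have hle : (D n : ℝ) ≤ x * 6 ^ n := Int.floor_le _
      have hlt : x * 6 ^ n < D n + 1 := Int.lt_floor_add_one _
      have hpow : (0:ℝ) < 6 ^ n := by positivity
      have hinv : ((6:ℝ)⁻¹) ^ n = ((6:ℝ) ^ n)⁻¹ := by rw [inv_pow]
      have hA : (D n : ℝ) * ((6:ℝ)^n)⁻¹ ≤ x := by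
        have := mul_le_mul_of_nonneg_right hle (le_of_lt (inv_pos.2 hpow))
        calc (D n : ℝ) * ((6:ℝ)^n)⁻¹ ≤ (x * 6^n) * ((6:ℝ)^n)⁻¹ := this
          _ = x := by field_simp
      have hB : x < ((D n : ℝ) + 1) * ((6:ℝ)^n)⁻¹ := by
        have := mul_lt_mul_of_pos_right hlt (inv_pos.2 hpow)
        calc x = (x * 6^n) * ((6:ℝ)^n)⁻¹ := by field_simp
          _ < ((D n : ℝ) + 1) * ((6:ℝ)^n)⁻¹ := this
      have hC : ((D n : ℝ) + 1) * ((6:ℝ)^n)⁻¹ - (D n : ℝ) * ((6:ℝ)^n)⁻¹ = ((6:ℝ)^n)⁻¹ := by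
        ring
      rw [Real.norm_eq_abs, abs_le, hinv]
      constructor <;> linarith
    have hlim2 : Tendsto (fun n => (D n : ℝ) * (6:ℝ)⁻¹ ^ n) atTop (𝓝 x) := by
      have h0' : Tendsto (fun n => (D n : ℝ) * (6:ℝ)⁻¹ ^ n - x) atTop (𝓝 0) :=
        squeeze_zero_norm hbound
          (tendsto_pow_atTop_nhds_zero_of_lt_one (by norm_num) (by norm_num))
      have := h0'.add_const x
      simpa using this
    have : Tendsto (fun n => ∑ i ∈ Finset.range n, ((d i : ℝ)) * (6:ℝ)⁻¹ ^ (i+1))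
        atTop (𝓝 x) := by
      simp only [hpart]
      exact hlim2
    exact tendsto_nhds_unique hlim1 this
open scoped Pointwise

/-- Digit set: reals whose base-6 digits are at most `c` and supported on `T`. -/
def digSet (T : Set ℕ) (c : ℕ) : Set ℝ :=
  {x | ∃ d : ℕ → ℕ, (∀ i, d i ≤ c) ∧ (∀ i, i ∉ T → d i = 0) ∧ x = gval d}

def IntS : Set ℝ := Set.range ((↑·) : ℤ → ℝ)

/-- block index of a position -/
def bk (i : ℕ) : ℕ := Nat.findGreatest (fun k => Nat.factorial k ≤ i) i

def Ee : Set ℕ := {i | Even (bk i)}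

def Aone : Set ℝ := IntS + (digSet Ee 5 ∪ digSet Eeᶜ 5)
def Bone : Set ℝ := IntS + digSet Set.univ 3

lemma Aone_add : Aone + Aone = Set.univ := by
  apply Set.eq_univ_of_forall
  intro x
  obtain ⟨d, hd5, hdx⟩ := exists_digits (Int.fract x) (Int.fract_nonneg x) (Int.fract_lt_one x)
  classical
  set d1 : ℕ → ℕ := fun i => if i ∈ Ee then d i else 0 with hd1
  set d2 : ℕ → ℕ := fun i => if i ∈ Ee then 0 else d i with hd2
  have hsplit : (fun i => d1 i + d2 i) = d := by
    funext i; simp only [hd1, hd2]; split <;> simp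
  have hg : gval d1 + gval d2 = Int.fract x := by
    rw [← gval_add (c := 5) (c' := 5) (fun i => by simp only [hd1]; split <;> simp [hd5 i])
      (fun i => by simp only [hd2]; split <;> simp [hd5 i]), hsplit, hdx]
  refine ⟨(⌊x⌋ : ℝ) + gval d1, ?_, gval d2, ?_, ?_⟩
  · exact ⟨(⌊x⌋ : ℝ), ⟨⌊x⌋, rfl⟩, gval d1,
      Or.inl ⟨d1, fun i => by simp only [hd1]; split <;> simp [hd5 i],
        fun i hi => by simp [hd1, hi], rfl⟩, rfl⟩
  · refine ⟨(0:ℝ), ⟨0, by simp⟩, gval d2,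
      Or.inr ⟨d2, fun i => by simp only [hd2]; split <;> simp [hd5 i],
        fun i hi => by simp only [hd2, Set.mem_compl_iff, not_not] at hi ⊢; simp [hi], rfl⟩,
      by simp⟩
  · show (⌊x⌋ : ℝ) + gval d1 + gval d2 = x
    rw [add_assoc, hg]
    linarith [Int.fract_add_floor x]

lemma Bone_add : Bone + Bone = Set.univ := by
  apply Set.eq_univ_of_forall
  intro x
  obtain ⟨d, hd5, hdx⟩ := exists_digits (Int.fract x) (Int.fract_nonneg x) (Int.fract_lt_one x)
  set e : ℕ → ℕ := fun i => d i - d i / 2 with he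
  set f : ℕ → ℕ := fun i => d i / 2 with hf
  have he3 : ∀ i, e i ≤ 3 := fun i => by have := hd5 i; simp only [he]; omega
  have hf3 : ∀ i, f i ≤ 3 := fun i => by have := hd5 i; simp only [hf]; omega
  have hsplit : (fun i => e i + f i) = d := by funext i; simp only [he, hf]; omega
  have hg : gval e + gval f = Int.fract x := by
    rw [← gval_add (c := 3) (c' := 3) he3 hf3, hsplit, hdx]
  refine ⟨(⌊x⌋ : ℝ) + gval e, ⟨(⌊x⌋ : ℝ), ⟨⌊x⌋, rfl⟩, gval e,
      ⟨e, he3, fun i hi => absurd (Set.mem_univ i) hi, rfl⟩, rfl⟩,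
    gval f, ⟨(0:ℝ), ⟨0, by simp⟩, gval f,
      ⟨f, hf3, fun i hi => absurd (Set.mem_univ i) hi, rfl⟩, by simp⟩, ?_⟩
  show (⌊x⌋ : ℝ) + gval e + gval f = x
  rw [add_assoc, hg]
  linarith [Int.fract_add_floor x]
section PiLemmas

open scoped Classical

variable {m : ℕ}

lemma pi_add_eq_univ (S T : Set ℝ) (h : S + T = Set.univ) :
    (Set.univ.pi fun _ : Fin m => S) + (Set.univ.pi fun _ : Fin m => T) = Set.univ := by
  apply Set.eq_univ_of_forall
  intro x
  have h' : ∀ j : Fin m, ∃ a b : ℝ, a ∈ S ∧ b ∈ T ∧ a + b = x j := by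
    intro j
    have : x j ∈ S + T := h ▸ Set.mem_univ _
    obtain ⟨a, ha, b, hb, hab⟩ := this
    exact ⟨a, b, ha, hb, hab⟩
  choose a b ha hb hab using h'
  exact ⟨a, fun j _ => ha j, b, fun j _ => hb j, funext hab⟩

lemma bk_eq {K i : ℕ} (hK : 2 ≤ K) (h1 : (K-1).factorial ≤ i) (h2 : i < K.factorial) :
    bk i = K - 1 := by
  rw [bk, Nat.findGreatest_eq_iff]
  refine ⟨le_trans (Nat.self_le_factorial _) h1, fun _ => h1, fun n hn hni hP => ?_⟩
  have hKn : K ≤ n := by omega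
  exact absurd (le_trans (Nat.factorial_le hKn) hP) (not_le.2 h2)

lemma count_small {K : ℕ} (hK : 2 ≤ K) {T : Set ℕ}
    (hT : ∀ i, (K-1).factorial ≤ i → i < K.factorial → i ∉ T) :
    (Finset.univ.filter (fun i : Fin (K.factorial) => (i:ℕ) ∈ T)).card
      ≤ (K-1).factorial := by
  have : (Finset.univ.filter (fun i : Fin (K.factorial) => (i:ℕ) ∈ T)).card
      ≤ (Finset.range ((K-1).factorial)).card := by
    refine Finset.card_le_card_of_injOn (fun i => (i : ℕ)) ?_ ?_
    · intro i hi
      simp only [Finset.mem_coe, Finset.mem_filter, Finset.mem_univ, true_and] at hi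
      simp only [Finset.mem_coe, Finset.mem_range]
      by_contra hge
      exact hT i (not_lt.1 hge) i.isLt hi
    · intro i _ j _ hij
      exact Fin.val_injective hij
  simpa using this

lemma mem_digSum {T : Set ℕ} {x : ℝ} (hx : x ∈ digSet T 5 + digSet Set.univ 3) :
    ∃ w : ℕ → ℕ, (∀ i, w i ≤ 9) ∧ (∀ i, i ∉ T → w i ≤ 3) ∧ x = gval w := by
  obtain ⟨a, ⟨u, hu5, huT, hau⟩, b, ⟨v, hv3, _, hbv⟩, hab⟩ := hx
  refine ⟨fun i => u i + v i, fun i => ?_, fun i hi => ?_, ?_⟩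
  · show u i + v i ≤ 9
    have := hu5 i; have := hv3 i; omega
  · show u i + v i ≤ 3
    rw [huT i hi]; simpa using hv3 i
  rw [← hab, hau, hbv, gval_add hu5 hv3]

/-- the pattern sets -/
def Fset (T : Set ℕ) : Set ℝ := digSet T 5 + digSet Set.univ 3

lemma AB_subset :
    (Set.univ.pi fun _ : Fin m => Aone) + (Set.univ.pi fun _ : Fin m => Bone) ⊆
      ⋃ (z : Fin m → ℤ) (σ : Fin m → Bool),
        (fun j => (z j : ℝ)) +ᵥ Set.univ.pi (fun j => Fset (cond (σ j) Ee Eeᶜ)) := by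
  rintro x ⟨a, ha, b, hb, hab⟩
  have h' : ∀ j : Fin m, ∃ (z : ℤ) (s : Bool) (y : ℝ),
      y ∈ Fset (cond s Ee Eeᶜ) ∧ x j = (z : ℝ) + y := by
    intro j
    obtain ⟨za, ⟨za', hza⟩, u, hu, hau⟩ := ha j (Set.mem_univ j)
    obtain ⟨zb, ⟨zb', hzb⟩, v, hv, hbv⟩ := hb j (Set.mem_univ j)
    have hxj : x j = a j + b j := by rw [← hab]; rfl
    cases hu with
    | inl hu =>
      refine ⟨za' + zb', true, u + v, ⟨u, hu, v, hv, rfl⟩, ?_⟩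
      rw [hxj, ← hau, ← hbv, ← hza, ← hzb]; push_cast; ring
    | inr hu =>
      refine ⟨za' + zb', false, u + v, ⟨u, hu, v, hv, rfl⟩, ?_⟩
      rw [hxj, ← hau, ← hbv, ← hza, ← hzb]; push_cast; ring
  choose z σ y hy hxy using h'
  refine Set.mem_iUnion.2 ⟨z, Set.mem_iUnion.2 ⟨σ, ?_⟩⟩
  refine ⟨y, fun j _ => hy j, ?_⟩
  funext j
  simpa using (hxy j).symm

end PiLemmas
section Core

open scoped Classical ENNReal NNReal

/-- Finite set of center numerators for covering at scale `6^{-N}`. -/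
noncomputable def Zfin (T : Set ℕ) (good : Bool) (N : ℕ) : Finset ℤ :=
  if good then
    ((Finset.univ : Finset (Fin N → Fin 10)).filter
      (fun w => ∀ i : Fin N, (i:ℕ) ∉ T → (w i : ℕ) ≤ 3)).image
      (fun w => ∑ i : Fin N, ((w i : ℕ) : ℤ) * 6 ^ (N - 1 - (i:ℕ)))
  else Finset.image (fun t : ℕ => (t : ℤ)) (Finset.range (2 * 6 ^ N + 1))

lemma Zfin_card_bad (T : Set ℕ) (N : ℕ) : (Zfin T false N).card ≤ 3 * 6 ^ N := by
  rw [Zfin]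
  simp only [if_neg (by simp : ¬(false = true))]
  have h1 : ((Finset.range (2 * 6 ^ N + 1)).image (fun t : ℕ => (t : ℤ))).card
      ≤ (Finset.range (2 * 6 ^ N + 1)).card :=
    Finset.card_image_le
  rw [Finset.card_range] at h1
  have : 1 ≤ 6 ^ N := Nat.one_le_pow _ _ (by norm_num)
  omega

lemma Zfin_card_good (T : Set ℕ) (Lk : ℕ)
    (hsm : (Finset.univ.filter (fun i : Fin (20 * Lk) => (i:ℕ) ∈ T)).card ≤ Lk) :
    (Zfin T true (20 * Lk)).card ≤ 6 ^ (17 * Lk) := by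
  set N := 20 * Lk with hN
  rw [Zfin, if_pos rfl]
  set W := ((Finset.univ : Finset (Fin N → Fin 10)).filter
      (fun w => ∀ i : Fin N, (i:ℕ) ∉ T → (w i : ℕ) ≤ 3)) with hW
  have h1 : (Zfin T true N).card ≤ W.card := by
    rw [Zfin, if_pos rfl]; exact Finset.card_image_le
  -- bound W.card by injection into a dependent product
  have h2 : W.card ≤ ∏ i : Fin N, (if (i:ℕ) ∈ T then 10 else 4) := by
    have := Finset.card_le_card_of_injOn
      (f := fun (w : Fin N → Fin 10) => (fun i : Fin N =>
        (⟨min (w i) (if (i:ℕ) ∈ T then 9 else 3), by split <;> omega⟩ :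
          Fin (if (i:ℕ) ∈ T then 10 else 4))))
      (s := W) (t := Finset.univ)
      (fun w _ => Finset.mem_univ _) ?_
    · calc W.card ≤ (Finset.univ : Finset (Π i : Fin N, Fin (if (i:ℕ) ∈ T then 10 else 4))).card :=
            this
        _ = ∏ i : Fin N, (if (i:ℕ) ∈ T then 10 else 4) := by
            rw [Finset.card_univ, Fintype.card_pi]
            congr 1; funext i; split <;> simp
    · intro w hw w' hw' h
      simp only [hW, Finset.coe_filter, Set.mem_setOf_eq] at hw hw'
      funext i
      have hval : min ((w i : ℕ)) (if (i:ℕ) ∈ T then 9 else 3)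
          = min ((w' i : ℕ)) (if (i:ℕ) ∈ T then 9 else 3) :=
        congrArg Fin.val (congrFun h i)
      have h9 : (w i : ℕ) < 10 := (w i).isLt
      have h9' : (w' i : ℕ) < 10 := (w' i).isLt
      apply Fin.val_injective
      by_cases hT : (i:ℕ) ∈ T
      · rw [if_pos hT] at hval; omega
      · have hb := hw.2 i hT
        have hb' := hw'.2 i hT
        rw [if_neg hT] at hval; omega
  -- compute the product
  have h3 : (∏ i : Fin N, (if (i:ℕ) ∈ T then 10 else 4))
      = 10 ^ (Finset.univ.filter (fun i : Fin N => (i:ℕ) ∈ T)).card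
        * 4 ^ (Finset.univ.filter (fun i : Fin N => ¬ (i:ℕ) ∈ T)).card := by
    rw [Finset.prod_ite]
    simp [Finset.prod_const]
  have h4 : (Finset.univ.filter (fun i : Fin N => ¬ (i:ℕ) ∈ T)).card ≤ N :=
    le_trans (Finset.card_filter_le _ _) (by simp)
  have h5 : 10 ^ (Finset.univ.filter (fun i : Fin N => (i:ℕ) ∈ T)).card
        * 4 ^ (Finset.univ.filter (fun i : Fin N => ¬ (i:ℕ) ∈ T)).card
      ≤ 10 ^ Lk * 4 ^ N := by
    apply Nat.mul_le_mul
    · exact Nat.pow_le_pow_right (by norm_num) hsm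
    · exact Nat.pow_le_pow_right (by norm_num) h4
  have h6 : 10 ^ Lk * 4 ^ N ≤ 6 ^ (17 * Lk) := by
    rw [hN]
    calc 10 ^ Lk * 4 ^ (20 * Lk) = 10 ^ Lk * (4 ^ 20) ^ Lk := by rw [← pow_mul]
      _ = (10 * 4 ^ 20) ^ Lk := by rw [mul_pow]
      _ ≤ (6 ^ 17) ^ Lk := Nat.pow_le_pow_left (by norm_num) _
      _ = 6 ^ (17 * Lk) := by rw [← pow_mul]
  calc (Zfin T true N).card ≤ W.card := h1
    _ ≤ ∏ i : Fin N, (if (i:ℕ) ∈ T then 10 else 4) := h2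
    _ = _ := h3
    _ ≤ 10 ^ Lk * 4 ^ N := h5
    _ ≤ 6 ^ (17 * Lk) := h6

end Core
section Geometry

open scoped Classical ENNReal NNReal

lemma mem_Zfin_good {T : Set ℕ} {N : ℕ} (w : ℕ → ℕ) (h9 : ∀ i, w i ≤ 9)
    (h3 : ∀ i, i ∉ T → w i ≤ 3) :
    (∑ i : Fin N, ((w i : ℤ)) * 6 ^ (N - 1 - (i:ℕ))) ∈ Zfin T true N := by
  rw [Zfin, if_pos rfl]
  apply Finset.mem_image.2
  refine ⟨fun i : Fin N => ⟨w i, by have := h9 i; omega⟩, ?_, rfl⟩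
  simp only [Finset.mem_filter, Finset.mem_univ, true_and]
  exact fun i hi => h3 i hi

lemma mem_Zfin_bad {T : Set ℕ} {N : ℕ} (t : ℕ) (ht : t < 2 * 6 ^ N + 1) :
    ((t : ℤ)) ∈ Zfin T false N := by
  rw [Zfin]
  simp only [if_neg (by simp : ¬(false = true))]
  exact Finset.mem_image.2 ⟨t, Finset.mem_range.2 ht, rfl⟩

lemma center_eq (w : ℕ → ℕ) (N : ℕ) :
    ((∑ i : Fin N, ((w i : ℤ)) * 6 ^ (N - 1 - (i:ℕ)) : ℤ) : ℝ) * (6:ℝ)⁻¹ ^ N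
      = ∑ i ∈ Finset.range N, (w i : ℝ) * (6:ℝ)⁻¹ ^ (i+1) := by
  push_cast
  rw [Finset.sum_mul]
  rw [Fin.sum_univ_eq_sum_range (fun i => (w i : ℝ) * 6 ^ (N - 1 - i) * (6:ℝ)⁻¹ ^ N)]
  apply Finset.sum_congr rfl
  intro i hi
  have hiN : i < N := Finset.mem_range.1 hi
  have hsplit : (6:ℝ)⁻¹ ^ N = (6:ℝ)⁻¹ ^ (N - 1 - i) * (6:ℝ)⁻¹ ^ (i + 1) := by
    rw [← pow_add]
    congr 1
    omega
  rw [hsplit, ← mul_assoc, mul_assoc ((w i : ℝ)), ← mul_pow]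
  norm_num

lemma Fset_nonneg {T : Set ℕ} {x : ℝ} (hx : x ∈ Fset T) : 0 ≤ x := by
  obtain ⟨w, h9, _, rfl⟩ := mem_digSum hx
  exact gval_nonneg w

lemma Fset_le {T : Set ℕ} {x : ℝ} (hx : x ∈ Fset T) : x ≤ 2 := by
  obtain ⟨w, h9, _, rfl⟩ := mem_digSum hx
  calc gval w ≤ 9 / 5 := gval_le h9
    _ ≤ 2 := by norm_num

lemma floor_scale_lt {x : ℝ} (h0 : 0 ≤ x) (h2 : x ≤ 2) (N : ℕ) :
    ⌊x * 6 ^ N⌋.toNat < 2 * 6 ^ N + 1 := by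
  have hle : (⌊x * 6 ^ N⌋ : ℝ) ≤ x * 6 ^ N := Int.floor_le _
  have hb : x * 6 ^ N ≤ 2 * 6 ^ N := by
    apply mul_le_mul_of_nonneg_right h2 (by positivity)
  have : (⌊x * 6 ^ N⌋ : ℝ) ≤ ((2 * 6 ^ N : ℕ) : ℝ) := by push_cast; linarith
  have hZ : ⌊x * 6 ^ N⌋ ≤ (2 * 6 ^ N : ℕ) := by exact_mod_cast this
  omega

lemma floor_scale_dist {x : ℝ} (h0 : 0 ≤ x) (N : ℕ) :
    |x - ((⌊x * 6 ^ N⌋.toNat : ℕ) : ℝ) * (6:ℝ)⁻¹ ^ N| ≤ (6:ℝ)⁻¹ ^ N := by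
  have hfl0 : 0 ≤ ⌊x * 6 ^ N⌋ := Int.floor_nonneg.2 (by positivity)
  have hcast : ((⌊x * 6 ^ N⌋.toNat : ℕ) : ℝ) = (⌊x * 6 ^ N⌋ : ℝ) := by
    exact_mod_cast congrArg (fun z : ℤ => (z : ℝ)) (Int.toNat_of_nonneg hfl0)
  rw [hcast]
  have hle : (⌊x * 6 ^ N⌋ : ℝ) ≤ x * 6 ^ N := Int.floor_le _
  have hlt : x * 6 ^ N < ⌊x * 6 ^ N⌋ + 1 := Int.lt_floor_add_one _
  have hpow : (0:ℝ) < 6 ^ N := by positivity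
  have hinv : ((6:ℝ)⁻¹) ^ N = ((6:ℝ) ^ N)⁻¹ := by rw [inv_pow]
  rw [hinv, abs_le]
  have hA : (⌊x * 6 ^ N⌋ : ℝ) * ((6:ℝ)^N)⁻¹ ≤ x := by
    have := mul_le_mul_of_nonneg_right hle (le_of_lt (inv_pos.2 hpow))
    calc (⌊x * 6 ^ N⌋ : ℝ) * ((6:ℝ)^N)⁻¹ ≤ (x * 6^N) * ((6:ℝ)^N)⁻¹ := this
      _ = x := by field_simp
  have hB : x < ((⌊x * 6 ^ N⌋:ℝ) + 1) * ((6:ℝ)^N)⁻¹ := by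
    have := mul_lt_mul_of_pos_right hlt (inv_pos.2 hpow)
    calc x = (x * 6^N) * ((6:ℝ)^N)⁻¹ := by field_simp
      _ < ((⌊x * 6 ^ N⌋:ℝ) + 1) * ((6:ℝ)^N)⁻¹ := this
  have hC : ((⌊x * 6 ^ N⌋:ℝ) + 1) * ((6:ℝ)^N)⁻¹ - (⌊x * 6 ^ N⌋:ℝ) * ((6:ℝ)^N)⁻¹
      = ((6:ℝ)^N)⁻¹ := by ring
  constructor <;> linarith

lemma pow6_ofReal (a b : ℕ) :
    (6:ℝ≥0∞) ^ a * ((6:ℝ≥0∞)⁻¹) ^ b = ENNReal.ofReal ((6:ℝ) ^ a * ((6:ℝ)⁻¹) ^ b) := by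
  rw [ENNReal.ofReal_mul (by positivity), ENNReal.ofReal_pow (by norm_num),
    ENNReal.ofReal_pow (by norm_num), ENNReal.ofReal_inv_of_pos (by norm_num)]
  norm_num

lemma pow6_le {a b c d : ℕ} (h : a + d ≤ c + b) :
    (6:ℝ≥0∞) ^ a * ((6:ℝ≥0∞)⁻¹) ^ b ≤ (6:ℝ≥0∞) ^ c * ((6:ℝ≥0∞)⁻¹) ^ d := by
  rw [pow6_ofReal, pow6_ofReal]
  apply ENNReal.ofReal_le_ofReal
  rw [inv_pow, inv_pow, ← div_eq_mul_inv, ← div_eq_mul_inv,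
    div_le_div_iff₀ (by positivity) (by positivity), ← pow_add, ← pow_add]
  exact pow_le_pow_right₀ (by norm_num) h

end Geometry
section CoreEstimate

open MeasureTheory Filter Topology
open scoped Classical ENNReal NNReal

lemma core_estimate (m : ℕ) (hm : 1 ≤ m) (T : Fin m → Set ℕ)
    (L : ℕ → ℕ) (hL : ∀ k, k + 1 ≤ L k)
    (G : Finset (Fin m)) (hG : 2 * (m - G.card) ≤ m)
    (hsmall : ∀ j ∈ G, ∀ k,
      (Finset.univ.filter (fun i : Fin (20 * L k) => (i:ℕ) ∈ T j)).card ≤ L k) :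
    dimH (Set.univ.pi fun j => Fset (T j)) ≤ ((19 * m / 20 : ℝ≥0) : ℝ≥0∞) := by
  classical
  set s : ℝ≥0 := 19 * m / 20 with hs
  set P := Set.univ.pi fun j => Fset (T j) with hP
  set N : ℕ → ℕ := fun k => 20 * L k with hN
  set good : Fin m → Bool := fun j => if j ∈ G then true else false with hgood
  set ι : ℕ → Type := fun k => Π j : Fin m, {z : ℤ // z ∈ Zfin (T j) (good j) (N k)} with hι
  set ctr : ∀ k, ι k → (Fin m → ℝ) :=
    fun k f => (fun j => ((f j : ℤ) : ℝ) * (6:ℝ)⁻¹ ^ (N k)) with hctr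
  set tt : ∀ k, ι k → Set (Fin m → ℝ) :=
    fun k f => Metric.closedBall (ctr k f) (2 * (6:ℝ)⁻¹ ^ (N k)) with htt
  set rr : ℕ → ℝ≥0∞ := fun k => 2 * ENNReal.ofReal (2 * (6:ℝ)⁻¹ ^ (N k)) with hrr
  have hLpos : ∀ k, 1 ≤ L k := fun k => le_trans (by omega) (hL k)
  -- the radius bound in ℝ≥0∞
  have hrle : ∀ k, rr k ≤ ((6:ℝ≥0∞)⁻¹) ^ (20 * (L k - 1)) := by
    intro k
    have h1 : rr k = ENNReal.ofReal (4 * (6:ℝ)⁻¹ ^ (N k)) := by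
      have h4 : (4 * (6:ℝ)⁻¹ ^ (N k)) = 2 * (2 * (6:ℝ)⁻¹ ^ (N k)) := by ring
      rw [h4, ENNReal.ofReal_mul (by norm_num)]
      simp [hrr]
    have h2 : ((6:ℝ≥0∞)⁻¹) ^ (20 * (L k - 1))
        = ENNReal.ofReal (((6:ℝ)⁻¹) ^ (20 * (L k - 1))) := by
      rw [ENNReal.ofReal_pow (by norm_num), ENNReal.ofReal_inv_of_pos (by norm_num)]
      norm_num
    rw [h1, h2]
    apply ENNReal.ofReal_le_ofReal
    have hsplit : (6:ℝ)⁻¹ ^ (N k) = (6:ℝ)⁻¹ ^ (20 * (L k - 1)) * (6:ℝ)⁻¹ ^ 20 := by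
      rw [← pow_add]
      congr 1
      have := hLpos k
      simp only [hN]
      omega
    rw [hsplit, ← mul_assoc, mul_comm (4:ℝ), mul_assoc]
    nth_rewrite 2 [← mul_one ((6:ℝ)⁻¹ ^ (20 * (L k - 1)))]
    apply mul_le_mul_of_nonneg_left _ (by positivity)
    norm_num
  -- covering property
  have hst : ∀ k, P ⊆ ⋃ f : ι k, tt k f := by
    intro k x hx
    have hx' : ∀ j : Fin m, ∃ z : ℤ, z ∈ Zfin (T j) (good j) (N k) ∧
        |x j - (z : ℝ) * (6:ℝ)⁻¹ ^ (N k)| ≤ 2 * (6:ℝ)⁻¹ ^ (N k) := by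
      intro j
      have hxj : x j ∈ Fset (T j) := hx j (Set.mem_univ j)
      by_cases hj : j ∈ G
      · have hgj : good j = true := by simp [hgood, hj]
        obtain ⟨w, h9, h3, hxw⟩ := mem_digSum hxj
        refine ⟨∑ i : Fin (N k), ((w i : ℤ)) * 6 ^ (N k - 1 - (i:ℕ)), ?_, ?_⟩
        · rw [hgj]; exact mem_Zfin_good w h9 h3
        · rw [center_eq, hxw]
          calc |gval w - ∑ i ∈ Finset.range (N k), (w i : ℝ) * (6:ℝ)⁻¹ ^ (i+1)|
              ≤ ((9:ℕ) / 5) * (6:ℝ)⁻¹ ^ (N k) := gval_trunc_bound h9 (N k)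
            _ ≤ 2 * (6:ℝ)⁻¹ ^ (N k) := by
                apply mul_le_mul_of_nonneg_right _ (by positivity)
                norm_num
      · have hgj : good j = false := by simp [hgood, hj]
        have h0 : 0 ≤ x j := Fset_nonneg hxj
        have h2 : x j ≤ 2 := Fset_le hxj
        refine ⟨((⌊x j * 6 ^ (N k)⌋.toNat : ℕ) : ℤ), ?_, ?_⟩
        · rw [hgj]; exact mem_Zfin_bad _ (floor_scale_lt h0 h2 (N k))
        · have := floor_scale_dist h0 (N k)
          calc |x j - ((⌊x j * 6 ^ (N k)⌋.toNat : ℕ) : ℤ) * (6:ℝ)⁻¹ ^ (N k)|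
              = |x j - ((⌊x j * 6 ^ (N k)⌋.toNat : ℕ) : ℝ) * (6:ℝ)⁻¹ ^ (N k)| := by
                push_cast; ring_nf
            _ ≤ (6:ℝ)⁻¹ ^ (N k) := this
            _ ≤ 2 * (6:ℝ)⁻¹ ^ (N k) := by nlinarith [pow_pos (by norm_num : (0:ℝ) < 6⁻¹) (N k)]
    choose z hzmem hzdist using hx'
    refine Set.mem_iUnion.2 ⟨fun j => ⟨z j, hzmem j⟩, ?_⟩
    rw [htt, Metric.mem_closedBall]
    refine (dist_pi_le_iff (by positivity)).2 fun j => ?_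
    rw [Real.dist_eq]
    exact hzdist j
  -- diameter bound
  have ht : ∀ k, ∀ f : ι k, EMetric.diam (tt k f) ≤ rr k := by
    intro k f
    simp only [htt]
    have hρ : (0:ℝ) ≤ 2 * (6:ℝ)⁻¹ ^ (N k) := by positivity
    rw [← Metric.emetric_closedBall (x := ctr k f) hρ]
    exact EMetric.diam_closedBall
  -- tendsto of radii
  have hr0 : Tendsto rr atTop (𝓝 0) := by
    have h1 : Tendsto (fun k => 2 * (6:ℝ)⁻¹ ^ (N k)) atTop (𝓝 0) := by
      have hb : ∀ k, ‖2 * (6:ℝ)⁻¹ ^ (N k)‖ ≤ 2 * (6:ℝ)⁻¹ ^ k := by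
        intro k
        rw [Real.norm_eq_abs, abs_of_nonneg (by positivity)]
        apply mul_le_mul_of_nonneg_left _ (by norm_num)
        apply pow_le_pow_of_le_one (by norm_num) (by norm_num)
        calc k ≤ 20 * (k + 1) := by omega
          _ ≤ 20 * L k := by have := hL k; omega
      apply squeeze_zero_norm hb
      have := tendsto_pow_atTop_nhds_zero_of_lt_one
        (by norm_num : (0:ℝ) ≤ 6⁻¹) (by norm_num : (6:ℝ)⁻¹ < 1)
      simpa using this.const_mul 2
    have h2 : Tendsto (fun k => ENNReal.ofReal (2 * (6:ℝ)⁻¹ ^ (N k))) atTop (𝓝 0) := by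
      rw [← ENNReal.ofReal_zero]
      exact (ENNReal.continuous_ofReal.tendsto 0).comp h1
    have := ENNReal.Tendsto.const_mul h2 (Or.inr (by norm_num : (2:ℝ≥0∞) ≠ ⊤))
    simpa [hrr] using this
  -- main covering estimate
  have hμ := MeasureTheory.Measure.hausdorffMeasure_le_liminf_tsum (s:ℝ) P rr hr0 tt
    (Filter.Eventually.of_forall ht) (Filter.Eventually.of_forall hst)
  -- bound the sums
  have hcard : ∀ k, (Fintype.card (ι k) : ℝ≥0∞)
      ≤ (3:ℝ≥0∞) ^ (m - G.card) * (6:ℝ≥0∞) ^ (17 * L k * G.card + 20 * L k * (m - G.card)) := by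
    intro k
    have hcard1 : Fintype.card (ι k) = ∏ j : Fin m, (Zfin (T j) (good j) (N k)).card := by
      rw [show Fintype.card (ι k)
          = Fintype.card (Π j : Fin m, {z : ℤ // z ∈ Zfin (T j) (good j) (N k)}) from rfl]
      rw [Fintype.card_pi]
      exact Finset.prod_congr rfl (fun j _ => Fintype.card_coe _)
    have hcard2 : ∏ j : Fin m, (Zfin (T j) (good j) (N k)).card
        ≤ ∏ j : Fin m, (if j ∈ G then 6 ^ (17 * L k) else 3 * 6 ^ (N k)) := by
      apply Finset.prod_le_prod' 
      intro j _
      by_cases hj : j ∈ G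
      · rw [if_pos hj]
        have hgj : good j = true := by simp [hgood, hj]
        rw [hgj, hN]
        exact Zfin_card_good (T j) (L k) (hsmall j hj k)
      · rw [if_neg hj]
        have hgj : good j = false := by simp [hgood, hj]
        rw [hgj]
        exact Zfin_card_bad (T j) (N k)
    have hcard3 : ∏ j : Fin m, (if j ∈ G then 6 ^ (17 * L k) else 3 * 6 ^ (N k))
        = (6 ^ (17 * L k)) ^ G.card * (3 * 6 ^ (N k)) ^ (m - G.card) := by
      rw [Finset.prod_ite]
      simp only [Finset.prod_const]
      congr 2
      · simp [Finset.filter_mem_eq_inter]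
      · rw [Finset.filter_not]
        simp only [Finset.filter_mem_eq_inter, Finset.univ_inter]
        rw [Finset.card_sdiff_of_subset (Finset.subset_univ G), Finset.card_univ, Fintype.card_fin]
    have hnat : Fintype.card (ι k)
        ≤ 3 ^ (m - G.card) * 6 ^ (17 * L k * G.card + 20 * L k * (m - G.card)) := by
      have heq : (6 ^ (17 * L k)) ^ G.card * (3 * 6 ^ (N k)) ^ (m - G.card)
          = 3 ^ (m - G.card) * 6 ^ (17 * L k * G.card + 20 * L k * (m - G.card)) := by
        simp only [hN]
        rw [mul_pow, ← pow_mul, ← pow_mul, pow_add]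
        ring
      calc Fintype.card (ι k) = _ := hcard1
        _ ≤ _ := hcard2
        _ = _ := hcard3
        _ = _ := heq
    calc (Fintype.card (ι k) : ℝ≥0∞)
        ≤ ((3 ^ (m - G.card) * 6 ^ (17 * L k * G.card + 20 * L k * (m - G.card)) : ℕ) : ℝ≥0∞) := by
          exact_mod_cast Nat.cast_le.2 hnat
      _ = (3:ℝ≥0∞) ^ (m - G.card) * (6:ℝ≥0∞) ^ (17 * L k * G.card + 20 * L k * (m - G.card)) := by
          push_cast; ring
  have hg : G.card ≤ m := by
    have := Finset.card_le_univ G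
    simpa [Finset.card_univ, Fintype.card_fin] using this
  -- per-scale bound on the sums
  have hsumle : ∀ k, (∑' f : ι k, EMetric.diam (tt k f) ^ (s:ℝ))
      ≤ (3:ℝ≥0∞) ^ m * (6:ℝ≥0∞) ^ (19 * m) * ((6:ℝ≥0∞)⁻¹) ^ (L k) := by
    intro k
    set A := 17 * L k * G.card + 20 * L k * (m - G.card) with hA
    set B := 19 * m * (L k - 1) with hB
    have hD : ∀ f : ι k, EMetric.diam (tt k f) ^ (s:ℝ)
        ≤ (((6:ℝ≥0∞)⁻¹) ^ (20 * (L k - 1))) ^ (s:ℝ) :=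
      fun f => ENNReal.rpow_le_rpow ((ht k f).trans (hrle k)) (by positivity)
    have hsum1 : (∑' f : ι k, EMetric.diam (tt k f) ^ (s:ℝ))
        ≤ (Fintype.card (ι k) : ℝ≥0∞) * (((6:ℝ≥0∞)⁻¹) ^ (20 * (L k - 1))) ^ (s:ℝ) := by
      rw [tsum_fintype]
      calc ∑ f : ι k, EMetric.diam (tt k f) ^ (s:ℝ)
          ≤ ∑ _f : ι k, (((6:ℝ≥0∞)⁻¹) ^ (20 * (L k - 1))) ^ (s:ℝ) :=
            Finset.sum_le_sum (fun f _ => hD f)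
        _ = (Fintype.card (ι k) : ℝ≥0∞) * (((6:ℝ≥0∞)⁻¹) ^ (20 * (L k - 1))) ^ (s:ℝ) := by
            rw [Finset.sum_const, Finset.card_univ, nsmul_eq_mul]
    have hrpow : (((6:ℝ≥0∞)⁻¹) ^ (20 * (L k - 1))) ^ (s:ℝ) = ((6:ℝ≥0∞)⁻¹) ^ B := by
      rw [← ENNReal.rpow_natCast ((6:ℝ≥0∞)⁻¹) (20 * (L k - 1)),
        ← ENNReal.rpow_mul,
        ← ENNReal.rpow_natCast ((6:ℝ≥0∞)⁻¹) B]
      congr 1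
      have hsR : ((s:ℝ≥0):ℝ) = 19 * m / 20 := by rw [hs]; push_cast; ring
      rw [hB]
      push_cast
      rw [hsR]
      ring
    have harith : A + L k ≤ 19 * m + B := by
      obtain ⟨l, hl⟩ : ∃ l, L k = l + 1 := ⟨L k - 1, by have := hLpos k; omega⟩
      have hlin : 17 * G.card + 20 * (m - G.card) + 1 ≤ 19 * m := by omega
      rw [hA, hB, hl]
      simp only [Nat.add_sub_cancel]
      calc 17 * (l+1) * G.card + 20 * (l+1) * (m - G.card) + (l+1)
          = (l+1) * (17 * G.card + 20 * (m - G.card) + 1) := by ring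
        _ ≤ (l+1) * (19 * m) := Nat.mul_le_mul_left _ hlin
        _ = 19 * m + 19 * m * l := by ring
    have h3le : (3:ℝ≥0∞) ^ (m - G.card) ≤ (3:ℝ≥0∞) ^ m :=
      pow_le_pow_right' (by norm_num) (by omega)
    calc (∑' f : ι k, EMetric.diam (tt k f) ^ (s:ℝ))
        ≤ (Fintype.card (ι k) : ℝ≥0∞) * (((6:ℝ≥0∞)⁻¹) ^ (20 * (L k - 1))) ^ (s:ℝ) := hsum1
      _ = (Fintype.card (ι k) : ℝ≥0∞) * ((6:ℝ≥0∞)⁻¹) ^ B := by rw [hrpow]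
      _ ≤ ((3:ℝ≥0∞) ^ (m - G.card) * (6:ℝ≥0∞) ^ A) * ((6:ℝ≥0∞)⁻¹) ^ B :=
          mul_le_mul' (hcard k) le_rfl
      _ = (3:ℝ≥0∞) ^ (m - G.card) * ((6:ℝ≥0∞) ^ A * ((6:ℝ≥0∞)⁻¹) ^ B) := by ring
      _ ≤ (3:ℝ≥0∞) ^ m * ((6:ℝ≥0∞) ^ (19 * m) * ((6:ℝ≥0∞)⁻¹) ^ (L k)) :=
          mul_le_mul' h3le (pow6_le harith)
      _ = (3:ℝ≥0∞) ^ m * (6:ℝ≥0∞) ^ (19 * m) * ((6:ℝ≥0∞)⁻¹) ^ (L k) := by ring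
  -- limit of the bounds
  have hb : Tendsto (fun k => (3:ℝ≥0∞) ^ m * (6:ℝ≥0∞) ^ (19 * m) * ((6:ℝ≥0∞)⁻¹) ^ (L k))
      atTop (𝓝 0) := by
    have h1 : Tendsto (fun n : ℕ => ((6:ℝ≥0∞)⁻¹) ^ n) atTop (𝓝 0) :=
      ENNReal.tendsto_pow_atTop_nhds_zero_of_lt_one
        (by rw [ENNReal.inv_lt_one]; norm_num)
    have h2 : Tendsto L atTop atTop :=
      tendsto_atTop_mono (f := id) (fun k => by simp only [id_eq]; have := hL k; omega)
        tendsto_id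
    have h3 : Tendsto (fun k => ((6:ℝ≥0∞)⁻¹) ^ (L k)) atTop (𝓝 0) := h1.comp h2
    have hC : ((3:ℝ≥0∞) ^ m * (6:ℝ≥0∞) ^ (19 * m)) ≠ ⊤ :=
      ENNReal.mul_ne_top (ENNReal.pow_ne_top (by norm_num)) (ENNReal.pow_ne_top (by norm_num))
    have h4 : Tendsto
        (fun k => ((3:ℝ≥0∞) ^ m * (6:ℝ≥0∞) ^ (19 * m)) * ((6:ℝ≥0∞)⁻¹) ^ (L k)) atTop
        (𝓝 (((3:ℝ≥0∞) ^ m * (6:ℝ≥0∞) ^ (19 * m)) * 0)) :=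
      ENNReal.Tendsto.const_mul h3 (Or.inr hC)
    simpa [mul_assoc] using h4
  have hliminf : Filter.liminf
      (fun k => ∑' f : ι k, EMetric.diam (tt k f) ^ (s:ℝ)) Filter.atTop = 0 := by
    apply le_antisymm _ zero_le
    calc Filter.liminf (fun k => ∑' f : ι k, EMetric.diam (tt k f) ^ (s:ℝ)) Filter.atTop
        ≤ Filter.liminf
            (fun k => (3:ℝ≥0∞) ^ m * (6:ℝ≥0∞) ^ (19 * m) * ((6:ℝ≥0∞)⁻¹) ^ (L k))
            Filter.atTop :=
          Filter.liminf_le_liminf (Filter.Eventually.of_forall hsumle)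
      _ = 0 := hb.liminf_eq
  have hμ0 : μH[(s:ℝ)] P = 0 :=
    le_antisymm (by rw [← hliminf]; exact hμ) zero_le
  exact dimH_le_of_hausdorffMeasure_ne_top (by rw [hμ0]; exact ENNReal.zero_ne_top)

end CoreEstimate
section Final

open MeasureTheory Filter Topology
open scoped Classical ENNReal NNReal Pointwise

lemma count_small' {n K : ℕ} (hn : n = K.factorial) (hK : 2 ≤ K) {T : Set ℕ}
    (hT : ∀ i, (K-1).factorial ≤ i → i < K.factorial → i ∉ T) :
    (Finset.univ.filter (fun i : Fin n => (i:ℕ) ∈ T)).card ≤ (K-1).factorial := by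
  subst hn; exact count_small hK hT

lemma dim_pattern_b (m : ℕ) (hm : 1 ≤ m) (T : Fin m → Set ℕ) (b : Bool) (G : Finset (Fin m))
    (hGmem : ∀ j ∈ G, T j = cond b Ee Eeᶜ) (hG : 2 * (m - G.card) ≤ m) :
    dimH (Set.univ.pi fun j => Fset (T j)) ≤ ((19 * m / 20 : ℝ≥0) : ℝ≥0∞) := by
  classical
  set KK : ℕ → ℕ := fun k => 2 * k + 44 + cond b 0 1 with hKK
  set L : ℕ → ℕ := fun k => (KK k).factorial / 20 with hLdef
  have hK20 : ∀ k, 20 ≤ KK k := by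
    intro k; simp only [hKK]; cases b <;> simp <;> omega
  have h2K : ∀ k, 2 ≤ KK k := fun k => le_trans (by norm_num) (hK20 k)
  have hdvd : ∀ k, 20 ∣ (KK k).factorial :=
    fun k => Nat.dvd_factorial (by norm_num) (hK20 k)
  have h20L : ∀ k, 20 * L k = (KK k).factorial := fun k => Nat.mul_div_cancel' (hdvd k)
  have hfacsucc : ∀ k, (KK k).factorial = KK k * (KK k - 1).factorial := by
    intro k
    have : KK k = (KK k - 1) + 1 := by have := h2K k; omega
    rw [this, Nat.factorial_succ]
    congr 1 <;> omega
  have hfac_ge : ∀ k, (KK k) * ((KK k) - 1) ≤ (KK k).factorial := by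
    intro k
    rw [hfacsucc k]
    exact Nat.mul_le_mul_left _ (Nat.self_le_factorial _)
  have hLk : ∀ k, k + 1 ≤ L k := by
    intro k
    rw [hLdef]
    rw [Nat.le_div_iff_mul_le (by norm_num)]
    calc (k+1) * 20 ≤ KK k * (KK k - 1) := by
          have h2 : 2 * k + 44 ≤ KK k := by simp only [hKK]; cases b <;> simp
          obtain ⟨c, hc⟩ : ∃ c, KK k = c + 1 := ⟨KK k - 1, by omega⟩
          have hc' : 2 * k + 43 ≤ c := by omega
          rw [hc, Nat.add_sub_cancel]
          nlinarith
      _ ≤ (KK k).factorial := hfac_ge k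
  have hKm1 : ∀ k, (KK k - 1).factorial ≤ L k := by
    intro k
    rw [hLdef, Nat.le_div_iff_mul_le (by norm_num)]
    calc (KK k - 1).factorial * 20 ≤ (KK k - 1).factorial * KK k :=
          Nat.mul_le_mul_left _ (hK20 k)
      _ = (KK k).factorial := by rw [mul_comm, ← hfacsucc k]
  apply core_estimate m hm T L hLk G hG
  intro j hj k
  have hTj := hGmem j hj
  have hnotin : ∀ i, (KK k - 1).factorial ≤ i → i < (KK k).factorial → i ∉ T j := by
    intro i h1 h2
    have hbk : bk i = KK k - 1 := bk_eq (h2K k) h1 h2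
    rw [hTj]
    cases b
    · show i ∉ Eeᶜ
      simp only [Set.mem_compl_iff, not_not]
      show Even (bk i)
      have hv : KK k = 2 * k + 45 := by simp [hKK]
      rw [hbk, hv, Nat.even_iff]
      omega
    · show i ∉ Ee
      show ¬ Even (bk i)
      have hv : KK k = 2 * k + 44 := by simp [hKK]
      rw [hbk, hv, Nat.even_iff]
      omega
  have hcount := count_small' (h20L k) (h2K k) hnotin
  exact le_trans hcount (hKm1 k)

lemma dim_pattern (m : ℕ) (hm : 1 ≤ m) (σ : Fin m → Bool) :
    dimH (Set.univ.pi fun j => Fset (cond (σ j) Ee Eeᶜ)) ≤ ((19 * m / 20 : ℝ≥0) : ℝ≥0∞) := by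
  classical
  set Gt := Finset.univ.filter (fun j : Fin m => σ j = true) with hGt
  set Gf := Finset.univ.filter (fun j : Fin m => σ j = false) with hGf
  have hcompl : Gf = Gtᶜ := by
    ext j
    simp only [hGt, hGf, Finset.mem_filter, Finset.mem_univ, true_and, Finset.mem_compl]
    cases σ j <;> simp
  have hGtle : Gt.card ≤ m := by
    have := Finset.card_le_univ Gt
    simpa [Finset.card_univ, Fintype.card_fin] using this
  have hsum : Gt.card + Gf.card = m := by
    rw [hcompl, Finset.card_compl, Fintype.card_fin]
    omega
  rcases le_total Gf.card Gt.card with hmaj | hmaj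
  · apply dim_pattern_b m hm _ true Gt
    · intro j hj
      simp only [hGt, Finset.mem_filter] at hj
      rw [hj.2]
    · omega
  · apply dim_pattern_b m hm _ false Gf
    · intro j hj
      simp only [hGf, Finset.mem_filter] at hj
      rw [hj.2]
    · omega

end Final

open Pointwise ENNReal
open scoped NNReal

/-- For every `m ≥ 1` there exist `A, B ⊆ ℝᵐ` with `A + A = B + B = ℝᵐ` while the
Hausdorff dimension of `A + B` is strictly less than `m`. -/
theorem stmt_19 (m : ℕ) (hm : 1 ≤ m) :
    ∃ A B : Set (Fin m → ℝ), A + A = Set.univ ∧ B + B = Set.univ ∧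
      dimH (A + B) < (m : ℝ≥0∞) := by
  classical
  refine ⟨Set.univ.pi (fun _ => Aone), Set.univ.pi (fun _ => Bone),
    pi_add_eq_univ Aone Aone Aone_add, pi_add_eq_univ Bone Bone Bone_add, ?_⟩
  have hsub := AB_subset (m := m)
  have h1 : dimH ((Set.univ.pi fun _ : Fin m => Aone) + (Set.univ.pi fun _ : Fin m => Bone))
      ≤ dimH (⋃ (z : Fin m → ℤ) (σ : Fin m → Bool),
        (fun j => (z j : ℝ)) +ᵥ Set.univ.pi (fun j => Fset (cond (σ j) Ee Eeᶜ))) :=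
    dimH_mono hsub
  have h2 : dimH (⋃ (z : Fin m → ℤ) (σ : Fin m → Bool),
        (fun j => (z j : ℝ)) +ᵥ Set.univ.pi (fun j => Fset (cond (σ j) Ee Eeᶜ)))
      ≤ ((19 * m / 20 : ℝ≥0) : ℝ≥0∞) := by
    rw [dimH_iUnion]
    apply iSup_le
    intro z
    rw [dimH_iUnion]
    apply iSup_le
    intro σ
    have htrans : dimH ((fun j => (z j : ℝ)) +ᵥ
          Set.univ.pi (fun j => Fset (cond (σ j) Ee Eeᶜ)))
        = dimH (Set.univ.pi fun j => Fset (cond (σ j) Ee Eeᶜ)) := by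
      rw [← Set.image_vadd]
      have hiso : Isometry (fun x : Fin m → ℝ => (fun j => (z j : ℝ)) +ᵥ x) := by
        apply Isometry.of_dist_eq
        intro x y
        simp only [vadd_eq_add]
        exact dist_add_left _ _ _
      exact hiso.dimH_image _
    rw [htrans]
    exact dim_pattern m hm σ
  have h3 : ((19 * m / 20 : ℝ≥0) : ℝ≥0∞) < (m : ℝ≥0∞) := by
    rw [show ((m:ℕ) : ℝ≥0∞) = (((m:ℕ) : ℝ≥0) : ℝ≥0∞) from (ENNReal.coe_natCast m).symm]
    rw [ENNReal.coe_lt_coe]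
    rw [← NNReal.coe_lt_coe]
    push_cast
    have hm' : (1:ℝ) ≤ (m:ℝ) := by exact_mod_cast hm
    linarith
  exact lt_of_le_of_lt (le_trans h1 h2) h3
end
end
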